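/- arXiv:math/0609665 — 8 statements merged into one kernel-verified Lean document; each statement's English description precedes it below -/
import Mathlib

section
/- The Prüfer surface P is a Hausdorff (T2) topological space. -/
/-- The setoid on `Σ a : ℝ, ℝ × ℝ` defining the (doubled) Prüfer surface:
`⟨a,(x,y)⟩ ∼ ⟨b,(x',y')⟩` iff the points are equal, or
`y = y'`, `y ≠ 0` and `a + x*y = b + x'*y'`. -/
def pruferSetoid : Setoid (Σ _ : ℝ, ℝ × ℝ) where
  r p q := p = q ∨
    (p.2.2 = q.2.2 ∧ p.2.2 ≠ 0 ∧ p.1 + p.2.1 * p.2.2 = q.1 + q.2.1 * q.2.2)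
  iseqv := by
    constructor
    · intro p; exact Or.inl rfl
    · rintro p q (rfl | ⟨h1, h2, h3⟩)
      · exact Or.inl rfl
      · exact Or.inr ⟨h1.symm, h1 ▸ h2, h3.symm⟩
    · rintro p q r (rfl | ⟨h1, h2, h3⟩) h
      · exact h
      · rcases h with rfl | ⟨k1, k2, k3⟩
        · exact Or.inr ⟨h1, h2, h3⟩
        · exact Or.inr ⟨h1.trans k1, h2, h3.trans k3⟩

/-- The Prüfer surface (Calabi–Rosenlicht's doubled version), as a quotient of
`Σ a : ℝ, ℝ × ℝ` (with the sigma topology) with the quotient topology. -/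
def Prufer : Type := Quotient pruferSetoid

instance : TopologicalSpace Prufer :=
  inferInstanceAs (TopologicalSpace (Quotient pruferSetoid))

/-- The invariant continuous map to ℝ², `⟨a,(x,y)⟩ ↦ (a + x*y, y)`. -/
def pruferF : Prufer → ℝ × ℝ :=
  Quotient.lift (fun p => (p.1 + p.2.1 * p.2.2, p.2.2)) (by
    rintro p q (rfl | ⟨h1, h2, h3⟩)
    · rfl
    · simp only [Prod.mk.injEq]
      exact ⟨h3, h1⟩)

lemma pruferF_continuous : Continuous pruferF := by
  apply Continuous.quotient_lift
  apply continuous_sigma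
  intro a
  fun_prop

/-- Saturated open "strip" around the point `x = c`, `y = 0` of chart `a`. -/
def pSet (a c ε : ℝ) : Set (Σ _ : ℝ, ℝ × ℝ) :=
  {p | |p.1 + p.2.1 * p.2.2 - (a + c * p.2.2)| < ε * |p.2.2| ∨
       (p.2.2 = 0 ∧ p.1 = a ∧ |p.2.1 - c| < ε)}

lemma pSet_invariant (a c ε : ℝ) {p q : Σ _ : ℝ, ℝ × ℝ}
    (h : pruferSetoid.r p q) : p ∈ pSet a c ε ↔ q ∈ pSet a c ε := by
  rcases h with rfl | ⟨h1, h2, h3⟩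
  · rfl
  · have h2' : q.2.2 ≠ 0 := h1 ▸ h2
    have e : (|p.1 + p.2.1 * p.2.2 - (a + c * p.2.2)| < ε * |p.2.2|) ↔
        (|q.1 + q.2.1 * q.2.2 - (a + c * q.2.2)| < ε * |q.2.2|) := by
      rw [h3, h1]
    simp only [pSet, Set.mem_setOf_eq, h2, h2', false_and, or_false]
    exact e

lemma pSet_isOpen (a c ε : ℝ) : IsOpen (pSet a c ε) := by
  rw [isOpen_sigma_iff]
  intro b
  by_cases hb : b = a
  · subst hb
    have he : Sigma.mk b ⁻¹' pSet b c ε = {z : ℝ × ℝ | |z.1 - c| < ε} := by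
      ext ⟨s, t⟩
      simp only [pSet, Set.mem_preimage, Set.mem_setOf_eq]
      have key : b + s * t - (b + c * t) = (s - c) * t := by ring
      rw [key, abs_mul]
      constructor
      · rintro (h | ⟨ht, -, h⟩)
        · rcases eq_or_ne t 0 with rfl | ht
          · simp at h
          · exact (mul_lt_mul_iff_of_pos_right (abs_pos.mpr ht)).mp h
        · exact h
      · intro h
        rcases eq_or_ne t 0 with rfl | ht
        · exact Or.inr ⟨rfl, by trivial, h⟩
        · exact Or.inl ((mul_lt_mul_iff_of_pos_right (abs_pos.mpr ht)).mpr h)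
    rw [he]
    exact isOpen_lt (by fun_prop) continuous_const
  · have he : Sigma.mk b ⁻¹' pSet a c ε =
        {z : ℝ × ℝ | |b + z.1 * z.2 - (a + c * z.2)| < ε * |z.2|} := by
      ext ⟨s, t⟩
      simp only [pSet, Set.mem_preimage, Set.mem_setOf_eq, hb, false_and, and_false, or_false]
    rw [he]
    exact isOpen_lt (by fun_prop) (by fun_prop)

lemma pSet_disjoint (a x x' : ℝ) (hxx : x ≠ x') :
    Disjoint (pSet a x (|x - x'| / 2)) (pSet a x' (|x - x'| / 2)) := by
  rw [Set.disjoint_left]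
  rintro ⟨b, s, t⟩ h1 h2
  simp only [pSet, Set.mem_setOf_eq] at h1 h2
  rcases h1 with h1 | ⟨ht, hb, h1⟩ <;> rcases h2 with h2 | ⟨ht', hb', h2⟩
  · have key := abs_sub_le (a + x * t) (b + s * t) (a + x' * t)
    rw [show a + x * t - (a + x' * t) = (x - x') * t by ring, abs_mul,
      abs_sub_comm (a + x * t) (b + s * t)] at key
    linarith
  · rw [ht', mul_zero, mul_zero, abs_zero, mul_zero, add_zero, add_zero] at h1
    exact absurd h1 (abs_nonneg _).not_gt
  · rw [ht, mul_zero, mul_zero, abs_zero, mul_zero, add_zero, add_zero] at h2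
    exact absurd h2 (abs_nonneg _).not_gt
  · have key := abs_sub_le x s x'
    rw [abs_sub_comm x s] at key
    have hp : 0 < |x - x'| := abs_pos.mpr (sub_ne_zero.mpr hxx)
    linarith

/-- The Prüfer surface is a Hausdorff topological space. -/
theorem prufer_t2Space : T2Space Prufer := by
  constructor
  intro P Q hPQ
  obtain ⟨p, rfl⟩ := Quotient.exists_rep P
  obtain ⟨q, rfl⟩ := Quotient.exists_rep Q
  by_cases hF : pruferF ⟦p⟧ = pruferF ⟦q⟧
  · -- hard case: both points lie on `y = 0` lines of the same chart
    obtain ⟨a, x, y⟩ := p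
    obtain ⟨b, u, v⟩ := q
    have hF' : (a + x * y, y) = (b + u * v, v) := hF
    have ht : y = v := congrArg Prod.snd hF'
    have hsum : a + x * y = b + u * v := congrArg Prod.fst hF'
    have ht0 : y = 0 := by
      by_contra h0
      exact hPQ (Quotient.sound (Or.inr ⟨ht, h0, hsum⟩))
    subst ht0
    have hv0 : v = 0 := ht.symm
    subst hv0
    have hab : a = b := by simpa using hsum
    subst hab
    have hxx : x ≠ u := by
      rintro rfl
      exact hPQ rfl
    set ε := |x - u| / 2 with hεdef
    have hεpos : 0 < ε := by
      have := abs_pos.mpr (sub_ne_zero.mpr hxx)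
      positivity
    have qm : Topology.IsQuotientMap (Quotient.mk pruferSetoid : _ → Prufer) :=
      isQuotientMap_quot_mk
    have sat : ∀ c : ℝ, Quotient.mk pruferSetoid ⁻¹'
        (Quotient.mk pruferSetoid '' pSet a c ε) = pSet a c ε := by
      intro c
      ext z
      simp only [Set.mem_preimage, Set.mem_image]
      constructor
      · rintro ⟨w, hw, hwz⟩
        exact (pSet_invariant a c ε (Quotient.exact hwz)).mp hw
      · exact fun hz => ⟨z, hz, rfl⟩
    refine ⟨Quotient.mk pruferSetoid '' pSet a x ε,
            Quotient.mk pruferSetoid '' pSet a u ε, ?_, ?_, ?_, ?_, ?_⟩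
    · exact qm.isOpen_preimage.mp ((congrArg IsOpen (sat x)).mpr (pSet_isOpen a x ε))
    · exact qm.isOpen_preimage.mp ((congrArg IsOpen (sat u)).mpr (pSet_isOpen a u ε))
    · exact ⟨⟨a, x, 0⟩, Or.inr ⟨rfl, rfl, by simpa using hεpos⟩, rfl⟩
    · exact ⟨⟨a, u, 0⟩, Or.inr ⟨rfl, rfl, by simpa using hεpos⟩, rfl⟩
    · rw [Set.disjoint_left]
      rintro z ⟨w, hw, hwz⟩ ⟨w', hw', hwz'⟩
      have hw2 : w' ∈ pSet a x ε := by
        rw [← pSet_invariant a x ε (Quotient.exact (hwz.trans hwz'.symm))]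
        exact hw
      exact Set.disjoint_left.mp (pSet_disjoint a x u hxx) hw2 hw'
  · exact separated_by_continuous pruferF_continuous hF
end

section
/- The Prüfer surface P is a connected, locally Euclidean space of dimension 2: P is connected, and every point of P has an open neighborhood homeomorphic to ℝ × ℝ. In fact, for each a ∈ ℝ the chart map ℝ × ℝ → P sending (x,y) to [⟨a,(x,y)⟩] is an open embedding, and these charts cover P. -/
/-- The chart of the Prüfer surface associated to `a : ℝ`. -/
def pruferChart (a : ℝ) : ℝ × ℝ → Prufer :=
  fun z => Quotient.mk pruferSetoid ⟨a, z⟩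


open Topology Set

lemma prufer_chart_continuous (a : ℝ) :
    Continuous (fun z : ℝ × ℝ => Quotient.mk pruferSetoid ⟨a, z⟩) :=
  continuous_quotient_mk'.comp continuous_sigmaMk

lemma prufer_chart_injective (a : ℝ) :
    Function.Injective (fun z : ℝ × ℝ => Quotient.mk pruferSetoid ⟨a, z⟩) := by
  intro z w h
  rcases Quotient.exact h with h | ⟨h1, h2, h3⟩
  · obtain ⟨-, hz⟩ := Sigma.mk.inj_iff.1 h
    exact eq_of_heq hz
  · simp only at h1 h2 h3
    have hx : z.1 = w.1 := by
      have : z.1 * z.2 = w.1 * z.2 := by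
        have h3' : a + w.1 * z.2 = a + w.1 * w.2 := by rw [h1]
        linarith
      exact mul_right_cancel₀ h2 this
    exact Prod.ext hx h1

lemma prufer_chart_isOpenMap (a : ℝ) :
    IsOpenMap (fun z : ℝ × ℝ => Quotient.mk pruferSetoid ⟨a, z⟩) := by
  intro U hU
  rw [isOpen_coinduced (f := Quotient.mk pruferSetoid)]
  rw [isOpen_sigma_iff]
  intro b
  have hset : Sigma.mk b ⁻¹' (Quotient.mk pruferSetoid ⁻¹'
      ((fun z : ℝ × ℝ => Quotient.mk pruferSetoid ⟨a, z⟩) '' U)) =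
      ({z : ℝ × ℝ | b = a ∧ z ∈ U} ∪
       {z : ℝ × ℝ | z.2 ≠ 0 ∧ ((b + z.1 * z.2 - a) / z.2, z.2) ∈ U}) := by
    ext z
    simp only [mem_preimage, mem_image, mem_union, mem_setOf_eq]
    constructor
    · rintro ⟨w, hwU, hw⟩
      rcases Quotient.exact hw with h | ⟨h1, h2, h3⟩
      · obtain ⟨rfl, hz⟩ := Sigma.mk.inj_iff.1 h
        exact Or.inl ⟨rfl, (eq_of_heq hz) ▸ hwU⟩
      · simp only at h1 h2 h3
        refine Or.inr ⟨h1 ▸ h2, ?_⟩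
        have hz2 : z.2 ≠ 0 := h1 ▸ h2
        have h3' : a + w.1 * z.2 = b + z.1 * z.2 := by have := h3; rw [h1] at this; exact this
        have : (b + z.1 * z.2 - a) / z.2 = w.1 := by
          field_simp
          linarith
        rw [this, ← h1]
        exact hwU
    · rintro (⟨rfl, hz⟩ | ⟨h2, hz⟩)
      · exact ⟨z, hz, rfl⟩
      · refine ⟨((b + z.1 * z.2 - a) / z.2, z.2), hz, Quotient.sound (Or.inr ⟨rfl, h2, ?_⟩)⟩
        show a + (b + z.1 * z.2 - a) / z.2 * z.2 = b + z.1 * z.2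
        field_simp
        ring
  rw [hset]
  apply IsOpen.union
  · by_cases hb : b = a
    · subst hb; simpa using hU
    · convert isOpen_empty
      ext z; simp [hb]
  · have hcont : ContinuousOn (fun z : ℝ × ℝ => ((b + z.1 * z.2 - a) / z.2, z.2))
        {z : ℝ × ℝ | z.2 ≠ 0} := by
      apply ContinuousOn.prodMk _ continuous_snd.continuousOn
      exact (continuousOn_const.add (continuous_fst.mul continuous_snd).continuousOn
        |>.sub continuousOn_const).div continuous_snd.continuousOn (fun z hz => hz)
    have := hcont.isOpen_inter_preimage (isOpen_ne_fun continuous_snd continuous_const) hU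
    convert this using 1
    rfl

lemma prufer_chart_isOpenEmbedding' (a : ℝ) : Topology.IsOpenEmbedding (pruferChart a) :=
  .of_continuous_injective_isOpenMap (prufer_chart_continuous a)
    (prufer_chart_injective a) (prufer_chart_isOpenMap a)

lemma prufer_chart_surjective' (p : Prufer) : ∃ a z, pruferChart a z = p := by
  induction p using Quotient.ind with
  | _ s => exact ⟨s.1, s.2, rfl⟩

/-- The Prüfer surface is a connected, locally Euclidean space of dimension 2:
it is connected, every point has an open neighbourhood homeomorphic to `ℝ × ℝ`;
in fact each chart is an open embedding and the charts cover the surface. -/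
theorem prufer_connected_locally_euclidean :
    ConnectedSpace Prufer ∧
    (∀ p : Prufer, ∃ U : Set Prufer, IsOpen U ∧ p ∈ U ∧ Nonempty (U ≃ₜ ℝ × ℝ)) ∧
    (∀ a : ℝ, Topology.IsOpenEmbedding (pruferChart a)) ∧
    (∀ p : Prufer, ∃ (a : ℝ) (z : ℝ × ℝ), pruferChart a z = p) := by
  have hoe := prufer_chart_isOpenEmbedding'
  have hsurj := prufer_chart_surjective'
  refine ⟨?_, ?_, hoe, hsurj⟩
  · have hbase : ∀ a : ℝ, Quotient.mk pruferSetoid ⟨a, (-a, 1)⟩ =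
        Quotient.mk pruferSetoid ⟨0, ((0:ℝ), (1:ℝ))⟩ := fun a =>
      Quotient.sound (Or.inr ⟨rfl, one_ne_zero, by simp⟩)
    have hpt : ∀ a : ℝ,
        Quotient.mk pruferSetoid ⟨0, ((0:ℝ),(1:ℝ))⟩ ∈ range (pruferChart a) :=
      fun a => ⟨(-a, 1), hbase a⟩
    have huniv : (⋃ a : ℝ, range (pruferChart a)) = univ := by
      ext p
      simp only [mem_iUnion, mem_range, mem_univ, iff_true]
      obtain ⟨a, z, hz⟩ := hsurj p
      exact ⟨a, z, hz⟩
    have hconn : IsPreconnected (univ : Set Prufer) := by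
      rw [← huniv, ← sUnion_range]
      apply isPreconnected_sUnion (Quotient.mk pruferSetoid ⟨0, ((0:ℝ),(1:ℝ))⟩)
      · rintro s ⟨a, rfl⟩; exact hpt a
      · rintro s ⟨a, rfl⟩
        have := isPreconnected_univ.image (pruferChart a) (hoe a).continuous.continuousOn
        rwa [image_univ] at this
    exact { toPreconnectedSpace := ⟨hconn⟩,
            toNonempty := ⟨Quotient.mk pruferSetoid ⟨0, ((0:ℝ),(1:ℝ))⟩⟩ }
  · intro p
    obtain ⟨a, z, rfl⟩ := hsurj p
    refine ⟨range (pruferChart a), (hoe a).isOpen_range, ⟨z, rfl⟩, ?_⟩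
    exact ⟨(hoe a).toIsEmbedding.toHomeomorph.symm⟩
end

section
/- The Prüfer surface P is separable: it has a countable dense subset (for instance the classes [⟨0,(x,y)⟩] with x, y rational and y ≠ 0 are dense in P). -/

lemma exists_rat_near_ne (y₀ : ℝ) {ε : ℝ} (hε : 0 < ε) :
    ∃ y : ℚ, (y : ℝ) ≠ 0 ∧ |(y : ℝ) - y₀| < ε := by
  rcases le_or_gt 0 y₀ with h | h
  · obtain ⟨y, hy1, hy2⟩ := exists_rat_btwn (show y₀ < y₀ + ε by linarith)
    exact ⟨y, ne_of_gt (lt_of_le_of_lt h hy1), by rw [abs_lt]; constructor <;> linarith⟩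
  · obtain ⟨y, hy1, hy2⟩ := exists_rat_btwn (show y₀ - ε < y₀ by linarith)
    exact ⟨y, ne_of_lt (by linarith), by rw [abs_lt]; constructor <;> linarith⟩

lemma prufer_fiber_dense (a : ℝ) :
    Dense {p : ℝ × ℝ | ∃ r y : ℚ, (y : ℝ) ≠ 0 ∧ p.2 = y ∧ a + p.1 * p.2 = r} := by
  rw [Metric.dense_iff]
  rintro ⟨x₀, y₀⟩ ε hε
  obtain ⟨y, hy0, hy⟩ := exists_rat_near_ne y₀ hε
  have hyabs : 0 < |(y : ℝ)| := abs_pos.mpr hy0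
  obtain ⟨r, hr⟩ := exists_rat_near (a + x₀ * (y : ℝ)) (mul_pos hε hyabs)
  refine ⟨(((r : ℝ) - a) / y, (y : ℝ)), ?_, ⟨r, y, hy0, rfl, by field_simp; ring⟩⟩
  rw [Metric.mem_ball, Prod.dist_eq, max_lt_iff]
  constructor
  · rw [Real.dist_eq]
    have : ((r : ℝ) - a) / y - x₀ = ((r : ℝ) - (a + x₀ * y)) / y := by field_simp; ring
    rw [this, abs_div, div_lt_iff₀ hyabs]
    calc |(r : ℝ) - (a + x₀ * y)| = |(a + x₀ * (y:ℝ)) - r| := by rw [abs_sub_comm]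
    _ < ε * |(y : ℝ)| := hr
  · rw [Real.dist_eq]; exact hy

lemma prufer_sigma_dense :
    Dense {p : Σ _ : ℝ, ℝ × ℝ | ∃ r y : ℚ, (y : ℝ) ≠ 0 ∧ p.2.2 = y ∧
      p.1 + p.2.1 * p.2.2 = r} := by
  rw [dense_iff_inter_open]
  rintro U hU ⟨⟨a, p⟩, hp⟩
  have hV : IsOpen (Sigma.mk a ⁻¹' U) := hU.preimage continuous_sigmaMk
  obtain ⟨q, hqV, r, y, h1, h2, h3⟩ :=
    (prufer_fiber_dense a).inter_open_nonempty _ hV ⟨p, hp⟩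
  exact ⟨⟨a, q⟩, hqV, r, y, h1, h2, h3⟩

/-- The Prüfer surface is separable: it has a countable dense subset, for instance the
classes of `⟨0,(x,y)⟩` with `x`, `y` rational and `y ≠ 0`. -/
theorem prufer_separable :
    TopologicalSpace.SeparableSpace Prufer ∧
    Dense {p : Prufer | ∃ x y : ℚ, (y : ℝ) ≠ 0 ∧
      p = Quotient.mk pruferSetoid ⟨0, ((x : ℝ), (y : ℝ))⟩} := by
  set D := {p : Prufer | ∃ x y : ℚ, (y : ℝ) ≠ 0 ∧
      p = Quotient.mk pruferSetoid ⟨0, ((x : ℝ), (y : ℝ))⟩} with hD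
  have hsurj : Function.Surjective (Quotient.mk pruferSetoid) := Quotient.mk_surjective
  have hcont : Continuous (Quotient.mk pruferSetoid) := continuous_quot_mk
  have himg : Dense (Quotient.mk pruferSetoid ''
      {p : Σ _ : ℝ, ℝ × ℝ | ∃ r y : ℚ, (y : ℝ) ≠ 0 ∧ p.2.2 = y ∧
        p.1 + p.2.1 * p.2.2 = r}) :=
    hsurj.denseRange.dense_image hcont prufer_sigma_dense
  have hsub : (Quotient.mk pruferSetoid ''
      {p : Σ _ : ℝ, ℝ × ℝ | ∃ r y : ℚ, (y : ℝ) ≠ 0 ∧ p.2.2 = y ∧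
        p.1 + p.2.1 * p.2.2 = r}) ⊆ D := by
    rintro _ ⟨⟨a, x₀, yv⟩, ⟨r, y, h1, h2, h3⟩, rfl⟩
    simp only at h2 h3
    subst h2
    refine ⟨r / y, y, h1, Quotient.sound (Or.inr ⟨rfl, h1, ?_⟩)⟩
    show a + x₀ * (y : ℝ) = 0 + ((r / y : ℚ) : ℝ) * y
    rw [h3]; push_cast; field_simp; ring
  have hdense : Dense D := himg.mono hsub
  have hcount : D.Countable := by
    apply Set.Countable.mono ?_ (Set.countable_range
      (fun xy : ℚ × ℚ => Quotient.mk pruferSetoid ⟨0, ((xy.1 : ℝ), (xy.2 : ℝ))⟩))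
    rintro p ⟨x, y, _, rfl⟩
    exact ⟨(x, y), rfl⟩
  exact ⟨⟨⟨D, hcount, hdense⟩⟩, hdense⟩
end

section
/- The Prüfer surface P contains an uncountable discrete subspace: the set D := { [⟨a,(0,0)⟩] : a ∈ ℝ } ⊆ P is uncountable and, with the subspace topology, is a discrete space. -/
/-- The set `D = { [⟨a,(0,0)⟩] : a ∈ ℝ }` of "ray points" of the Prüfer surface. -/
def pruferD : Set Prufer :=
  {p | ∃ a : ℝ, p = Quotient.mk pruferSetoid ⟨a, (0, 0)⟩}


/-- Auxiliary: injectivity of `a ↦ [⟨a,(0,0)⟩]`. -/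
lemma prufer_mk_inj : Function.Injective
    (fun a : ℝ => Quotient.mk pruferSetoid ⟨a, (0, 0)⟩) := by
  intro a b h
  have := Quotient.exact h
  rcases this with h' | ⟨_, h2, _⟩
  · exact (Sigma.mk.inj_iff.mp h').1
  · exact absurd rfl h2

/-- The saturated open set used to isolate `[⟨a,(0,0)⟩]`. -/
def pruferV (a : ℝ) : Set Prufer :=
  {z | Quotient.lift (fun p : Σ _ : ℝ, ℝ × ℝ => p.1 = a ∨ p.2.2 ≠ 0)
    (by
      rintro p q (rfl | ⟨h1, h2, h3⟩)
      · rfl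
      · have hq : q.2.2 ≠ 0 := h1 ▸ h2
        exact propext (iff_of_true (Or.inr h2) (Or.inr hq))) z}

lemma isOpen_pruferV (a : ℝ) : IsOpen (pruferV a) := by
  have key : IsOpen (Quotient.mk pruferSetoid ⁻¹' pruferV a) := by
    have heq : Quotient.mk pruferSetoid ⁻¹' pruferV a
        = {p : Σ _ : ℝ, ℝ × ℝ | p.1 = a ∨ p.2.2 ≠ 0} := rfl
    rw [heq, isOpen_sigma_iff]
    intro b
    by_cases hb : b = a
    · convert isOpen_univ
      ext p
      simp [hb]
    · have h2 : Sigma.mk b ⁻¹' {p : Σ _ : ℝ, ℝ × ℝ | p.1 = a ∨ p.2.2 ≠ 0}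
          = {p : ℝ × ℝ | p.2 ≠ 0} := by
        ext p
        simp [hb]
      rw [h2]
      exact isOpen_ne.preimage continuous_snd
  exact key

lemma mem_pruferV_iff (a b : ℝ) (x y : ℝ) :
    Quotient.mk pruferSetoid ⟨b, (x, y)⟩ ∈ pruferV a ↔ (b = a ∨ y ≠ 0) := Iff.rfl

/-- The Prüfer surface contains an uncountable discrete subspace: the subset `pruferD`
is uncountable and discrete in the subspace topology. -/
theorem prufer_uncountable_discrete_subset :
    ¬ pruferD.Countable ∧ DiscreteTopology ↥pruferD := by
  constructor
  · intro hc
    have hsub : Set.range (fun a : ℝ => Quotient.mk pruferSetoid ⟨a, (0, 0)⟩) ⊆ pruferD := by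
      rintro _ ⟨a, rfl⟩
      exact ⟨a, rfl⟩
    have hr : (Set.range (fun a : ℝ => Quotient.mk pruferSetoid ⟨a, (0, 0)⟩)).Countable :=
      hc.mono hsub
    have : (Set.univ : Set ℝ).Countable := by
      have := hr.preimage prufer_mk_inj
      simpa using this
    exact Cardinal.not_countable_real this
  · rw [discreteTopology_iff_isOpen_singleton]
    rintro ⟨z, a, rfl⟩
    have hset : ({(⟨Quotient.mk pruferSetoid ⟨a, (0, 0)⟩, ⟨a, rfl⟩⟩ : ↥pruferD)} :
        Set ↥pruferD) = Subtype.val ⁻¹' pruferV a := by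
      ext ⟨w, b, rfl⟩
      simp only [Set.mem_singleton_iff, Set.mem_preimage, Subtype.mk.injEq]
      rw [Subtype.ext_iff]
      show _ ↔ (b = a ∨ (0:ℝ) ≠ 0)
      constructor
      · intro h
        left
        exact prufer_mk_inj h
      · rintro (rfl | h)
        · rfl
        · exact absurd rfl h
    rw [hset]
    exact (isOpen_pruferV a).preimage continuous_subtype_val
end

section
/- The Prüfer surface P is not metrizable: there is no metric on P inducing its topology (equivalently, P carries no `MetrizableSpace` instance). -/
noncomputable section PruferAux

open TopologicalSpace

abbrev pmk (a x y : ℝ) : Prufer := Quotient.mk pruferSetoid ⟨a, (x, y)⟩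

lemma pmk_exact {a x y b x' y' : ℝ} (h : pmk a x y = pmk b x' y') :
    (⟨a, (x, y)⟩ : Σ _ : ℝ, ℝ × ℝ) = ⟨b, (x', y')⟩ ∨
      (y = y' ∧ y ≠ 0 ∧ a + x * y = b + x' * y') :=
  Quotient.exact h

lemma prufer_isOpen_iff (U : Set Prufer) :
    IsOpen U ↔ ∀ a : ℝ, IsOpen {p : ℝ × ℝ | pmk a p.1 p.2 ∈ U} := by
  rw [show IsOpen U ↔ IsOpen (Quotient.mk pruferSetoid ⁻¹' U) from
    isQuotientMap_quotient_mk'.isOpen_preimage.symm, isOpen_sigma_iff]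
  rfl

/-- Every nonempty open set of the Prüfer surface meets the countable set of
rational points of the sheet over `0`. -/
lemma prufer_separable_s5 : SeparableSpace Prufer := by
  refine ⟨⟨Set.range (fun p : ℚ × ℚ => pmk 0 p.1 p.2), Set.countable_range _, ?_⟩⟩
  rw [dense_iff_inter_open]
  rintro U hU ⟨z, hz⟩
  obtain ⟨⟨a, x, y⟩, rfl⟩ := z.exists_rep
  have hUa := (prufer_isOpen_iff U).1 hU a
  rw [Metric.isOpen_iff] at hUa
  obtain ⟨ε, hε, hball⟩ := hUa (x, y) hz
  -- choose a nonzero rational y0 with |y0 - y| < ε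
  obtain ⟨y0, hy0ne, hy0⟩ : ∃ y0 : ℚ, (y0 : ℝ) ≠ 0 ∧ |(y0 : ℝ) - y| < ε := by
    rcases le_or_gt 0 y with hy | hy
    · obtain ⟨y0, h1, h2⟩ := exists_rat_btwn (show y < y + ε by linarith)
      exact ⟨y0, (hy.trans_lt h1).ne', abs_lt.2 ⟨by linarith, by linarith⟩⟩
    · obtain ⟨y0, h1, h2⟩ := exists_rat_btwn (show y - ε < y by linarith)
      refine ⟨y0, ?_, abs_lt.2 ⟨by linarith, by linarith⟩⟩
      have : (y0 : ℝ) < 0 := by linarith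
      exact this.ne
  -- choose a rational q with x0 := q - a / y0 within ε of x
  obtain ⟨q, hq1, hq2⟩ := exists_rat_btwn (show x + a / y0 < x + a / y0 + ε by linarith)
  set x0 : ℝ := (q : ℝ) - a / (y0 : ℝ) with hx0
  have hx0x : |x0 - x| < ε := abs_lt.2 ⟨by rw [hx0]; linarith, by rw [hx0]; linarith⟩
  have hmem : pmk a x0 (y0 : ℝ) ∈ U := by
    have : (x0, (y0 : ℝ)) ∈ Metric.ball (x, y) ε := by
      rw [Metric.mem_ball, Prod.dist_eq]
      simp only [Real.dist_eq]
      exact max_lt hx0x hy0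
    exact hball this
  have heq : pmk a x0 (y0 : ℝ) = pmk 0 (q : ℝ) (y0 : ℝ) := by
    refine Quotient.sound (Or.inr ⟨rfl, hy0ne, ?_⟩)
    rw [hx0]; field_simp; ring
  exact ⟨pmk 0 (q : ℝ) (y0 : ℝ), heq ▸ hmem, ⟨(q, y0), rfl⟩⟩

/-- The open "sheet" neighbourhoods. -/
def pruferSheet (a : ℝ) : Set Prufer := {z | ∃ x y, z = pmk a x y}

lemma pruferSheet_isOpen (a : ℝ) : IsOpen (pruferSheet a) := by
  rw [prufer_isOpen_iff]
  intro b
  rcases eq_or_ne b a with rfl | hba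
  · convert isOpen_univ
    ext ⟨x, y⟩
    simp only [Set.mem_setOf_eq, Set.mem_univ, iff_true]
    exact ⟨x, y, rfl⟩
  · have : {p : ℝ × ℝ | pmk b p.1 p.2 ∈ pruferSheet a} = {p : ℝ × ℝ | p.2 ≠ 0} := by
      ext ⟨x, y⟩
      simp only [Set.mem_setOf_eq]
      constructor
      · rintro ⟨x', y', h⟩
        rcases pmk_exact h with h | ⟨_, h2, _⟩
        · exact absurd (congrArg Sigma.fst h) hba
        · exact h2
      · intro hy
        exact ⟨(b + x * y - a) / y, y, Quotient.sound (Or.inr ⟨rfl, hy, by field_simp; ring⟩)⟩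
    rw [this]
    exact isOpen_ne.preimage continuous_snd

lemma pruferSheet_axis {a b : ℝ} (h : pmk b 0 0 ∈ pruferSheet a) : b = a := by
  obtain ⟨x, y, hxy⟩ := h
  rcases pmk_exact hxy with h | ⟨_, h2, _⟩
  · exact congrArg Sigma.fst h
  · exact absurd rfl h2

end PruferAux


/-- The Prüfer surface is not metrizable. -/
theorem prufer_not_metrizable : ¬ TopologicalSpace.MetrizableSpace Prufer := by
  intro h
  letI : MetricSpace Prufer := TopologicalSpace.metrizableSpaceMetric Prufer
  haveI := prufer_separable_s5
  haveI : SecondCountableTopology Prufer := UniformSpace.secondCountable_of_separable Prufer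
  obtain ⟨B, hBc, -, hB⟩ := TopologicalSpace.exists_countable_basis Prufer
  -- choose for each `a` a basic open set between the axis point and the sheet
  have hch : ∀ a : ℝ, ∃ V ∈ B, pmk a 0 0 ∈ V ∧ V ⊆ pruferSheet a := by
    intro a
    obtain ⟨V, hV, hmem, hsub⟩ := hB.exists_subset_of_mem_open
      (show pmk a 0 0 ∈ pruferSheet a from ⟨0, 0, rfl⟩) (pruferSheet_isOpen a)
    exact ⟨V, hV, hmem, hsub⟩
  choose f hfB hfmem hfsub using hch
  have hinj : Function.Injective f := by
    intro a b hab
    exact (pruferSheet_axis (hfsub a (hab ▸ hfmem b))).symm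
  have : (Set.univ : Set ℝ).Countable := by
    have : f ⁻¹' B = Set.univ := Set.eq_univ_of_forall fun a => hfB a
    exact this ▸ hBc.preimage hinj
  exact Cardinal.not_countable_real this
end

section
/- Every manifold that is a CW complex is metrizable: if X is a Hausdorff topological space carrying a CW-complex structure on all of X, and every point of X has an open neighborhood homeomorphic to ℝⁿ for some n (n may depend on the point), then X is metrizable. Equivalently, a non-metrizable manifold is not homeomorphic to any CW complex. -/
namespace Topology

open Metric Set

/-- A CW-complex structure on a set `C` in a topological space `X` (Mathlib's
`Topology.CWComplex`): `C` is the union of closed cells, which are images of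
`closedBall 0 1 ⊆ Fin n → ℝ` under characteristic maps that are homeomorphisms onto the
open cells; the open cells are pairwise disjoint; each cell frontier lies in finitely many
lower-dimensional closed cells; and `C` carries the weak topology determined by the
closed cells. -/
class CWComplex'.{u} {X : Type u} [TopologicalSpace X] (C : Set X) where
  /-- The indexing type of the cells of dimension `n`. -/
  cell (n : ℕ) : Type u
  /-- The characteristic map of the `n`-cell given by the index `i`. -/
  map (n : ℕ) (i : cell n) : PartialEquiv (Fin n → ℝ) X
  /-- The source of every characteristic map of dimension `n` is `ball 0 1`. -/
  source_eq (n : ℕ) (i : cell n) : (map n i).source = ball 0 1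
  /-- The characteristic maps are continuous on `closedBall 0 1`. -/
  continuousOn (n : ℕ) (i : cell n) : ContinuousOn (map n i) (closedBall 0 1)
  /-- The inverse characteristic maps are continuous on the target. -/
  continuousOn_symm (n : ℕ) (i : cell n) : ContinuousOn (map n i).symm (map n i).target
  /-- The open cells are pairwise disjoint. -/
  pairwiseDisjoint' :
    (univ : Set (Σ n, cell n)).PairwiseDisjoint fun ni ↦ map ni.1 ni.2 '' ball 0 1
  /-- The boundary of a cell is contained in a finite union of closed cells of
  lower dimension. -/
  mapsto (n : ℕ) (i : cell n) : ∃ I : Π m, Finset (cell m),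
    MapsTo (map n i) (sphere 0 1) (⋃ (m < n) (j ∈ I m), map m j '' closedBall 0 1)
  /-- The weak topology: a set `A ⊆ C` is closed if its intersection with every closed
  cell is closed. -/
  closed' (A : Set X) (asubc : A ⊆ C) :
    (∀ n j, IsClosed (A ∩ map n j '' closedBall 0 1)) → IsClosed A
  /-- The union of all closed cells is `C`. -/
  union' : ⋃ (n : ℕ) (j : cell n), map n j '' closedBall 0 1 = C

end Topology

namespace CWAux

open Metric Set

set_option linter.unusedSectionVars false

variable {X : Type u} [TopologicalSpace X] [T2Space X]

variable (cw : Topology.CWComplex' (Set.univ : Set X))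

/-- Closed cell. -/
def cls (p : Σ n, cw.cell n) : Set X := cw.map p.1 p.2 '' closedBall 0 1

/-- Open cell. -/
def opn (p : Σ n, cw.cell n) : Set X := cw.map p.1 p.2 '' ball 0 1

lemma opn_subset_cls (p : Σ n, cw.cell n) : opn cw p ⊆ cls cw p :=
  image_mono ball_subset_closedBall

lemma isCompact_cls (p : Σ n, cw.cell n) : IsCompact (cls cw p) :=
  (isCompact_closedBall 0 1).image_of_continuousOn (cw.continuousOn p.1 p.2)

lemma isClosed_cls (p : Σ n, cw.cell n) : IsClosed (cls cw p) :=
  (isCompact_cls cw p).isClosed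

lemma cls_subset_closure_opn (p : Σ n, cw.cell n) : cls cw p ⊆ closure (opn cw p) := by
  have h1 : closure (ball (0 : Fin p.1 → ℝ) 1) = closedBall 0 1 := closure_ball 0 one_ne_zero
  have hc : ContinuousOn (cw.map p.1 p.2) (closure (ball 0 1)) := by
    rw [h1]; exact cw.continuousOn p.1 p.2
  have := hc.image_closure
  rw [h1] at this
  exact this

lemma opn_disjoint {p q : Σ n, cw.cell n} (h : p ≠ q) : Disjoint (opn cw p) (opn cw q) :=
  cw.pairwiseDisjoint' (mem_univ p) (mem_univ q) h

lemma eq_of_opn_inter {p q : Σ n, cw.cell n} (h : (opn cw p ∩ opn cw q).Nonempty) : p = q := by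
  by_contra hne
  exact h.not_subset_empty ((opn_disjoint cw hne).inter_eq ▸ subset_rfl)

/-- Every point of a closed cell lies in some open cell. -/
lemma exists_opn_of_mem_cls :
    ∀ n (i : cw.cell n) (x : X), x ∈ cls cw ⟨n, i⟩ → ∃ p, x ∈ opn cw p := by
  intro n
  induction n using Nat.strong_induction_on with
  | _ n IH =>
    intro i x hx
    obtain ⟨y, hy, rfl⟩ := hx
    rcases lt_or_eq_of_le (mem_closedBall.mp hy) with hlt | heq
    · exact ⟨⟨n, i⟩, mem_image_of_mem _ (mem_ball.mpr hlt)⟩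
    · obtain ⟨I, hI⟩ := cw.mapsto n i
      have : cw.map n i y ∈ ⋃ (m < n) (j ∈ I m), cw.map m j '' closedBall 0 1 :=
        hI (by simpa [mem_sphere, dist_eq_norm] using heq)
      simp only [mem_iUnion] at this
      obtain ⟨m, hm, j, hj, hmem⟩ := this
      exact IH m hm j _ hmem

lemma iUnion_opn_eq_univ : ⋃ p, opn cw p = (univ : Set X) := by
  apply eq_univ_of_forall
  intro x
  have hx : x ∈ ⋃ (n : ℕ) (j : cw.cell n), cw.map n j '' closedBall 0 1 := by
    rw [cw.union']; trivial
  simp only [mem_iUnion] at hx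
  obtain ⟨n, j, hmem⟩ := hx
  obtain ⟨p, hp⟩ := exists_opn_of_mem_cls cw n j x hmem
  exact mem_iUnion.mpr ⟨p, hp⟩

/-- Each closed cell is covered by finitely many open cells. -/
lemma cls_subset_finite_opn :
    ∀ n (i : cw.cell n), ∃ E : Set (Σ n, cw.cell n), E.Finite ∧
      cls cw ⟨n, i⟩ ⊆ ⋃ q ∈ E, opn cw q := by
  intro n
  induction n using Nat.strong_induction_on with
  | _ n IH =>
    intro i
    obtain ⟨I, hI⟩ := cw.mapsto n i
    -- the finite set of lower cells
    set S : Set (Σ m, cw.cell m) := ⋃ m ∈ Finset.range n, (fun j => (⟨m, j⟩ : Σ m, cw.cell m)) '' (I m : Set (cw.cell m)) with hS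
    have hSfin : S.Finite := (Finset.range n).finite_toSet.biUnion fun m _ => ((I m).finite_toSet.image _)
    have key : ∀ q ∈ S, ∃ E : Set (Σ n, cw.cell n), E.Finite ∧ cls cw q ⊆ ⋃ r ∈ E, opn cw r := by
      rintro q hq
      simp only [hS, mem_iUnion, Finset.mem_coe, Finset.mem_range, mem_image] at hq
      obtain ⟨m, hm, j, hj, rfl⟩ := hq
      exact IH m hm j
    choose E hEfin hEsub using key
    refine ⟨{⟨n, i⟩} ∪ ⋃ (q : Σ m, cw.cell m) (hq : q ∈ S), E q hq, ?_, ?_⟩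
    · refine (finite_singleton _).union ?_
      refine Set.Finite.biUnion' hSfin ?_
      intro q hq; exact hEfin q hq
    · intro x hx
      obtain ⟨y, hy, rfl⟩ := hx
      rcases lt_or_eq_of_le (mem_closedBall.mp hy) with hlt | heq
      · exact mem_biUnion (mem_union_left _ rfl) (mem_image_of_mem _ (mem_ball.mpr hlt))
      · have hxm : cw.map n i y ∈ ⋃ (m < n) (j ∈ I m), cw.map m j '' closedBall 0 1 :=
          hI (by simpa [mem_sphere, dist_eq_norm] using heq)
        simp only [mem_iUnion] at hxm
        obtain ⟨m, hm, j, hj, hmem⟩ := hxm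
        have hqS : (⟨m, j⟩ : Σ m, cw.cell m) ∈ S := by
          simp only [hS, mem_iUnion, Finset.mem_coe, Finset.mem_range, mem_image]
          exact ⟨m, hm, j, hj, rfl⟩
        have := hEsub _ hqS hmem
        simp only [mem_iUnion] at this
        obtain ⟨r, hr, hxr⟩ := this
        exact mem_biUnion (mem_union_right _ (mem_iUnion.mpr ⟨_, mem_iUnion.mpr ⟨hqS, hr⟩⟩)) hxr

/-- Every subset of a set meeting each closed cell finitely is closed. -/
lemma isClosed_of_finite_inter_cls {S : Set X}
    (hS : ∀ p : Σ n, cw.cell n, (S ∩ cls cw p).Finite) : IsClosed S :=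
  cw.closed' S (subset_univ S) fun n j => (hS ⟨n, j⟩).isClosed

lemma finite_of_compact_of_all_closed {S : Set X} (hS : IsCompact S)
    (h : ∀ A, A ⊆ S → IsClosed A) : S.Finite := by
  have hcov : S ⊆ ⋃ s : S, ((S \ {(s : X)})ᶜ) := by
    intro x hx
    exact mem_iUnion.mpr ⟨⟨x, hx⟩, fun hmem => hmem.2 rfl⟩
  obtain ⟨t, ht⟩ := hS.elim_finite_subcover _
    (fun s : S => (h (S \ {(s : X)}) diff_subset).isOpen_compl) hcov
  have : S ⊆ (fun s : S => (s : X)) '' (t : Set S) := by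
    intro x hx
    obtain ⟨s, hst, hxs⟩ := mem_iUnion₂.mp (ht hx)
    have : x = (s : X) := by
      by_contra hne
      exact hxs ⟨hx, hne⟩
    exact ⟨s, hst, this.symm⟩
  exact (t.finite_toSet.image _).subset this

/-- A compact set meets only finitely many open cells. -/
lemma finite_cells_of_compact {K : Set X} (hK : IsCompact K) :
    {p : Σ n, cw.cell n | (opn cw p ∩ K).Nonempty}.Finite := by
  set T := {p : Σ n, cw.cell n | (opn cw p ∩ K).Nonempty} with hT
  -- pick a point in each open cell meeting K
  have hch : ∀ p : T, ∃ x : X, x ∈ opn cw (p : Σ n, cw.cell n) ∩ K := fun p => p.2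
  choose f hf using hch
  set S := range f with hSdef
  have hsub : ∀ q : Σ n, cw.cell n, (S ∩ opn cw q).Subsingleton := by
    intro q x hx y hy
    obtain ⟨p, rfl⟩ := hx.1
    obtain ⟨p', rfl⟩ := hy.1
    have h1 : (p : Σ n, cw.cell n) = q := eq_of_opn_inter cw ⟨f p, (hf p).1, hx.2⟩
    have h2 : (p' : Σ n, cw.cell n) = q := eq_of_opn_inter cw ⟨f p', (hf p').1, hy.2⟩
    rw [Subtype.ext (h1.trans h2.symm)]
  have hfin : ∀ p : Σ n, cw.cell n, (S ∩ cls cw p).Finite := by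
    intro p
    obtain ⟨E, hEfin, hEsub⟩ := cls_subset_finite_opn cw p.1 p.2
    have : S ∩ cls cw p ⊆ ⋃ q ∈ E, (S ∩ opn cw q) := by
      intro x hx
      obtain ⟨q, hq, hxq⟩ := mem_iUnion₂.mp (hEsub hx.2)
      exact mem_iUnion₂.mpr ⟨q, hq, hx.1, hxq⟩
    exact ((hEfin.biUnion fun q _ => (hsub q).finite).subset this)
  have hSK : S ⊆ K := by rintro x ⟨p, rfl⟩; exact (hf p).2
  have hclosed : ∀ A, A ⊆ S → IsClosed A := by
    intro A hA
    refine isClosed_of_finite_inter_cls cw fun p => ?_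
    exact (hfin p).subset (inter_subset_inter_left _ hA)
  have hScpt : IsCompact S := hK.of_isClosed_subset (hclosed S subset_rfl) hSK
  have hSfin : S.Finite := finite_of_compact_of_all_closed hScpt hclosed
  have hfInj : Function.Injective f := by
    intro p p' hpp
    have h1 : (p : Σ n, cw.cell n) = (p' : Σ n, cw.cell n) :=
      eq_of_opn_inter cw ⟨f p, (hf p).1, hpp ▸ (hf p').1⟩
    exact Subtype.ext h1
  have : Finite T := by
    haveI := hSfin.to_subtype
    exact Finite.of_injective (fun p : T => (⟨f p, ⟨p, rfl⟩⟩ : S)) fun p p' h =>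
      hfInj (congrArg Subtype.val h)
  exact T.toFinite

section Manifold

variable {Y : Type u} [TopologicalSpace Y]

lemma weaklyLocallyCompact_of_charts
    (hY : ∀ y : Y, ∃ (n : ℕ) (U : Set Y), IsOpen U ∧ y ∈ U ∧ Nonempty (U ≃ₜ (Fin n → ℝ))) :
    WeaklyLocallyCompactSpace Y := by
  constructor
  intro y
  obtain ⟨n, U, hUo, hyU, ⟨e⟩⟩ := hY y
  haveI : LocallyCompactSpace ↥U := e.locallyCompactSpace_iff.mpr inferInstance
  obtain ⟨K, hKc, hKn⟩ := exists_compact_mem_nhds (⟨y, hyU⟩ : ↥U)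
  exact ⟨Subtype.val '' K, hKc.image continuous_subtype_val,
    hUo.isOpenMap_subtype_val.image_mem_nhds hKn⟩

lemma isConnected_chart {U : Set Y} {n : ℕ} (e : ↥U ≃ₜ (Fin n → ℝ)) : IsConnected U := by
  have : range (Subtype.val ∘ e.symm) = U := by
    rw [range_comp, e.symm.surjective.range_eq, image_univ, Subtype.range_coe]
  rw [← this]
  exact isConnected_range (continuous_subtype_val.comp e.symm.continuous)

lemma isOpen_connectedComponent_of_charts
    (hY : ∀ y : Y, ∃ (n : ℕ) (U : Set Y), IsOpen U ∧ y ∈ U ∧ Nonempty (U ≃ₜ (Fin n → ℝ)))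
    (x : Y) : IsOpen (connectedComponent x) := by
  rw [isOpen_iff_mem_nhds]
  intro y hy
  obtain ⟨n, U, hUo, hyU, ⟨e⟩⟩ := hY y
  have hUc : U ⊆ connectedComponent y := (isConnected_chart e).subset_connectedComponent hyU
  have : connectedComponent y = connectedComponent x := (connectedComponent_eq hy).symm
  rw [← this]
  exact Filter.mem_of_superset (hUo.mem_nhds hyU) hUc

end Manifold

/-- In a weakly locally compact CW complex, each closed cell meets only finitely many
closed cells. -/
lemma finite_nbrs [WeaklyLocallyCompactSpace X] (p : Σ n, cw.cell n) :
    {q : Σ n, cw.cell n | (cls cw q ∩ cls cw p).Nonempty}.Finite := by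
  choose K hKc hKn using fun x : X => exists_compact_mem_nhds x
  have hcov : cls cw p ⊆ ⋃ x : X, interior (K x) := fun y _ =>
    mem_iUnion.mpr ⟨y, mem_interior_iff_mem_nhds.mpr (hKn y)⟩
  obtain ⟨t, ht⟩ := (isCompact_cls cw p).elim_finite_subcover _
    (fun x => isOpen_interior) hcov
  set V : Set X := ⋃ x ∈ t, interior (K x) with hV
  have hVo : IsOpen V := isOpen_biUnion fun x _ => isOpen_interior
  set Kt : Set X := ⋃ x ∈ t, K x with hKt
  have hKtc : IsCompact Kt := t.finite_toSet.isCompact_biUnion fun x _ => hKc x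
  have hVK : V ⊆ Kt := iUnion₂_mono fun x _ => interior_subset
  refine (finite_cells_of_compact cw hKtc).subset ?_
  rintro q ⟨y, hyq, hyp⟩
  have hyV : y ∈ V := ht hyp
  have hyc : y ∈ closure (opn cw q) := cls_subset_closure_opn cw q hyq
  obtain ⟨z, hzV, hzq⟩ := mem_closure_iff.mp hyc V hVo hyV
  exact ⟨z, hzq, hVK hzV⟩

/-- Every point of the CW complex lies in a clopen set which is a countable union of
closed cells. -/
lemma exists_countable_clopen [WeaklyLocallyCompactSpace X] (x : X) :
    ∃ (D : Set (Σ n, cw.cell n)), D.Countable ∧ x ∈ ⋃ p ∈ D, cls cw p ∧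
      IsClopen (⋃ p ∈ D, cls cw p) := by
  -- x lies in some closed cell
  have hx : x ∈ ⋃ (n : ℕ) (j : cw.cell n), cw.map n j '' closedBall 0 1 := by
    rw [cw.union']; trivial
  simp only [mem_iUnion] at hx
  obtain ⟨n0, j0, hx0⟩ := hx
  set p0 : Σ n, cw.cell n := ⟨n0, j0⟩
  -- iterated neighbourhoods
  let g : ℕ → Set (Σ n, cw.cell n) := fun k => Nat.rec {p0}
    (fun _ s => {q | ∃ p ∈ s, (cls cw q ∩ cls cw p).Nonempty}) k
  have hg0 : g 0 = {p0} := rfl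
  have hgs : ∀ k, g (k + 1) = {q | ∃ p ∈ g k, (cls cw q ∩ cls cw p).Nonempty} := fun k => rfl
  have hgfin : ∀ k, (g k).Finite := by
    intro k
    induction k with
    | zero => exact finite_singleton _
    | succ k ih =>
      rw [hgs]
      have : {q : Σ n, cw.cell n | ∃ p ∈ g k, (cls cw q ∩ cls cw p).Nonempty} ⊆
          ⋃ p ∈ g k, {q | (cls cw q ∩ cls cw p).Nonempty} := by
        rintro q ⟨p, hp, hq⟩; exact mem_iUnion₂.mpr ⟨p, hp, hq⟩
      exact ((ih.biUnion fun p _ => finite_nbrs cw p).subset this)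
  set D : Set (Σ n, cw.cell n) := ⋃ k, g k with hD
  have hDc : D.Countable := countable_iUnion fun k => (hgfin k).countable
  have hDcl : ∀ q q', q ∈ D → (cls cw q' ∩ cls cw q).Nonempty → q' ∈ D := by
    rintro q q' hq hne
    obtain ⟨k, hk⟩ := mem_iUnion.mp hq
    exact mem_iUnion.mpr ⟨k + 1, by rw [hgs]; exact ⟨q, hk, hne⟩⟩
  have hp0 : p0 ∈ D := mem_iUnion.mpr ⟨0, rfl⟩
  set U : Set X := ⋃ p ∈ D, cls cw p with hU
  have hxU : x ∈ U := mem_biUnion hp0 hx0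
  -- U is closed
  have hUclosed : IsClosed U := by
    apply cw.closed' U (subset_univ U)
    intro n j
    by_cases h : (⟨n, j⟩ : Σ n, cw.cell n) ∈ D
    · have : U ∩ cw.map n j '' closedBall 0 1 = cls cw ⟨n, j⟩ :=
        inter_eq_self_of_subset_right (subset_biUnion_of_mem (u := fun p => cls cw p) h)
      rw [this]; exact isClosed_cls cw _
    · have : U ∩ cw.map n j '' closedBall 0 1 = ∅ := by
        apply eq_empty_iff_forall_notMem.mpr
        rintro y ⟨hyU, hyj⟩
        obtain ⟨q, hq, hyq⟩ := mem_iUnion₂.mp hyU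
        exact h (hDcl q ⟨n, j⟩ hq ⟨y, hyj, hyq⟩)
      rw [this]; exact isClosed_empty
  -- the complement is the union of cells not in D
  have hcompl : Uᶜ = ⋃ (p : Σ n, cw.cell n) (_ : p ∉ D), cls cw p := by
    ext y
    constructor
    · intro hy
      have : y ∈ ⋃ (n : ℕ) (j : cw.cell n), cw.map n j '' closedBall 0 1 := by
        rw [cw.union']; trivial
      simp only [mem_iUnion] at this
      obtain ⟨n, j, hyj⟩ := this
      have hpD : (⟨n, j⟩ : Σ n, cw.cell n) ∉ D := fun hmem => hy (mem_biUnion hmem hyj)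
      exact mem_iUnion₂.mpr ⟨⟨n, j⟩, hpD, hyj⟩
    · intro hy hyU
      obtain ⟨p, hpD, hyp⟩ := mem_iUnion₂.mp hy
      obtain ⟨q, hqD, hyq⟩ := mem_iUnion₂.mp hyU
      exact hpD (hDcl q p hqD ⟨y, hyp, hyq⟩)
  have hUopen : IsOpen U := by
    rw [← isClosed_compl_iff, hcompl]
    apply cw.closed' _ (subset_univ _)
    intro n j
    by_cases h : (⟨n, j⟩ : Σ n, cw.cell n) ∈ D
    · have : (⋃ (p : Σ n, cw.cell n) (_ : p ∉ D), cls cw p) ∩ cw.map n j '' closedBall 0 1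
          = ∅ := by
        apply eq_empty_iff_forall_notMem.mpr
        rintro y ⟨hyW, hyj⟩
        obtain ⟨p, hpD, hyp⟩ := mem_iUnion₂.mp hyW
        exact hpD (hDcl ⟨n, j⟩ p h ⟨y, hyp, hyj⟩)
      rw [this]; exact isClosed_empty
    · have : (⋃ (p : Σ n, cw.cell n) (_ : p ∉ D), cls cw p) ∩ cw.map n j '' closedBall 0 1
          = cls cw ⟨n, j⟩ := by
        apply inter_eq_self_of_subset_right
        intro y hy
        exact mem_iUnion₂.mpr ⟨⟨n, j⟩, h, hy⟩
      rw [this]; exact isClosed_cls cw _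
  exact ⟨D, hDc, hxU, hUclosed, hUopen⟩

section SecondCountable

open TopologicalSpace

variable {Y : Type u} [TopologicalSpace Y]

lemma secondCountable_subtype_of_cover {C : Set Y} {ι : Type v} [Countable ι]
    (U : ι → Set Y) (hUo : ∀ i, IsOpen (U i))
    (hsc : ∀ i, SecondCountableTopology ↥(U i)) (hcov : C ⊆ ⋃ i, U i) :
    SecondCountableTopology ↥C := by
  haveI : ∀ i, SecondCountableTopology ↥((Subtype.val ⁻¹' U i : Set ↥C)) := by
    intro i
    haveI := hsc i
    have hemb : Topology.IsEmbedding
        (fun z : ↥(Subtype.val ⁻¹' U i : Set ↥C) => ((z : ↥C) : Y)) :=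
      Topology.IsEmbedding.subtypeVal.comp Topology.IsEmbedding.subtypeVal
    have hemb2 := hemb.codRestrict (U i) fun z => z.2
    exact hemb2.secondCountableTopology
  refine secondCountableTopology_of_countable_cover
    (U := fun i => (Subtype.val ⁻¹' U i : Set ↥C))
    (fun i => (hUo i).preimage continuous_subtype_val) ?_
  apply eq_univ_of_forall
  intro z
  obtain ⟨i, hi⟩ := mem_iUnion.mp (hcov z.2)
  exact mem_iUnion.mpr ⟨i, hi⟩

end SecondCountable

include cw in
open TopologicalSpace in
/-- Each connected component of a locally Euclidean CW complex is metrizable. -/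
lemma metrizable_component
    (hX : ∀ x : X, ∃ (n : ℕ) (U : Set X), IsOpen U ∧ x ∈ U ∧ Nonempty (U ≃ₜ (Fin n → ℝ)))
    (x : X) : MetrizableSpace ↥(connectedComponent x) := by
  haveI := weaklyLocallyCompact_of_charts hX
  obtain ⟨D, hDc, hxU, hUclopen⟩ := exists_countable_clopen cw x
  set C := connectedComponent x with hC
  have hCU : C ⊆ ⋃ p ∈ D, cls cw p := hUclopen.connectedComponent_subset hxU
  choose nn Uc hUco hmemc hec using hX
  -- for each p ∈ D, finitely many charts cover cls p ∩ C
  have hsub : ∀ p : ↥D, ∃ t : Finset X, cls cw (p : Σ n, cw.cell n) ∩ C ⊆ ⋃ y ∈ t, Uc y := by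
    intro p
    have hcpt : IsCompact (cls cw (p : Σ n, cw.cell n) ∩ C) :=
      (isCompact_cls cw _).inter_right isClosed_connectedComponent
    have hcov : cls cw (p : Σ n, cw.cell n) ∩ C ⊆ ⋃ y : X, Uc y := fun z _ =>
      mem_iUnion.mpr ⟨z, hmemc z⟩
    obtain ⟨t, ht⟩ := hcpt.elim_finite_subcover _ (fun y => hUco y) hcov
    exact ⟨t, ht⟩
  choose t ht using hsub
  haveI : Countable ↥D := hDc.to_subtype
  have : SecondCountableTopology ↥C := by
    refine secondCountable_subtype_of_cover (ι := Σ p : ↥D, ↥(t p))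
      (fun i => Uc (i.2 : X)) (fun i => hUco _) (fun i => ?_) ?_
    · obtain ⟨e⟩ := hec (i.2 : X)
      exact e.isEmbedding.secondCountableTopology
    · intro z hz
      obtain ⟨p, hpD, hzp⟩ := mem_iUnion₂.mp (hCU hz)
      obtain ⟨y, hyt, hzy⟩ := mem_iUnion₂.mp (ht ⟨p, hpD⟩ ⟨hzp, hz⟩)
      exact mem_iUnion.mpr ⟨⟨⟨p, hpD⟩, ⟨y, hyt⟩⟩, hzy⟩
  haveI := this
  infer_instance

lemma metrizableSpace_sigma {ι : Type v} {E : ι → Type w} [∀ i, TopologicalSpace (E i)]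
    [∀ i, TopologicalSpace.MetrizableSpace (E i)] :
    TopologicalSpace.MetrizableSpace (Σ i, E i) := by
  letI := fun i => TopologicalSpace.metrizableSpaceMetric (E i)
  letI : MetricSpace (Σ i, E i) := Metric.Sigma.metricSpace
  infer_instance

end CWAux

/-- Every manifold that is a CW complex is metrizable: a Hausdorff space with a
CW-complex structure on all of itself, in which every point has an open neighbourhood
homeomorphic to some `ℝⁿ`, is metrizable. -/
theorem metrizable_of_cwComplex_of_locally_euclidean (X : Type u) [TopologicalSpace X]
    [T2Space X] (cw : Topology.CWComplex' (Set.univ : Set X))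
    (hX : ∀ x : X, ∃ (n : ℕ) (U : Set X), IsOpen U ∧ x ∈ U ∧ Nonempty (U ≃ₜ (Fin n → ℝ))) :
    TopologicalSpace.MetrizableSpace X := by
  classical
  haveI := CWAux.weaklyLocallyCompact_of_charts hX
  let E : ConnectedComponents X → Type u := fun c => {z : X // ConnectedComponents.mk z = c}
  haveI : ∀ c, TopologicalSpace.MetrizableSpace (E c) := by
    intro c
    obtain ⟨x, rfl⟩ := ConnectedComponents.surjective_coe c
    have hset : (ConnectedComponents.mk ⁻¹' {ConnectedComponents.mk x} : Set X) =
        connectedComponent x := connectedComponents_preimage_singleton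
    have hmet := CWAux.metrizable_component cw hX x
    rw [← hset] at hmet
    exact hmet
  haveI : TopologicalSpace.MetrizableSpace (Σ c, E c) := CWAux.metrizableSpace_sigma
  have hfib_open : ∀ c : ConnectedComponents X,
      IsOpen {z : X | ConnectedComponents.mk z = c} := by
    intro c
    obtain ⟨x, rfl⟩ := ConnectedComponents.surjective_coe c
    have hset : {z : X | ConnectedComponents.mk z = ConnectedComponents.mk x} =
        connectedComponent x := connectedComponents_preimage_singleton
    rw [hset]
    exact CWAux.isOpen_connectedComponent_of_charts hX x
  let e : (Σ c, E c) ≃ X :=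
    Equiv.sigmaFiberEquiv (ConnectedComponents.mk : X → ConnectedComponents X)
  have hcont : Continuous e := continuous_sigma fun c => continuous_subtype_val
  have hopen : IsOpenMap e := by
    intro s hs
    rw [isOpen_sigma_iff] at hs
    have himg : e '' s =
        ⋃ c, Subtype.val '' ((Sigma.mk c : E c → Σ c, E c) ⁻¹' s) := by
      ext y
      constructor
      · rintro ⟨⟨c, w⟩, hw, rfl⟩
        exact Set.mem_iUnion.mpr ⟨c, w, hw, rfl⟩
      · rintro hy
        obtain ⟨c, w, hw, rfl⟩ := Set.mem_iUnion.mp hy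
        exact ⟨⟨c, w⟩, hw, rfl⟩
    rw [himg]
    exact isOpen_iUnion fun c => (hfib_open c).isOpenMap_subtype_val _ (hs c)
  let h : (Σ c, E c) ≃ₜ X := e.toHomeomorphOfContinuousOpen hcont hopen
  exact h.symm.isEmbedding.metrizableSpace
end

section
/- The Prüfer surface P is not homeomorphic to any CW complex; equivalently, P admits no CW-complex structure on all of P. -/
namespace Topology

open Metric Set

/-- A CW-complex structure on a set `C` in a topological space `X` (Mathlib's
`Topology.CWComplex`): `C` is the union of closed cells, which are images of
`closedBall 0 1 ⊆ Fin n → ℝ` under characteristic maps that are homeomorphisms onto the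
open cells; the open cells are pairwise disjoint; each cell frontier lies in finitely many
lower-dimensional closed cells; and `C` carries the weak topology determined by the
closed cells. -/
class CWComplexOld.{u} {X : Type u} [TopologicalSpace X] (C : Set X) where
  /-- The indexing type of the cells of dimension `n`. -/
  cell (n : ℕ) : Type u
  /-- The characteristic map of the `n`-cell given by the index `i`. -/
  map (n : ℕ) (i : cell n) : PartialEquiv (Fin n → ℝ) X
  /-- The source of every characteristic map of dimension `n` is `ball 0 1`. -/
  source_eq (n : ℕ) (i : cell n) : (map n i).source = ball 0 1
  /-- The characteristic maps are continuous on `closedBall 0 1`. -/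
  continuousOn (n : ℕ) (i : cell n) : ContinuousOn (map n i) (closedBall 0 1)
  /-- The inverse characteristic maps are continuous on the target. -/
  continuousOn_symm (n : ℕ) (i : cell n) : ContinuousOn (map n i).symm (map n i).target
  /-- The open cells are pairwise disjoint. -/
  pairwiseDisjoint' :
    (univ : Set (Σ n, cell n)).PairwiseDisjoint fun ni ↦ map ni.1 ni.2 '' ball 0 1
  /-- The boundary of a cell is contained in a finite union of closed cells of
  lower dimension. -/
  mapsto (n : ℕ) (i : cell n) : ∃ I : Π m, Finset (cell m),
    MapsTo (map n i) (sphere 0 1) (⋃ (m < n) (j ∈ I m), map m j '' closedBall 0 1)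
  /-- The weak topology: a set `A ⊆ C` is closed if its intersection with every closed
  cell is closed. -/
  closed' (A : Set X) (asubc : A ⊆ C) :
    (∀ n j, IsClosed (A ∩ map n j '' closedBall 0 1)) → IsClosed A
  /-- The union of all closed cells is `C`. -/
  union' : ⋃ (n : ℕ) (j : cell n), map n j '' closedBall 0 1 = C

end Topology

namespace CWAux
open Topology Metric Set

variable {Y : Type} [TopologicalSpace Y] [cw : Topology.CWComplexOld (Set.univ : Set Y)]

abbrev CellY (Y : Type) [TopologicalSpace Y] [Topology.CWComplexOld (Set.univ : Set Y)] : Type :=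
  Σ n, Topology.CWComplexOld.cell (Set.univ : Set Y) n

def oc (e : CellY Y) : Set Y := Topology.CWComplexOld.map e.1 e.2 '' ball 0 1
def cc (e : CellY Y) : Set Y := Topology.CWComplexOld.map e.1 e.2 '' closedBall 0 1

lemma oc_sub_cc (e : CellY Y) : oc e ⊆ cc e := image_mono ball_subset_closedBall

lemma cc_compact (e : CellY Y) : IsCompact (cc e) :=
  (isCompact_closedBall 0 1).image_of_continuousOn (Topology.CWComplexOld.continuousOn e.1 e.2)

lemma cc_closed [T2Space Y] (e : CellY Y) : IsClosed (cc e) := (cc_compact e).isClosed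

lemma oc_nonempty (e : CellY Y) : (oc e).Nonempty :=
  ⟨Topology.CWComplexOld.map e.1 e.2 0, mem_image_of_mem _ (mem_ball_self one_pos)⟩

lemma oc_disj {e f : CellY Y} {x : Y} (he : x ∈ oc e) (hf : x ∈ oc f) : e = f := by
  by_contra hne
  exact Set.disjoint_left.mp
    (Topology.CWComplexOld.pairwiseDisjoint' (C := (Set.univ : Set Y)) (mem_univ e) (mem_univ f) hne)
    he hf

lemma cc_decomp (e : CellY Y) : cc e = oc e ∪ Topology.CWComplexOld.map e.1 e.2 '' sphere 0 1 := by
  rw [oc, cc, ← ball_union_sphere, image_union]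

lemma cc_cover (x : Y) : ∃ e : CellY Y, x ∈ cc e := by
  have hx : x ∈ (Set.univ : Set Y) := mem_univ x
  rw [← Topology.CWComplexOld.union' (C := (Set.univ : Set Y))] at hx
  simp only [mem_iUnion] at hx
  obtain ⟨n, j, h⟩ := hx
  exact ⟨⟨n, j⟩, h⟩

lemma cc_sub_finite_ocs : ∀ n (i : Topology.CWComplexOld.cell (Set.univ : Set Y) n),
    ∃ F : Set (CellY Y), F.Finite ∧ cc (⟨n, i⟩ : CellY Y) ⊆ ⋃ e ∈ F, oc e := by
  intro n
  induction n using Nat.strong_induction_on with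
  | _ n ih =>
    intro i
    obtain ⟨I, hI⟩ := Topology.CWComplexOld.mapsto (C := (Set.univ : Set Y)) n i
    have ihall : ∀ m (j : Topology.CWComplexOld.cell (Set.univ : Set Y) m),
        ∃ F : Set (CellY Y), F.Finite ∧ (m < n → cc (⟨m, j⟩ : CellY Y) ⊆ ⋃ e ∈ F, oc e) := by
      intro m j
      by_cases hm : m < n
      · obtain ⟨F, h1, h2⟩ := ih m hm j
        exact ⟨F, h1, fun _ => h2⟩
      · exact ⟨∅, finite_empty, fun hm' => absurd hm' hm⟩
    choose Fc hFfin hFsub using ihall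
    refine ⟨insert ⟨n, i⟩ (⋃ m ∈ Set.Iio n, ⋃ j ∈ (I m : Set _), Fc m j), ?_, ?_⟩
    · exact Set.Finite.insert _ ((Set.finite_Iio n).biUnion fun m _ =>
        (I m).finite_toSet.biUnion fun j _ => hFfin m j)
    · intro x hx
      rw [cc_decomp] at hx
      rcases hx with hx | hx
      · exact mem_biUnion (mem_insert _ _) hx
      · have hx2 := hI.image_subset hx
        simp only [mem_iUnion] at hx2
        obtain ⟨m, hm, j, hj, hxm⟩ := hx2
        have hxm' : x ∈ cc (⟨m, j⟩ : CellY Y) := hxm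
        obtain ⟨e, he, hxe⟩ := mem_iUnion₂.mp (hFsub m j hm hxm')
        exact mem_biUnion (mem_insert_iff.mpr (Or.inr
          (mem_biUnion hm (mem_biUnion (Finset.mem_coe.mpr hj) he)))) hxe

lemma oc_cover (x : Y) : ∃ e : CellY Y, x ∈ oc e := by
  obtain ⟨e, he⟩ := cc_cover x
  obtain ⟨F, _, hsub⟩ := cc_sub_finite_ocs e.1 e.2
  have he' : x ∈ cc (⟨e.1, e.2⟩ : CellY Y) := he
  obtain ⟨f, _, hf⟩ := mem_iUnion₂.mp (hsub he')
  exact ⟨f, hf⟩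

lemma mem_oc_of_mem_cc
    (bd : ∀ n, Topology.CWComplexOld.cell (Set.univ : Set Y) n →
      ∀ m, Finset (Topology.CWComplexOld.cell (Set.univ : Set Y) m))
    (hbd : ∀ n i, MapsTo (Topology.CWComplexOld.map n i) (sphere 0 1)
      (⋃ (m < n) (j ∈ bd n i m), Topology.CWComplexOld.map m j '' closedBall 0 1))
    (E : Set (CellY Y))
    (hE : ∀ e ∈ E, ∀ m (j : Topology.CWComplexOld.cell (Set.univ : Set Y) m),
      m < e.1 → j ∈ bd e.1 e.2 m → (⟨m, j⟩ : CellY Y) ∈ E) :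
    ∀ n (i : Topology.CWComplexOld.cell (Set.univ : Set Y) n), (⟨n, i⟩ : CellY Y) ∈ E →
      ∀ x ∈ cc (⟨n, i⟩ : CellY Y), ∃ e ∈ E, x ∈ oc e := by
  intro n
  induction n using Nat.strong_induction_on with
  | _ n ih =>
    intro i hiE x hx
    rw [cc_decomp] at hx
    rcases hx with hx | hx
    · exact ⟨⟨n, i⟩, hiE, hx⟩
    · have hx2 := (hbd n i).image_subset hx
      simp only [mem_iUnion] at hx2
      obtain ⟨m, hm, j, hj, hxm⟩ := hx2
      exact ih m hm j (hE _ hiE m j hm hj) x hxm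

end CWAux

namespace CWAux
open Topology Metric Set

theorem cw_no_sep_uncountable_discrete (Y : Type) [TopologicalSpace Y] [T2Space Y]
    [cw : Topology.CWComplexOld (Set.univ : Set Y)]
    (T : Set Y) (hTc : T.Countable) (hTd : Dense T)
    (D : Set Y) (hDcl : IsClosed D)
    (hiso : ∀ d ∈ D, ∃ V, IsOpen V ∧ d ∈ V ∧ V ∩ D ⊆ {d})
    (hDnc : ¬ D.Countable) : False := by
  classical
  have hmt := fun n (i : Topology.CWComplexOld.cell (Set.univ : Set Y) n) =>
    Topology.CWComplexOld.mapsto (C := (Set.univ : Set Y)) n i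
  choose bd hbd using hmt
  -- countable set of cells meeting T
  set E0 : Set (CellY Y) := {e | (oc e ∩ T).Nonempty} with hE0
  have hE0c : E0.Countable := by
    haveI := hTc.to_subtype
    have hch : ∀ e : E0, ∃ t, t ∈ oc (e : CellY Y) ∧ t ∈ T := fun e => e.2
    choose t ht1 ht2 using hch
    have hinj : Function.Injective fun e : E0 => (⟨t e, ht2 e⟩ : T) := by
      intro e f hef
      have heq : t e = t f := congrArg Subtype.val hef
      exact Subtype.ext (oc_disj (ht1 e) (heq ▸ ht1 f))
    rw [← Set.countable_coe_iff]
    exact hinj.countable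
  -- closure under boundaries
  set g : Set (CellY Y) → Set (CellY Y) :=
    fun s => s ∪ {e : CellY Y | ∃ f ∈ s, e.1 < f.1 ∧ e.2 ∈ bd f.1 f.2 e.1} with hg
  have hgc : ∀ s : Set (CellY Y), s.Countable → (g s).Countable := by
    intro s hs
    apply hs.union
    have hsub : {e : CellY Y | ∃ f ∈ s, e.1 < f.1 ∧ e.2 ∈ bd f.1 f.2 e.1} ⊆
        ⋃ f ∈ s, ⋃ m ∈ Set.Iio f.1, (Sigma.mk m '' ((bd f.1 f.2 m : Set _))) := by
      rintro ⟨m, j⟩ ⟨f, hf, hm, hj⟩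
      exact mem_biUnion hf (mem_biUnion hm (mem_image_of_mem _ hj))
    exact Set.Countable.mono hsub (hs.biUnion fun f _ =>
      (Set.finite_Iio _).countable.biUnion fun m _ =>
        (((bd f.1 f.2 m).finite_toSet.image _)).countable)
  set E : Set (CellY Y) := ⋃ k, g^[k] E0 with hE
  have hEc : E.Countable := by
    apply countable_iUnion
    intro k
    induction k with
    | zero => simpa using hE0c
    | succ k ihk => rw [Function.iterate_succ_apply']; exact hgc _ ihk
  have hE0E : E0 ⊆ E := subset_iUnion_of_subset 0 (by simp)
  have hEcl : ∀ e ∈ E, ∀ m (j : Topology.CWComplexOld.cell (Set.univ : Set Y) m),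
      m < e.1 → j ∈ bd e.1 e.2 m → (⟨m, j⟩ : CellY Y) ∈ E := by
    intro e he m j hm hj
    obtain ⟨k, hk⟩ : ∃ k, e ∈ g^[k] E0 := by
      rw [hE] at he; exact mem_iUnion.mp he
    apply mem_iUnion.mpr ⟨k + 1, ?_⟩
    rw [Function.iterate_succ_apply']
    exact Or.inr ⟨e, hk, hm, hj⟩
  have hC := mem_oc_of_mem_cc bd hbd E hEcl
  -- the union of closed cells over E
  set U : Set Y := ⋃ e ∈ E, cc e with hU
  have hUclosed : IsClosed U := by
    apply Topology.CWComplexOld.closed' (C := (Set.univ : Set Y)) U (subset_univ U)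
    intro n j
    show IsClosed (U ∩ cc (⟨n, j⟩ : CellY Y))
    obtain ⟨F, hFfin, hFsub⟩ := cc_sub_finite_ocs n j
    have key : U ∩ cc (⟨n, j⟩ : CellY Y) = ⋃ e ∈ {e ∈ F | e ∈ E}, (cc e ∩ cc (⟨n, j⟩ : CellY Y)) := by
      apply Subset.antisymm
      · rintro x ⟨hxU, hxK⟩
        obtain ⟨f, hfE, hxf⟩ := mem_iUnion₂.mp hxU
        have hxf' : x ∈ cc (⟨f.1, f.2⟩ : CellY Y) := hxf
        obtain ⟨e, heE, hxe⟩ := hC f.1 f.2 hfE x hxf'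
        obtain ⟨p, hpF, hxp⟩ := mem_iUnion₂.mp (hFsub hxK)
        obtain rfl := oc_disj hxp hxe
        exact mem_biUnion ⟨hpF, heE⟩ ⟨oc_sub_cc _ hxp, hxK⟩
      · rintro x hx
        obtain ⟨e, heFE, hxe, hxK⟩ := mem_iUnion₂.mp hx
        exact ⟨mem_biUnion heFE.2 hxe, hxK⟩
    rw [key]
    exact Set.Finite.isClosed_biUnion (hFfin.sep _)
      fun e _ => (cc_closed e).inter (cc_closed _)
  have hTU : T ⊆ U := by
    intro t htT
    obtain ⟨e, he⟩ := oc_cover t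
    exact mem_biUnion (hE0E ⟨t, he, htT⟩) (oc_sub_cc _ he)
  have hUuniv : U = univ := by
    have hdU : Dense U := hTd.mono hTU
    rw [← hUclosed.closure_eq]
    exact hdU.closure_eq
  -- finiteness of D ∩ cc e
  have hfin : ∀ e : CellY Y, (D ∩ cc e).Finite := by
    intro e
    have hV : ∀ y : Y, ∃ V, IsOpen V ∧ y ∈ V ∧ (V ∩ D).Subsingleton := by
      intro y
      by_cases hy : y ∈ D
      · obtain ⟨V, h1, h2, h3⟩ := hiso y hy
        exact ⟨V, h1, h2, fun a ha b hb => (h3 ha).trans (h3 hb).symm⟩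
      · exact ⟨Dᶜ, hDcl.isOpen_compl, hy, fun a ha => absurd ha.2 ha.1⟩
    choose V hVo hVmem hVs using hV
    obtain ⟨s, hs⟩ := (cc_compact e).elim_finite_subcover V hVo
      (fun x _ => mem_iUnion.mpr ⟨x, hVmem x⟩)
    have hsub : D ∩ cc e ⊆ ⋃ y ∈ s, (V y ∩ D) := by
      rintro x ⟨hxD, hxc⟩
      obtain ⟨y, hy, hxy⟩ := mem_iUnion₂.mp (hs hxc)
      exact mem_biUnion hy ⟨hxy, hxD⟩
    exact Set.Finite.subset (s.finite_toSet.biUnion fun y _ => (hVs y).finite) hsub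
  apply hDnc
  have hDsub : D ⊆ ⋃ e ∈ E, (D ∩ cc e) := by
    intro d hd
    have hdU : d ∈ U := hUuniv ▸ mem_univ d
    obtain ⟨e, heE, hde⟩ := mem_iUnion₂.mp hdU
    exact mem_biUnion heE ⟨hd, hde⟩
  exact Set.Countable.mono hDsub (hEc.biUnion fun e _ => (hfin e).countable)

end CWAux


namespace PruferAux
open Set Metric

abbrev S : Type := Σ _ : ℝ, ℝ × ℝ
abbrev q : S → Prufer := Quotient.mk pruferSetoid
abbrev mk (a : ℝ) (z : ℝ × ℝ) : S := ⟨a, z⟩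

lemma isOpen_iff {U : Set Prufer} : IsOpen U ↔ IsOpen (q ⁻¹' U) := Iff.rfl
lemma isClosed_iff {U : Set Prufer} : IsClosed U ↔ IsClosed (q ⁻¹' U) := by
  rw [← isOpen_compl_iff, ← isOpen_compl_iff, isOpen_iff]; rfl
lemma q_eq {p r : S} : q p = q r ↔ (p = r ∨
    (p.2.2 = r.2.2 ∧ p.2.2 ≠ 0 ∧ p.1 + p.2.1 * p.2.2 = r.1 + r.2.1 * r.2.2)) :=
  Quotient.eq
lemma q_surj : Function.Surjective q := Quotient.mk_surjective

/-- saturation of an open set -/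
lemma sat_eq (U : Set S) :
    q ⁻¹' (q '' U) = U ∪ ⋃ (a : ℝ) (b : ℝ), mk b ''
      ({z : ℝ × ℝ | z.2 ≠ 0} ∩ (fun z : ℝ × ℝ => ((b - a)/z.2 + z.1, z.2)) ⁻¹'
        (mk a ⁻¹' U)) := by
  ext ⟨b, z⟩
  simp only [mem_preimage, mem_image, mem_union, mem_iUnion, mem_inter_iff, mem_setOf_eq]
  constructor
  · rintro ⟨u, huU, hqu⟩
    rcases q_eq.mp hqu with rfl | ⟨h1, h2, h3⟩
    · exact Or.inl huU
    · refine Or.inr ⟨u.1, b, z, ⟨?_, ?_⟩, rfl⟩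
      · rw [← h1] at *; exact h2
      · show (⟨u.1, ((b - u.1)/z.2 + z.1, z.2)⟩ : S) ∈ U
        have hz2 : z.2 ≠ 0 := h1 ▸ h2
        have hu2 : u.2 = ((b - u.1)/z.2 + z.1, z.2) := by
          have : u.2.1 = (b - u.1)/z.2 + z.1 := by
            field_simp
            rw [← h1] at h3 ⊢
            linarith [h3]
          rw [Prod.ext_iff]; exact ⟨this, h1⟩
        have : (⟨u.1, u.2⟩ : S) = ⟨u.1, ((b - u.1)/z.2 + z.1, z.2)⟩ := by rw [hu2]
        rwa [← this]
  · rintro (hU | ⟨a, b', z', ⟨hz2, hmem⟩, heq⟩)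
    · exact ⟨⟨b, z⟩, hU, rfl⟩
    · obtain ⟨rfl, hzz⟩ := Sigma.mk.inj_iff.mp heq
      obtain rfl := eq_of_heq hzz
      refine ⟨mk a ((b' - a)/z'.2 + z'.1, z'.2), hmem, q_eq.mpr (Or.inr ⟨rfl, hz2, ?_⟩)⟩
      show a + ((b' - a)/z'.2 + z'.1) * z'.2 = b' + z'.1 * z'.2
      field_simp
      ring

lemma sat_open {U : Set S} (hU : IsOpen U) : IsOpen (q ⁻¹' (q '' U)) := by
  rw [sat_eq]
  apply hU.union
  refine isOpen_iUnion fun a => isOpen_iUnion fun b => ?_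
  apply (Topology.IsOpenEmbedding.sigmaMk (σ := fun _ : ℝ => ℝ × ℝ)).isOpenMap
  apply ContinuousOn.isOpen_inter_preimage
  · apply ContinuousOn.prodMk
    · exact (continuousOn_const.div continuous_snd.continuousOn fun z hz => hz).add
        continuous_fst.continuousOn
    · exact continuous_snd.continuousOn
  · exact isOpen_ne.preimage continuous_snd
  · exact hU.preimage continuous_sigmaMk

lemma isOpenMap_q : IsOpenMap q := fun U hU => isOpen_iff.mpr (sat_open hU)

lemma abs_est {z1 z2 x y r : ℝ} (h1 : |z1 - x| < r) (h2 : |z2 - y| < r) (hr : r ≤ 1) :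
    |z1 * z2 - x * y| ≤ r * (|x| + |y| + 1) := by
  have hr0 : 0 ≤ r := le_trans (abs_nonneg _) h1.le
  have hz1 : |z1| ≤ |x| + 1 := by
    have h := abs_sub_abs_le_abs_sub z1 x
    linarith [h1.le]
  calc |z1 * z2 - x * y| = |z1 * (z2 - y) + (z1 - x) * y| := by ring_nf
    _ ≤ |z1 * (z2 - y)| + |(z1 - x) * y| := abs_add_le _ _
    _ = |z1| * |z2 - y| + |z1 - x| * |y| := by rw [abs_mul, abs_mul]
    _ ≤ (|x| + 1) * r + r * |y| :=
        add_le_add (mul_le_mul hz1 h2.le (abs_nonneg _) (by positivity))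
          (mul_le_mul_of_nonneg_right h1.le (abs_nonneg _))
    _ = r * (|x| + |y| + 1) := by ring

/-- key separation lemma -/
lemma key_sep {a x y b u v : ℝ} (h : ¬ (q ⟨a, (x, y)⟩ = q ⟨b, (u, v)⟩)) :
    ∃ r > 0, ∀ z w : ℝ × ℝ, |z.1 - x| < r → |z.2 - y| < r → |w.1 - u| < r → |w.2 - v| < r →
      q ⟨a, z⟩ ≠ q ⟨b, w⟩ := by
  have hsig : ∀ {c : ℝ} {z w : ℝ × ℝ}, (⟨c, z⟩ : S) = ⟨c, w⟩ → z = w := by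
    intro c z w hzw
    exact eq_of_heq (Sigma.mk.inj_iff.mp hzw).2
  by_cases hyv : y = v
  · by_cases hy0 : y ≠ 0
    · -- y = v ≠ 0 : value separation
      subst hyv
      have hd : a + x * y ≠ b + u * y := by
        intro hval
        exact h (q_eq.mpr (Or.inr ⟨rfl, hy0, hval⟩))
      set d := |a + x * y - (b + u * y)| with hdd
      have hd0 : 0 < d := abs_pos.mpr (sub_ne_zero.mpr hd)
      set M := |x| + |y| + |u| + |y| + 2 with hM
      have hM0 : (0:ℝ) < M := by positivity
      refine ⟨min 1 (d / (3 * M)), lt_min one_pos (by positivity), ?_⟩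
      rintro z w h1 h2 h3 h4 hqe
      have hr1 : min 1 (d / (3 * M)) ≤ 1 := min_le_left _ _
      have hr2 : min 1 (d / (3 * M)) ≤ d / (3 * M) := min_le_right _ _
      have e1 : |z.1 * z.2 - x * y| ≤ d / 3 := by
        calc |z.1 * z.2 - x * y| ≤ min 1 (d / (3 * M)) * (|x| + |y| + 1) :=
              abs_est h1 h2 hr1
          _ ≤ (d / (3 * M)) * M := by
              apply mul_le_mul hr2 (by rw [hM]; nlinarith [abs_nonneg u, abs_nonneg y]) (by positivity) (by positivity)
          _ = d / 3 := by field_simp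
      have e2 : |w.1 * w.2 - u * y| ≤ d / 3 := by
        calc |w.1 * w.2 - u * y| ≤ min 1 (d / (3 * M)) * (|u| + |y| + 1) :=
              abs_est h3 h4 hr1
          _ ≤ (d / (3 * M)) * M := by
              apply mul_le_mul hr2 (by rw [hM]; nlinarith [abs_nonneg x, abs_nonneg y]) (by positivity) (by positivity)
          _ = d / 3 := by field_simp
      have hval : a + z.1 * z.2 = b + w.1 * w.2 := by
        rcases q_eq.mp hqe with heq | ⟨_, _, h3'⟩
        · obtain ⟨rfl, hzz⟩ := Sigma.mk.inj_iff.mp heq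
          rw [eq_of_heq hzz]
        · exact h3'
      have : d ≤ |z.1 * z.2 - x * y| + |w.1 * w.2 - u * y| := by
        have : a + x * y - (b + u * y) = -(z.1 * z.2 - x * y) + (w.1 * w.2 - u * y) := by
          linarith [hval]
        rw [hdd, this]
        calc |(-(z.1 * z.2 - x * y) + (w.1 * w.2 - u * y))| ≤ |(-(z.1 * z.2 - x * y))| + |w.1 * w.2 - u * y| := abs_add_le _ _
          _ = |z.1 * z.2 - x * y| + |w.1 * w.2 - u * y| := by rw [abs_neg]
      linarith
    · -- y = v = 0
      push_neg at hy0
      subst hyv; subst hy0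
      by_cases hab : a = b
      · -- a = b, x ≠ u
        subst hab
        have hxu : x ≠ u := by
          intro hxu
          exact h (by rw [hxu])
        have h5' : 0 < |x - u| := abs_pos.mpr (sub_ne_zero.mpr hxu)
        refine ⟨|x - u| / 2, half_pos h5', ?_⟩
        rintro z w h1 h2 h3 h4 hqe
        have hzw : z.1 = w.1 := by
          rcases q_eq.mp hqe with heq | ⟨hz2, hz0, h3'⟩
          · rw [hsig heq]
          · simp only at hz2 h3' hz0
            rw [← hz2] at h3'
            exact mul_right_cancel₀ hz0 (by linarith [h3'] : z.1 * z.2 = w.1 * z.2)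
        have : |x - u| ≤ |z.1 - x| + |w.1 - u| := by
          have hx : x - u = -(z.1 - x) + (z.1 - u) := by ring
          calc |x - u| = |(-(z.1 - x) + (w.1 - u))| := by rw [hzw] at hx ⊢; rw [hx]
            _ ≤ |(-(z.1 - x))| + |w.1 - u| := abs_add_le _ _
            _ = |z.1 - x| + |w.1 - u| := by rw [abs_neg]
        have h5 : |x - u| > 0 := abs_pos.mpr (sub_ne_zero.mpr hxu)
        linarith
      · -- a ≠ b
        have hab0 : 0 < |a - b| := abs_pos.mpr (sub_ne_zero.mpr hab)
        refine ⟨min 1 (|a - b| / (|x - u| + 3)), lt_min one_pos (by positivity), ?_⟩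
        rintro z w h1 h2 h3 h4 hqe
        set r := min 1 (|a - b| / (|x - u| + 3)) with hrdef
        have hr1 : r ≤ 1 := min_le_left _ _
        have hr2 : r ≤ |a - b| / (|x - u| + 3) := min_le_right _ _
        rcases q_eq.mp hqe with heq | ⟨hz2, hz0, h3'⟩
        · exact hab (congrArg Sigma.fst heq)
        · simp only at hz2 hz0 h3'
          -- a - b = (w.1 - z.1) * z.2
          have hval : a - b = (w.1 - z.1) * z.2 := by
            rw [hz2] at h3' ⊢
            linarith [h3']
          have hb1 : |w.1 - z.1| ≤ |x - u| + 2 := by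
            have : w.1 - z.1 = -(z.1 - x) + (w.1 - u) + -(x - u) := by ring
            rw [this]
            calc |(-(z.1 - x) + (w.1 - u) + -(x - u))|
                ≤ |(-(z.1 - x) + (w.1 - u))| + |(-(x - u))| := abs_add_le _ _
              _ ≤ |(-(z.1 - x))| + |w.1 - u| + |(-(x-u))| := by gcongr; exact abs_add_le _ _
              _ = |z.1 - x| + |w.1 - u| + |x - u| := by rw [abs_neg, abs_neg]
              _ ≤ |x - u| + 2 := by
                  have := h1.le.trans hr1
                  have := h3.le.trans hr1
                  linarith
          have hb2 : |z.2| < r := by simpa using h2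
          have : |a - b| ≤ (|x - u| + 2) * |z.2| := by
            rw [hval, abs_mul]
            exact mul_le_mul_of_nonneg_right hb1 (abs_nonneg _)
          have hlt : |a - b| < (|x - u| + 3) * r := by
            have h6 : (|x - u| + 2) * |z.2| < (|x - u| + 3) * r := by
              apply mul_lt_mul' (by linarith) hb2 (abs_nonneg _) (by positivity)
            linarith
          have h7 : r * (|x - u| + 3) ≤ |a - b| := (le_div_iff₀ (by positivity)).mp hr2
          have h8 := mul_comm r (|x - u| + 3)
          linarith
  · -- y ≠ v
    have h5 : (0:ℝ) < |y - v| := abs_pos.mpr (sub_ne_zero.mpr hyv)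
    refine ⟨|y - v| / 2, half_pos h5, ?_⟩
    rintro z w h1 h2 h3 h4 hqe
    have hzw : z.2 = w.2 := by
      rcases q_eq.mp hqe with heq | ⟨hz2, _, _⟩
      · rw [eq_of_heq (Sigma.mk.inj_iff.mp heq).2]
      · exact hz2
    have : |y - v| ≤ |z.2 - y| + |w.2 - v| := by
      have hx : y - v = -(z.2 - y) + (w.2 - v) := by rw [hzw]; ring
      calc |y - v| = |(-(z.2 - y) + (w.2 - v))| := by rw [hx]
        _ ≤ |(-(z.2 - y))| + |w.2 - v| := abs_add_le _ _
        _ = |z.2 - y| + |w.2 - v| := by rw [abs_neg]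
    linarith

instance : T2Space Prufer := by
  constructor
  intro zz ww hzw
  obtain ⟨p, rfl⟩ := q_surj zz
  obtain ⟨r, rfl⟩ := q_surj ww
  obtain ⟨a, x, y⟩ := p
  obtain ⟨b, u, v⟩ := r
  obtain ⟨r, hr0, hsep⟩ := key_sep hzw
  refine ⟨q '' (mk a '' (ball x r ×ˢ ball y r)), q '' (mk b '' (ball u r ×ˢ ball v r)),
    isOpenMap_q _ ((Topology.IsOpenEmbedding.sigmaMk).isOpenMap _ (isOpen_ball.prod isOpen_ball)),
    isOpenMap_q _ ((Topology.IsOpenEmbedding.sigmaMk).isOpenMap _ (isOpen_ball.prod isOpen_ball)),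
    ⟨mk a (x, y), mem_image_of_mem _ ⟨mem_ball_self hr0, mem_ball_self hr0⟩, rfl⟩,
    ⟨mk b (u, v), mem_image_of_mem _ ⟨mem_ball_self hr0, mem_ball_self hr0⟩, rfl⟩, ?_⟩
  rw [Set.disjoint_left]
  rintro c ⟨s, ⟨z, ⟨hz1, hz2⟩, rfl⟩, rfl⟩ ⟨t, ⟨w, ⟨hw1, hw2⟩, rfl⟩, he⟩
  rw [mem_ball, Real.dist_eq] at hz1 hz2 hw1 hw2
  exact hsep z w hz1 hz2 hw1 hw2 he.symm

end PruferAux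

namespace PruferAux
open Set Metric

def ratPts : Set Prufer :=
  q '' (Set.range fun t : ℚ × ℚ × ℚ => mk (t.1 : ℝ) ((t.2.1 : ℝ), (t.2.2 : ℝ)))

lemma ratPts_countable : ratPts.Countable := (Set.countable_range _).image _

lemma ratPts_dense : Dense ratPts := by
  rw [dense_iff_inter_open]
  intro U hUo hUne
  obtain ⟨zz, hzz⟩ := hUne
  obtain ⟨⟨a, x, y⟩, rfl⟩ := q_surj zz
  have hVo : IsOpen (mk a ⁻¹' (q ⁻¹' U)) :=
    (isOpen_iff.mp hUo).preimage continuous_sigmaMk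
  have hmem : (x, y) ∈ mk a ⁻¹' (q ⁻¹' U) := hzz
  -- find a point (x₁,y₁) with y₁ ≠ 0 and a ball around it inside
  obtain ⟨x₁, y₁, ε₁, hy₁, hε₁, hε₁y, hball⟩ :
      ∃ x₁ y₁ ε₁, y₁ ≠ 0 ∧ 0 < ε₁ ∧ ε₁ ≤ |y₁| ∧ ball (x₁, y₁) ε₁ ⊆ mk a ⁻¹' (q ⁻¹' U) := by
    obtain ⟨ε, hε, hb⟩ := Metric.isOpen_iff.mp hVo _ hmem
    by_cases hy : y = 0
    · subst hy
      refine ⟨x, ε/2, ε/4, by positivity, by positivity, by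
        rw [abs_of_pos (by positivity)]; linarith, ?_⟩
      intro p hp
      apply hb
      rw [mem_ball] at hp ⊢
      calc dist p (x, 0) ≤ dist p (x, ε/2) + dist (x, ε/2) (x, (0:ℝ)) := dist_triangle _ _ _
        _ < ε/4 + ε/2 := by
            apply add_lt_add_of_lt_of_le hp
            rw [Prod.dist_eq]
            apply max_le
            · rw [dist_self]; positivity
            · rw [Real.dist_eq, sub_zero, abs_of_pos (half_pos hε)]
        _ ≤ ε := by linarith
    · refine ⟨x, y, min (ε/2) |y|, hy, lt_min (by positivity) (abs_pos.mpr hy),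
        min_le_right _ _, ?_⟩
      intro p hp
      exact hb (mem_ball.mpr (lt_of_lt_of_le (mem_ball.mp hp)
        ((min_le_left _ _).trans (by linarith))))
  -- choose rationals
  obtain ⟨y₀, hy₀⟩ := exists_rat_near y₁ (half_pos hε₁)
  have hy₀0 : (y₀ : ℝ) ≠ 0 := by
    intro h0
    rw [h0] at hy₀
    rw [sub_zero] at hy₀
    linarith [hε₁y, hy₀]
  obtain ⟨x₀, hx₀⟩ := exists_rat_near (x₁ + a / (y₀ : ℝ)) (half_pos hε₁)
  set s : S := mk a ((x₀ : ℝ) - a / (y₀ : ℝ), (y₀ : ℝ)) with hs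
  have hsU : q s ∈ U := by
    apply hball
    rw [mem_ball, Prod.dist_eq, Real.dist_eq, Real.dist_eq]
    apply max_lt
    · have : (x₀ : ℝ) - a / y₀ - x₁ = -((x₁ + a / y₀) - x₀) := by ring
      rw [this, abs_neg]
      linarith
    · rw [abs_sub_comm]; linarith
  have hrat : q s ∈ ratPts := by
    have : q s = q (mk ((0:ℚ):ℝ) ((x₀:ℝ), (y₀:ℝ))) := by
      apply q_eq.mpr
      apply Or.inr
      refine ⟨rfl, hy₀0, ?_⟩
      show a + ((x₀ : ℝ) - a / y₀) * y₀ = _ + (x₀ : ℝ) * y₀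
      field_simp
      push_cast; ring
    rw [this]
    exact mem_image_of_mem _ ⟨(0, x₀, y₀), rfl⟩
  exact ⟨q s, hsU, hrat⟩

/-- the uncountable closed discrete set -/
def pt (a : ℝ) : Prufer := q (mk a (0, 0))

lemma pt_inj : Function.Injective pt := by
  intro a b hab
  rcases q_eq.mp hab with heq | ⟨_, h0, _⟩
  · exact congrArg Sigma.fst heq
  · exact absurd rfl h0

lemma preim_pt {s : S} {b : ℝ} (h : q s = pt b) : s = mk b (0, 0) := by
  rcases q_eq.mp h with heq | ⟨h1, h2, _⟩
  · exact heq
  · exact absurd h1 h2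

lemma ptRange_closed : IsClosed (Set.range pt) := by
  rw [isClosed_iff]
  have : q ⁻¹' (Set.range pt) = {s : S | s.2 = (0, 0)} := by
    ext s
    constructor
    · rintro ⟨b, hb⟩
      rw [preim_pt hb.symm]
      rfl
    · intro hs
      refine ⟨s.1, ?_⟩
      show q _ = q _
      congr 1
      exact (Sigma.eta s).symm ▸ congrArg (mk s.1) hs.symm
  rw [this]
  rw [isClosed_sigma_iff]
  intro a
  have : Sigma.mk a ⁻¹' {s : S | s.2 = (0, 0)} = {((0:ℝ), (0:ℝ))} := by
    ext z; simp [Set.mem_preimage]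
  rw [this]
  exact isClosed_singleton

lemma ptRange_iso : ∀ d ∈ Set.range pt, ∃ V, IsOpen V ∧ d ∈ V ∧ V ∩ Set.range pt ⊆ {d} := by
  rintro d ⟨a, rfl⟩
  set Va : Set S := {s : S | s.1 = a ∨ s.2.2 ≠ 0} with hVa
  have hVaOpen : IsOpen Va := by
    rw [isOpen_sigma_iff]
    intro b
    by_cases hb : b = a
    · subst hb
      have : Sigma.mk b ⁻¹' Va = univ := by
        ext z; simp [hVa]
      rw [this]; exact isOpen_univ
    · have : Sigma.mk b ⁻¹' Va = {z : ℝ × ℝ | z.2 ≠ 0} := by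
        ext z; simp [hVa, hb]
      rw [this]
      exact isOpen_ne.preimage continuous_snd
  have hsat : q ⁻¹' (q '' Va) = Va := by
    apply Subset.antisymm
    · rintro s ⟨v, hv, hqv⟩
      rcases q_eq.mp hqv with rfl | ⟨h1, h2, _⟩
      · exact hv
      · exact Or.inr (h1 ▸ h2)
    · exact subset_preimage_image _ _
  refine ⟨q '' Va, (by rw [isOpen_iff, hsat]; exact hVaOpen : IsOpen (q '' Va)), ⟨mk a (0,0), Or.inl rfl, rfl⟩, ?_⟩
  rintro x ⟨⟨v, hvVa, rfl⟩, ⟨b, hb⟩⟩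
  have := preim_pt hb.symm
  subst this
  rcases hvVa with h | h
  · have hba : b = a := h
    simp only [Set.mem_singleton_iff]
    show pt b = pt a
    rw [hba]
  · exact absurd rfl h

lemma ptRange_uncountable : ¬ (Set.range pt).Countable := by
  intro h
  have h2 := h.preimage pt_inj
  have hsub : (Set.univ : Set ℝ) ⊆ pt ⁻¹' Set.range pt := fun a _ => Set.mem_range_self a
  exact Cardinal.not_countable_real (Set.Countable.mono hsub h2)

end PruferAux

/-- The Prüfer surface is not homeomorphic to any CW complex; equivalently, it admits
no CW-complex structure on all of itself. -/



theorem prufer_not_homeomorphic_cwComplex :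
    (∀ (Y : Type) [TopologicalSpace Y] [T2Space Y],
      Topology.CWComplexOld (Set.univ : Set Y) → IsEmpty (Prufer ≃ₜ Y)) ∧
    IsEmpty (Topology.CWComplexOld (Set.univ : Set Prufer)) := by
  have main : ∀ (Y : Type) [TopologicalSpace Y] [T2Space Y],
      Topology.CWComplexOld (Set.univ : Set Y) → IsEmpty (Prufer ≃ₜ Y) := by
    intro Y _ _ cw
    constructor
    intro h
    haveI := cw
    apply CWAux.cw_no_sep_uncountable_discrete Y (⇑h '' PruferAux.ratPts)
      (PruferAux.ratPts_countable.image _)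
      ?dense (⇑h '' Set.range PruferAux.pt) (h.isClosedMap _ PruferAux.ptRange_closed) ?iso ?unc
    case dense =>
      rw [dense_iff_closure_eq, ← Homeomorph.image_closure, PruferAux.ratPts_dense.closure_eq,
        Set.image_univ, Homeomorph.range_coe]
    case iso =>
      rintro d' ⟨d, hd, rfl⟩
      obtain ⟨V, hVo, hdV, hVsub⟩ := PruferAux.ptRange_iso d hd
      refine ⟨⇑h '' V, h.isOpenMap _ hVo, Set.mem_image_of_mem _ hdV, ?_⟩
      intro x hx
      obtain ⟨v, hvV, hev⟩ := hx.1
      obtain ⟨d₂, hd₂, hed⟩ := hx.2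
      have hd2v : d₂ = v := h.injective (hed.trans hev.symm)
      have hvd : v = d := hVsub ⟨hvV, hd2v ▸ hd₂⟩
      have : x = h d := by rw [← hev, hvd]
      exact Set.mem_singleton_iff.mpr this
    case unc =>
      intro hc
      apply PruferAux.ptRange_uncountable
      exact Set.Countable.mono (Set.subset_preimage_image _ _) (hc.preimage h.injective)
  refine ⟨main, ?_⟩
  constructor
  intro cw
  exact (main Prufer cw).false (Homeomorph.refl Prufer)
end

section
/- All higher homotopy groups of the Prüfer surface P vanish: for every natural number n ≥ 2 and every point p ∈ P, the n-th homotopy group πₙ(P, p) is trivial (a subsingleton). -/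
set_option linter.unusedSectionVars false
set_option linter.unusedVariables false
set_option maxHeartbeats 1000000

noncomputable section
open Set Topology

namespace PruferAsph

variable {ι : Type} (L : ι → ℝ) (C : ι → ι → Bool → Prop)

def sg (y : ℝ) : Bool := decide (0 < y)

variable (S : Setoid (Σ _ : ι, ℝ × ℝ))

def GlueShape : Prop :=
  ∀ p q : (Σ _ : ι, ℝ × ℝ), S.r p q ↔ p = q ∨
    (p.2.2 = q.2.2 ∧ p.2.2 ≠ 0 ∧ C p.1 q.1 (sg p.2.2) ∧
      L p.1 + p.2.1 * p.2.2 = L q.1 + q.2.1 * q.2.2)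

variable {L C S} (hS : GlueShape L C S)

def chart (i : ι) (q : ℝ × ℝ) : Quotient S := Quotient.mk S ⟨i, q⟩

lemma continuous_chart (i : ι) : Continuous (chart (S := S) i) :=
  continuous_quotient_mk'.comp continuous_sigmaMk

include hS

lemma chart_eq_iff {i j : ι} {q q' : ℝ × ℝ} :
    chart (S := S) i q = chart (S := S) j q' ↔
      (i = j ∧ q = q') ∨ (q.2 = q'.2 ∧ q.2 ≠ 0 ∧ C i j (sg q.2) ∧
        L i + q.1 * q.2 = L j + q'.1 * q'.2) := by
  unfold chart
  rw [Quotient.eq]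
  show S.r _ _ ↔ _
  rw [hS ⟨i, q⟩ ⟨j, q'⟩]
  constructor
  · rintro (h | h)
    · left; exact ⟨congrArg Sigma.fst h, by injection h with h1 h2⟩
    · right; exact h
  · rintro (⟨rfl, rfl⟩ | h)
    · left; rfl
    · right; exact h

lemma chart_injective (i : ι) : Function.Injective (chart (S := S) i) := by
  intro q q' h
  rcases (chart_eq_iff hS).1 h with ⟨_, rfl⟩ | ⟨h1, h2, _, h4⟩
  · rfl
  · have : q.1 = q'.1 := by
      rw [← h1] at h4
      have := add_left_cancel h4
      exact mul_right_cancel₀ h2 this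
    exact Prod.ext this h1

/-- the transition map -/
def trans (j i : ι) (q : ℝ × ℝ) : ℝ × ℝ := ((L j - L i) / q.2 + q.1, q.2)

omit hS in
lemma continuousOn_trans (j i : ι) :
    ContinuousOn (trans (L := L) j i) {q : ℝ × ℝ | q.2 ≠ 0} := by
  apply ContinuousOn.prodMk
  · exact (continuousOn_const.div continuous_snd.continuousOn fun q hq => hq).add
      continuous_fst.continuousOn
  · exact continuous_snd.continuousOn

lemma chart_trans {j i : ι} {q : ℝ × ℝ} (hy : q.2 ≠ 0) (hC : C j i (sg q.2)) :
    chart (S := S) j q = chart (S := S) i (trans (L := L) j i q) := by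
  rw [chart_eq_iff hS]
  right
  refine ⟨rfl, hy, hC, ?_⟩
  show L j + q.1 * q.2 = L i + ((L j - L i) / q.2 + q.1) * q.2
  field_simp
  ring

lemma isOpenMap_chart (i : ι) : IsOpenMap (chart (S := S) i) := by
  intro U hU
  rw [← (isQuotientMap_quotient_mk' (s := S)).isOpen_preimage]
  rw [isOpen_sigma_iff]
  intro j
  have : Sigma.mk j ⁻¹' (Quotient.mk' ⁻¹' (chart (S := S) i '' U)) =
      ({q : ℝ × ℝ | q.2 ≠ 0 ∧ C j i (sg q.2)} ∩ trans (L := L) j i ⁻¹' U) ∪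
        ⋃ (_ : j = i), U := by
    ext q
    simp only [mem_preimage, mem_image, mem_union, mem_iUnion, mem_inter_iff, mem_setOf_eq]
    constructor
    · rintro ⟨u, hu, hequ⟩
      have : chart (S := S) j q = chart (S := S) i u := by
        show Quotient.mk S ⟨j, q⟩ = _
        exact hequ.symm
      rcases (chart_eq_iff hS).1 this with ⟨rfl, rfl⟩ | ⟨h1, h2, h3, h4⟩
      · right; exact ⟨rfl, hu⟩
      · left
        refine ⟨⟨h2, h3⟩, ?_⟩
        have h5 : u.1 * q.2 = L j - L i + q.1 * q.2 := by rw [h1] at h4 ⊢; linarith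
        have hu1 : u.1 = (L j - L i) / q.2 + q.1 := by
          field_simp
          linarith [h5]
        have : trans (L := L) j i q = u := by
          unfold trans; exact Prod.ext hu1.symm h1
        rw [this]; exact hu
    · rintro (⟨⟨h1, h2⟩, hq⟩ | ⟨rfl, hq⟩)
      · exact ⟨trans (L := L) j i q, hq, ((chart_trans hS h1 h2).symm : _)⟩
      · exact ⟨q, hq, rfl⟩
  rw [show (Quotient.mk' : (Σ _ : ι, ℝ × ℝ) → Quotient S) = Quotient.mk S from rfl] at this ⊢
  rw [this]
  apply IsOpen.union
  · have hW : IsOpen {q : ℝ × ℝ | q.2 ≠ 0 ∧ C j i (sg q.2)} := by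
      rw [isOpen_iff_mem_nhds]
      rintro q ⟨h1, h2⟩
      rcases lt_or_gt_of_ne h1 with hneg | hpos
      · have hsg : sg q.2 = false := by simp [sg]; linarith
        rw [hsg] at h2
        have : {p : ℝ × ℝ | p.2 < 0} ∈ nhds q :=
          (isOpen_lt continuous_snd continuous_const).mem_nhds hneg
        filter_upwards [this] with p hp
        exact ⟨ne_of_lt hp, by simpa [sg, not_lt_of_gt hp, show ¬ (0:ℝ) < p.2 from not_lt_of_gt hp] using h2⟩
      · have hsg : sg q.2 = true := by simp [sg]; linarith
        rw [hsg] at h2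
        have : {p : ℝ × ℝ | 0 < p.2} ∈ nhds q :=
          (isOpen_lt continuous_const continuous_snd).mem_nhds hpos
        filter_upwards [this] with p hp
        exact ⟨(ne_of_lt hp).symm, by simpa [sg, hp] using h2⟩
    exact (((continuousOn_trans (L := L) j i)).mono (fun q hq => hq.1)).isOpen_inter_preimage hW hU
  · exact isOpen_iUnion fun h => hU

/-- chart image -/
def V (i : ι) : Set (Quotient S) := Set.range (chart (S := S) i)

lemma isOpen_V (i : ι) : IsOpen (V (S := S) i) := by
  rw [V, ← Set.image_univ]
  exact isOpenMap_chart hS i _ isOpen_univ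

omit hS in
lemma mem_V_self (i : ι) (q : ℝ × ℝ) : chart (S := S) i q ∈ V (S := S) i := ⟨q, rfl⟩

lemma mem_V_iff {i j : ι} {q : ℝ × ℝ} :
    chart (S := S) j q ∈ V (S := S) i ↔ j = i ∨ (q.2 ≠ 0 ∧ C j i (sg q.2)) := by
  constructor
  · rintro ⟨q', hq'⟩
    rcases (chart_eq_iff hS).1 hq'.symm with ⟨h, _⟩ | ⟨h1, h2, h3, _⟩
    · left; exact h
    · right; exact ⟨h2, h3⟩
  · rintro (rfl | ⟨h1, h2⟩)
    · exact mem_V_self _ q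
    · exact ⟨trans (L := L) j i q, (chart_trans hS h1 h2).symm⟩

omit hS in
lemma V_cover (e : Quotient S) : ∃ i, e ∈ V (S := S) i := by
  obtain ⟨⟨i, q⟩, rfl⟩ := Quotient.exists_rep e
  exact ⟨i, q, rfl⟩

/-- inverse of the chart map -/
def nu (i : ι) : Quotient S → ℝ × ℝ :=
  Quotient.lift (fun z : Σ _ : ι, ℝ × ℝ =>
    if z.2.2 = 0 then z.2 else ((L z.1 + z.2.1 * z.2.2 - L i) / z.2.2, z.2.2)) (by
    intro a b hab
    rcases (hS a b).1 hab with rfl | ⟨h1, h2, _, h4⟩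
    · rfl
    · rw [if_neg h2, if_neg (h1 ▸ h2), h4, h1])

lemma nu_chart (i : ι) (q : ℝ × ℝ) : nu (L := L) (S := S) hS i (chart (S := S) i q) = q := by
  show (if q.2 = 0 then q else ((L i + q.1 * q.2 - L i) / q.2, q.2)) = q
  split_ifs with h
  · rfl
  · rw [add_sub_cancel_left, mul_div_assoc, div_self h, mul_one]

lemma chart_nu {i : ι} {e : Quotient S} (he : e ∈ V (S := S) i) :
    chart (S := S) i (nu (L := L) (S := S) hS i e) = e := by
  obtain ⟨q, rfl⟩ := he
  rw [nu_chart]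

lemma continuousOn_nu (i : ι) : ContinuousOn (nu (L := L) (S := S) hS i) (V (S := S) i) := by
  rw [continuousOn_open_iff (isOpen_V hS i)]
  intro t ht
  have : V (S := S) i ∩ nu (L := L) (S := S) hS i ⁻¹' t = chart (S := S) i '' t := by
    ext e
    constructor
    · rintro ⟨he, het⟩
      exact ⟨_, het, chart_nu hS he⟩
    · rintro ⟨u, hu, rfl⟩
      exact ⟨mem_V_self i u, by rwa [mem_preimage, nu_chart]⟩
  rw [this]
  exact isOpenMap_chart hS i t ht

/-- the y-coordinate, a well-defined continuous function on the quotient. -/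
def yc : Quotient S → ℝ :=
  Quotient.lift (fun z : Σ _ : ι, ℝ × ℝ => z.2.2) (by
    intro a b hab
    rcases (hS a b).1 hab with rfl | ⟨h1, _, _⟩
    · rfl
    · exact h1)

lemma yc_chart (i : ι) (q : ℝ × ℝ) : yc (S := S) hS (chart (S := S) i q) = q.2 := rfl

lemma continuous_yc : Continuous (yc (S := S) hS) :=
  Continuous.quotient_lift (continuous_sigma fun _ => continuous_snd) _

lemma nu_snd (i : ι) (e : Quotient S) : (nu (L := L) (S := S) hS i e).2 = yc (S := S) hS e := by
  obtain ⟨⟨j, q⟩, rfl⟩ := Quotient.exists_rep e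
  show (if q.2 = 0 then q else _).2 = q.2
  split_ifs <;> rfl

/-! ### Words: the index set for the tree-of-planes covering space -/

omit hS

section Words
variable (r : ℝ)

/-- validity of a word: alternating signs, consecutive letters distinct (incl. the root `r`).
The head of the list is the most recently appended letter. -/
def VWord (l : List (Bool × ℝ)) : Prop :=
  (l.map Prod.fst).Chain' (· ≠ ·) ∧ ((l.map Prod.snd) ++ [r]).Chain' (· ≠ ·)

/-- words over root `r` -/
def Word := {l : List (Bool × ℝ) // VWord r l}

/-- the letter (line position) of a word -/
def letter : List (Bool × ℝ) → ℝ
  | [] => r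
  | p :: _ => p.2

/-- the base of a word in direction `s`: drop the head if it has sign `s` -/
def wbase : List (Bool × ℝ) → Bool → List (Bool × ℝ)
  | [], _ => []
  | (s', a) :: t, s => if s' = s then t else (s', a) :: t

variable {r}

@[simp] lemma letter_nil : letter r [] = r := rfl
@[simp] lemma letter_cons (p : Bool × ℝ) (t : List (Bool × ℝ)) :
    letter r (p :: t) = p.2 := rfl
@[simp] lemma wbase_nil (s : Bool) : wbase ([] : List (Bool × ℝ)) s = [] := rfl

lemma wbase_cons (s' : Bool) (a : ℝ) (t : List (Bool × ℝ)) (s : Bool) :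
    wbase ((s', a) :: t) s = if s' = s then t else (s', a) :: t := rfl

lemma vword_nil : VWord r [] := ⟨List.isChain_nil, List.isChain_singleton r⟩

lemma vword_tail {l : List (Bool × ℝ)} (h : VWord r l) : VWord r l.tail := by
  cases l with
  | nil => exact h
  | cons p t =>
    exact ⟨(List.isChain_cons.1 h.1).2, (List.isChain_cons.1 h.2).2⟩

lemma vword_cons {l : List (Bool × ℝ)} (h : VWord r l) (s : Bool) (a : ℝ)
    (hs : ∀ p ∈ l.head?, p.1 ≠ s) (ha : a ≠ letter r l) :
    VWord r ((s, a) :: l) := by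
  constructor
  · rw [List.map_cons, List.Chain', List.isChain_cons]
    refine ⟨?_, h.1⟩
    intro y hy
    cases l with
    | nil => simp at hy
    | cons p t =>
      simp only [List.map_cons, List.head?_cons, Option.mem_def, Option.some.injEq] at hy
      subst hy
      exact Ne.symm (hs p (by simp))
  · rw [List.map_cons, List.cons_append, List.Chain', List.isChain_cons]
    refine ⟨?_, h.2⟩
    intro y hy
    cases l with
    | nil =>
      simp only [List.map_nil, List.nil_append, List.head?_cons, Option.mem_def,
        Option.some.injEq] at hy
      subst hy
      exact ha
    | cons p t =>
      simp only [List.map_cons, List.cons_append, List.head?_cons, Option.mem_def,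
        Option.some.injEq] at hy
      subst hy
      exact ha

lemma wbase_head_sign {l : List (Bool × ℝ)} (h : VWord r l) (s : Bool) :
    ∀ p ∈ (wbase l s).head?, p.1 ≠ s := by
  cases l with
  | nil => intro p hp; simp at hp
  | cons q t =>
    obtain ⟨s', a⟩ := q
    intro p hp
    rw [wbase_cons] at hp
    split_ifs at hp with hss
    · subst hss
      have h2 := (List.isChain_cons.1 h.1).1
      intro hc
      have hmem : p.1 ∈ (t.map Prod.fst).head? := by
        rw [List.head?_map]
        exact Option.mem_map.2 ⟨p, hp, rfl⟩
      exact h2 p.1 hmem (by rw [hc])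
    · simp only [List.head?_cons, Option.mem_def, Option.some.injEq] at hp
      subst hp
      exact hss

lemma wbase_wbase {l : List (Bool × ℝ)} (h : VWord r l) (s : Bool) :
    wbase (wbase l s) s = wbase l s := by
  have hh := wbase_head_sign h s
  rcases hb : wbase l s with _ | ⟨⟨s', a⟩, t⟩
  · rfl
  · have hp : s' ≠ s := hh (s', a) (by rw [hb]; simp)
    rw [wbase_cons, if_neg hp]

lemma vword_wbase {l : List (Bool × ℝ)} (h : VWord r l) (s : Bool) : VWord r (wbase l s) := by
  cases l with
  | nil => exact h
  | cons q t =>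
    obtain ⟨s', a⟩ := q
    rw [wbase_cons]
    split_ifs with hss
    · exact vword_tail h
    · exact h

/-- words whose base in direction `s` equals `B` are `B` itself or one-letter extensions -/
lemma wbase_cases {l B : List (Bool × ℝ)} {s : Bool} (h : wbase l s = B) :
    l = B ∨ ∃ a, l = (s, a) :: B := by
  cases l with
  | nil => left; rw [← h]; rfl
  | cons q t =>
    obtain ⟨s', a⟩ := q
    rw [wbase_cons] at h
    split_ifs at h with hss
    · subst hss
      right; exact ⟨a, by rw [h]⟩
    · left; exact h

lemma letter_cons_ne {B : List (Bool × ℝ)} {s : Bool} {a : ℝ} (h : VWord r ((s, a) :: B)) :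
    a ≠ letter r B := by
  have h2 := (List.isChain_cons.1 h.2).1
  cases B with
  | nil => exact h2 r (by simp)
  | cons p t => exact h2 p.2 (by simp)

/-- distinct words with the same letter are never glued -/
lemma wbase_ne_of_same_letter {l l' : List (Bool × ℝ)} (hl : VWord r l) (hl' : VWord r l')
    (hne : l ≠ l') (hlet : letter r l = letter r l') (s : Bool) :
    wbase l s ≠ wbase l' s := by
  intro h
  obtain ⟨W, hW⟩ : ∃ W, wbase l' s = W := ⟨_, rfl⟩
  rw [hW] at h
  rcases wbase_cases h with h1 | ⟨a, h1⟩ <;> rcases wbase_cases hW with h2 | ⟨b, h2⟩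
  · exact hne (h1.trans h2.symm)
  · -- l = W, l' = (s,b) :: W
    rw [h1, h2] at hlet
    simp only [letter_cons] at hlet
    exact letter_cons_ne (h2 ▸ hl') hlet.symm
  · -- l = (s,a) :: W, l' = W
    rw [h1, h2] at hlet
    simp only [letter_cons] at hlet
    exact letter_cons_ne (h1 ▸ hl) hlet
  · rw [h1, h2] at hlet
    simp only [letter_cons] at hlet
    rw [h1, h2, hlet] at hne
    exact hne rfl

end Words

/-! ### The covering space over root `r` -/

section Cover
variable (r : ℝ)

def lett (w : Word r) : ℝ := letter r w.1

def cbase (w v : Word r) (s : Bool) : Prop := wbase w.1 s = wbase v.1 s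

def esetoid : Setoid (Σ _ : Word r, ℝ × ℝ) where
  r p q := p = q ∨ (p.2.2 = q.2.2 ∧ p.2.2 ≠ 0 ∧ cbase r p.1 q.1 (sg p.2.2) ∧
      lett r p.1 + p.2.1 * p.2.2 = lett r q.1 + q.2.1 * q.2.2)
  iseqv := by
    constructor
    · intro p; exact Or.inl rfl
    · rintro p q (rfl | ⟨h1, h2, h3, h4⟩)
      · exact Or.inl rfl
      · refine Or.inr ⟨h1.symm, h1 ▸ h2, ?_, h4.symm⟩
        show cbase r q.1 p.1 (sg q.2.2)
        rw [← h1]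
        exact (h3 : cbase r p.1 q.1 _).symm
    · rintro p q u (rfl | ⟨h1, h2, h3, h4⟩) h
      · exact h
      · rcases h with rfl | ⟨k1, k2, k3, k4⟩
        · exact Or.inr ⟨h1, h2, h3, h4⟩
        · refine Or.inr ⟨h1.trans k1, h2, ?_, h4.trans k4⟩
          refine (h3 : cbase r p.1 q.1 _).trans ?_
          show cbase r q.1 u.1 (sg p.2.2)
          rw [h1]
          exact k3

lemma hE : GlueShape (lett r) (cbase r) (esetoid r) := fun _ _ => Iff.rfl

lemma hP : GlueShape (id : ℝ → ℝ) (fun _ _ _ => True) pruferSetoid := by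
  intro p q
  show (p = q ∨ _) ↔ _
  constructor
  · rintro (rfl | ⟨h1, h2, h3⟩)
    · exact Or.inl rfl
    · exact Or.inr ⟨h1, h2, trivial, h3⟩
  · rintro (rfl | ⟨h1, h2, _, h3⟩)
    · exact Or.inl rfl
    · exact Or.inr ⟨h1, h2, h3⟩

/-- the covering projection -/
def rho : Quotient (esetoid r) → Quotient pruferSetoid :=
  Quotient.lift (fun z : Σ _ : Word r, ℝ × ℝ => chart (S := pruferSetoid) (lett r z.1) z.2) (by
    rintro a b (rfl | ⟨h1, h2, h3, h4⟩)
    · rfl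
    · exact (chart_eq_iff (hP)).2 (Or.inr ⟨h1, h2, trivial, h4⟩))

lemma continuous_rho : Continuous (rho r) := by
  apply Continuous.quotient_lift
  apply continuous_sigma
  intro w
  exact continuous_chart (lett r w)

@[simp] lemma rho_chart (w : Word r) (q : ℝ × ℝ) :
    rho r (chart (S := esetoid r) w q) = chart (S := pruferSetoid) (lett r w) q := rfl

lemma rho_injOn_V {w : Word r} {e e' : Quotient (esetoid r)}
    (he : e ∈ V (S := esetoid r) w) (he' : e' ∈ V (S := esetoid r) w)
    (h : rho r e = rho r e') : e = e' := by
  obtain ⟨q, rfl⟩ := he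
  obtain ⟨q', rfl⟩ := he'
  rw [rho_chart, rho_chart] at h
  rw [chart_injective hP _ h]

/-- each point of `E` above the chart `V a` of `P` lies on a sheet with letter `a` -/
lemma exists_sheet {e : Quotient (esetoid r)} {a : ℝ}
    (he : rho r e ∈ V (S := pruferSetoid) a) :
    ∃ w : Word r, lett r w = a ∧ e ∈ V (S := esetoid r) w := by
  obtain ⟨⟨v, q⟩, rfl⟩ := Quotient.exists_rep e
  have he' : chart (S := pruferSetoid) (lett r v) q ∈ V (S := pruferSetoid) a := he
  rcases (mem_V_iff (hP)).1 he' with hva | ⟨hy, -⟩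
  · exact ⟨v, hva, mem_V_self _ q⟩
  · set s := sg q.2 with hs
    by_cases hB : letter r (wbase v.1 s) = a
    · refine ⟨⟨wbase v.1 s, vword_wbase v.2 s⟩, hB, ?_⟩
      apply (mem_V_iff (hE r)).2
      right
      exact ⟨hy, (wbase_wbase v.2 s).symm⟩
    · refine ⟨⟨(s, a) :: wbase v.1 s,
        vword_cons (vword_wbase v.2 s) s a (wbase_head_sign v.2 s) (Ne.symm hB)⟩, rfl, ?_⟩
      apply (mem_V_iff (hE r)).2
      right
      refine ⟨hy, ?_⟩
      show wbase v.1 s = wbase ((s, a) :: wbase v.1 s) s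
      rw [wbase_cons, if_pos rfl]

/-- sheets with the same letter are disjoint -/
lemma V_disjoint {w v : Word r} (hne : w ≠ v) (hlet : lett r w = lett r v)
    {e : Quotient (esetoid r)} (he : e ∈ V (S := esetoid r) w)
    (he' : e ∈ V (S := esetoid r) v) : False := by
  obtain ⟨q, rfl⟩ := he
  rcases (mem_V_iff (hE r)).1 he' with h | ⟨hy, hcb⟩
  · exact hne h
  · exact wbase_ne_of_same_letter w.2 v.2 (fun h => hne (Subtype.ext h)) hlet _ hcb

/-! ### Uniqueness of lifts -/

/-- glue two continuous functions on closed sets -/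
lemma glue_closed {α β : Type*} [TopologicalSpace α] [TopologicalSpace β] {s t : Set α}
    [∀ z, Decidable (z ∈ s)]
    (hs : IsClosed s) (ht : IsClosed t) {g h : α → β} (hg : ContinuousOn g s)
    (hh : ContinuousOn h t) (he : Set.EqOn g h (s ∩ t)) :
    ContinuousOn (fun z => if z ∈ s then g z else h z) (s ∪ t) := by
  set F := fun z => if z ∈ s then g z else h z with hF
  have hFg : Set.EqOn F g s := fun z hz => if_pos hz
  have hFh : Set.EqOn F h t := by
    intro z hz
    by_cases hzs : z ∈ s
    · show (if z ∈ s then g z else h z) = h z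
      rw [if_pos hzs]
      exact he ⟨hzs, hz⟩
    · exact if_neg hzs
  intro z hz
  rcases hz with hzs | hzt
  · by_cases hzt : z ∈ t
    · have c1 : ContinuousWithinAt F s z := (hg z hzs).congr hFg (hFg hzs)
      have c2 : ContinuousWithinAt F t z := (hh z hzt).congr hFh (hFh hzt)
      exact c1.union c2
    · have c1 : ContinuousWithinAt F s z := (hg z hzs).congr hFg (hFg hzs)
      apply c1.mono_of_mem_nhdsWithin
      have : tᶜ ∈ nhdsWithin z (s ∪ t) :=
        mem_nhdsWithin_of_mem_nhds (ht.isOpen_compl.mem_nhds hzt)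
      filter_upwards [this, self_mem_nhdsWithin] with w hw1 hw2
      rcases hw2 with h | h
      · exact h
      · exact absurd h hw1
  · by_cases hzs : z ∈ s
    · have c1 : ContinuousWithinAt F s z := (hg z hzs).congr hFg (hFg hzs)
      have c2 : ContinuousWithinAt F t z := (hh z hzt).congr hFh (hFh hzt)
      exact c1.union c2
    · have c2 : ContinuousWithinAt F t z := (hh z hzt).congr hFh (hFh hzt)
      apply c2.mono_of_mem_nhdsWithin
      have : sᶜ ∈ nhdsWithin z (s ∪ t) :=
        mem_nhdsWithin_of_mem_nhds (hs.isOpen_compl.mem_nhds hzs)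
      filter_upwards [this, self_mem_nhdsWithin] with w hw1 hw2
      rcases hw2 with h | h
      · exact absurd h hw1
      · exact h

section Unique
variable {r : ℝ}

/-- two lifts that agree at a point of a preconnected set agree on it -/
lemma eq_of_lifts_agree {α : Type*} [TopologicalSpace α] {s : Set α} (hs : IsPreconnected s)
    {g₁ g₂ : α → Quotient (esetoid r)} (h₁ : ContinuousOn g₁ s) (h₂ : ContinuousOn g₂ s)
    (hr : ∀ z ∈ s, rho r (g₁ z) = rho r (g₂ z)) {z₀ : α} (hz₀ : z₀ ∈ s)
    (he : g₁ z₀ = g₂ z₀) : Set.EqOn g₁ g₂ s := by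
  -- local structure around each point of s
  have loc : ∀ z ∈ s, ∃ O, IsOpen O ∧ z ∈ O ∧
      ((g₁ z = g₂ z → ∀ z' ∈ O ∩ s, g₁ z' = g₂ z') ∧
       (g₁ z ≠ g₂ z → ∀ z' ∈ O ∩ s, g₁ z' ≠ g₂ z')) := by
    intro z hz
    obtain ⟨a, ha⟩ := V_cover (S := pruferSetoid) (rho r (g₁ z))
    by_cases hagree : g₁ z = g₂ z
    · obtain ⟨w, hwa, hw⟩ := exists_sheet (r := r) ha
      obtain ⟨O₁, hO₁, hzO₁, hsub₁⟩ := (continuousOn_iff.1 h₁) z hz _ (isOpen_V (hE r) w) hw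
      obtain ⟨O₂, hO₂, hzO₂, hsub₂⟩ := (continuousOn_iff.1 h₂) z hz _ (isOpen_V (hE r) w)
        (hagree ▸ hw)
      refine ⟨O₁ ∩ O₂, hO₁.inter hO₂, ⟨hzO₁, hzO₂⟩, fun _ z' hz' => ?_, fun hne => absurd hagree hne⟩
      apply rho_injOn_V (r := r) (hsub₁ ⟨hz'.1.1, hz'.2⟩) (hsub₂ ⟨hz'.1.2, hz'.2⟩)
      exact hr z' hz'.2
    · obtain ⟨w₁, hw₁a, hw₁⟩ := exists_sheet (r := r) ha
      obtain ⟨w₂, hw₂a, hw₂⟩ := exists_sheet (r := r) (a := a) (hr z hz ▸ ha)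
      have hwne : w₁ ≠ w₂ := by
        rintro rfl
        exact hagree (rho_injOn_V (r := r) hw₁ hw₂ (hr z hz))
      obtain ⟨O₁, hO₁, hzO₁, hsub₁⟩ := (continuousOn_iff.1 h₁) z hz _ (isOpen_V (hE r) w₁) hw₁
      obtain ⟨O₂, hO₂, hzO₂, hsub₂⟩ := (continuousOn_iff.1 h₂) z hz _ (isOpen_V (hE r) w₂) hw₂
      refine ⟨O₁ ∩ O₂, hO₁.inter hO₂, ⟨hzO₁, hzO₂⟩, fun hagree' => absurd hagree' hagree,
        fun _ z' hz' heq => ?_⟩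
      exact V_disjoint (r := r) hwne (hw₁a.trans hw₂a.symm) (hsub₁ ⟨hz'.1.1, hz'.2⟩)
        (heq ▸ hsub₂ ⟨hz'.1.2, hz'.2⟩)
  intro z₁ hz₁
  by_contra hne
  choose O hO hzO hloc using loc
  set u := ⋃ (z : α) (hz : z ∈ s) (_ : g₁ z = g₂ z), O z hz
  set v := ⋃ (z : α) (hz : z ∈ s) (_ : g₁ z ≠ g₂ z), O z hz
  have hu : IsOpen u := isOpen_iUnion fun z => isOpen_iUnion fun hz => isOpen_iUnion fun _ => hO z hz
  have hv : IsOpen v := isOpen_iUnion fun z => isOpen_iUnion fun hz => isOpen_iUnion fun _ => hO z hz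
  have hsuv : s ⊆ u ∪ v := by
    intro z hz
    by_cases hagree : g₁ z = g₂ z
    · exact Or.inl (Set.mem_iUnion.2 ⟨z, Set.mem_iUnion.2 ⟨hz, Set.mem_iUnion.2 ⟨hagree, hzO z hz⟩⟩⟩)
    · exact Or.inr (Set.mem_iUnion.2 ⟨z, Set.mem_iUnion.2 ⟨hz, Set.mem_iUnion.2 ⟨hagree, hzO z hz⟩⟩⟩)
  have hnu : (s ∩ u).Nonempty :=
    ⟨z₀, hz₀, Set.mem_iUnion.2 ⟨z₀, Set.mem_iUnion.2 ⟨hz₀, Set.mem_iUnion.2 ⟨he, hzO z₀ hz₀⟩⟩⟩⟩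
  have hnv : (s ∩ v).Nonempty :=
    ⟨z₁, hz₁, Set.mem_iUnion.2 ⟨z₁, Set.mem_iUnion.2 ⟨hz₁, Set.mem_iUnion.2 ⟨hne, hzO z₁ hz₁⟩⟩⟩⟩
  obtain ⟨z', hz's, hz'u, hz'v⟩ := hs u v hu hv hsuv hnu hnv
  obtain ⟨za, hza, hzagree, hz'O⟩ : ∃ za, ∃ hza : za ∈ s, g₁ za = g₂ za ∧ z' ∈ O za hza := by
    simpa [u, Set.mem_iUnion] using hz'u
  obtain ⟨zd, hzd, hzdis, hz'O'⟩ : ∃ zd, ∃ hzd : zd ∈ s, g₁ zd ≠ g₂ zd ∧ z' ∈ O zd hzd := by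
    simpa [v, Set.mem_iUnion] using hz'v
  exact ((hloc zd hzd).2 hzdis) z' ⟨hz'O', hz's⟩ (((hloc za hza).1 hzagree) z' ⟨hz'O, hz's⟩)

end Unique

end Cover

/-! ### Grid subdivision of the cube -/

section Grid
open scoped unitInterval

variable {n N : ℕ}

/-- closed subcube of the grid -/
def cell (N : ℕ) (c : Fin n → Fin N) : Set (Fin n → I) :=
  {z | ∀ i, (c i : ℝ) / N ≤ (z i : ℝ) ∧ (z i : ℝ) ≤ ((c i : ℝ) + 1) / N}

lemma isClosed_cell (c : Fin n → Fin N) : IsClosed (cell N c) := by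
  have : cell N c = ⋂ i, ((fun z : Fin n → I => (z i : ℝ)) ⁻¹'
      (Set.Icc ((c i : ℝ) / N) (((c i : ℝ) + 1) / N))) := by
    ext z
    simp [cell, Set.mem_iInter, Set.mem_Icc]
  rw [this]
  exact isClosed_iInter fun i =>
    IsClosed.preimage (continuous_subtype_val.comp (continuous_apply i)) isClosed_Icc

lemma corner_mem_I (hN : 0 < N) (k : Fin N) : (k : ℝ) / N ∈ I := by
  constructor
  · positivity
  · rw [div_le_one (by positivity)]
    exact_mod_cast (k.is_lt).le

/-- lower corner of a cell -/
def corner (hN : 0 < N) (c : Fin n → Fin N) : Fin n → I :=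
  fun i => ⟨(c i : ℝ) / N, corner_mem_I hN (c i)⟩

lemma corner_mem_cell (hN : 0 < N) (c : Fin n → Fin N) : corner hN c ∈ cell N c := by
  intro i
  refine ⟨le_refl _, ?_⟩
  show (c i : ℝ) / N ≤ ((c i : ℝ) + 1) / N
  have hNR : (0 : ℝ) < N := by exact_mod_cast hN
  gcongr
  linarith

/-- the level of a cell -/
def lvl (c : Fin n → Fin N) : ℕ := ∑ i, (c i : ℕ)

/-- total number of cells -/
def MM (n N : ℕ) : ℕ := Fintype.card (Fin n → Fin N)

/-- injective enumeration of cells -/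
def enc (c : Fin n → Fin N) : ℕ := ((Fintype.equivFin (Fin n → Fin N)) c : ℕ)

lemma enc_lt (c : Fin n → Fin N) : enc c < MM n N := Fin.is_lt _

lemma enc_inj {c c' : Fin n → Fin N} (h : enc c = enc c') : c = c' :=
  (Fintype.equivFin (Fin n → Fin N)).injective (Fin.ext h)

/-- processing order of cells -/
def key (c : Fin n → Fin N) : ℕ := MM n N * lvl c + enc c

lemma key_inj {c c' : Fin n → Fin N} (h : key c = key c') : c = c' := by
  have h1 : enc c = enc c' := by
    have e1 := congrArg (· % MM n N) h
    simpa [key, Nat.mul_add_mod, Nat.mod_eq_of_lt (enc_lt c), Nat.mod_eq_of_lt (enc_lt c')]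
      using e1
  exact enc_inj h1

lemma exists_lt_of_key_lt {c'' c : Fin n → Fin N} (h : key c'' < key c) :
    ∃ j, (c'' j : ℕ) < (c j : ℕ) := by
  by_contra hcon
  push_neg at hcon
  have hne : c ≠ c'' := fun he => absurd (he ▸ h) (lt_irrefl _)
  have hj : ∃ j, (c j : ℕ) < (c'' j : ℕ) := by
    by_contra hcon2
    push_neg at hcon2
    exact hne (funext fun j => Fin.ext (le_antisymm (hcon j) (hcon2 j)))
  obtain ⟨j, hjlt⟩ := hj
  have hlvl : lvl c < lvl c'' :=
    Finset.sum_lt_sum (fun i _ => hcon i) ⟨j, Finset.mem_univ j, hjlt⟩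
  have : key c < key c'' := by
    calc key c < MM n N * (lvl c + 1) := by
          rw [Nat.mul_succ]; exact Nat.add_lt_add_left (enc_lt c) _
      _ ≤ MM n N * lvl c'' := Nat.mul_le_mul_left _ hlvl
      _ ≤ key c'' := Nat.le_add_right _ _
  omega

/-- the domain after `m` processing steps -/
def Dom (N : ℕ) (m : ℕ) : Set (Fin n → I) :=
  ⋃ (c : Fin n → Fin N) (_ : key c < m), cell N c

lemma isClosed_Dom (m : ℕ) : IsClosed (Dom (n := n) N m) := by
  apply isClosed_iUnion_of_finite
  intro c
  apply isClosed_iUnion_of_finite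
  intro _
  exact isClosed_cell c

lemma Dom_zero : Dom (n := n) N 0 = ∅ := by
  simp [Dom]

lemma Dom_mono {m m' : ℕ} (h : m ≤ m') : Dom (n := n) N m ⊆ Dom N m' := by
  apply Set.iUnion_mono
  intro c
  exact Set.iUnion_subset fun hk => Set.subset_iUnion_of_subset (lt_of_lt_of_le hk h) le_rfl

lemma mem_Dom_of_cell {c : Fin n → Fin N} {z : Fin n → I} (hz : z ∈ cell N c) {m : ℕ}
    (h : key c < m) : z ∈ Dom N m :=
  Set.mem_iUnion.2 ⟨c, Set.mem_iUnion.2 ⟨h, hz⟩⟩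

lemma Dom_succ_of_eq {c : Fin n → Fin N} {m : ℕ} (hc : key c = m) :
    Dom N (m + 1) = Dom N m ∪ cell N c := by
  ext z
  simp only [Dom, Set.mem_iUnion, Set.mem_union]
  constructor
  · rintro ⟨c', hk, hz⟩
    rcases Nat.lt_succ_iff_lt_or_eq.1 hk with h | h
    · exact Or.inl ⟨c', h, hz⟩
    · have : c' = c := key_inj (h.trans hc.symm)
      exact Or.inr (this ▸ hz)
  · rintro (⟨c', hk, hz⟩ | hz)
    · exact ⟨c', Nat.lt_succ_of_lt hk, hz⟩
    · exact ⟨c, by omega, hz⟩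

lemma Dom_succ_of_ne {m : ℕ} (hc : ∀ c : Fin n → Fin N, key c ≠ m) :
    Dom (n := n) N (m + 1) = Dom (n := n) N m := by
  ext z
  simp only [Dom, Set.mem_iUnion]
  constructor
  · rintro ⟨c', hk, hz⟩
    exact ⟨c', by rcases Nat.lt_succ_iff_lt_or_eq.1 hk with h | h; exacts [h, absurd h (hc c')], hz⟩
  · rintro ⟨c', hk, hz⟩
    exact ⟨c', Nat.lt_succ_of_lt hk, hz⟩

lemma cells_cover (hN : 0 < N) (z : Fin n → I) : ∃ c : Fin n → Fin N, z ∈ cell N c := by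
  have hNR : (0 : ℝ) < N := by exact_mod_cast hN
  refine ⟨fun i => ⟨min ⌊(z i : ℝ) * N⌋₊ (N - 1), by omega⟩, fun i => ?_⟩
  have h0 : (0 : ℝ) ≤ (z i : ℝ) := (z i).2.1
  have h1 : (z i : ℝ) ≤ 1 := (z i).2.2
  constructor
  · show ((min ⌊(z i : ℝ) * N⌋₊ (N - 1) : ℕ) : ℝ) / N ≤ (z i : ℝ)
    rw [div_le_iff₀ hNR]
    calc ((min ⌊(z i : ℝ) * N⌋₊ (N - 1) : ℕ) : ℝ) ≤ (⌊(z i : ℝ) * N⌋₊ : ℝ) := by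
          exact_mod_cast Nat.cast_le.2 (min_le_left _ _)
      _ ≤ (z i : ℝ) * N := Nat.floor_le (by positivity)
  · show (z i : ℝ) ≤ (((min ⌊(z i : ℝ) * N⌋₊ (N - 1) : ℕ) : ℝ) + 1) / N
    rw [le_div_iff₀ hNR]
    rcases le_or_gt ⌊(z i : ℝ) * N⌋₊ (N - 1) with h | h
    · rw [min_eq_left h]
      have := Nat.lt_floor_add_one ((z i : ℝ) * N)
      linarith
    · rw [min_eq_right h.le]
      have : ((N : ℝ) - 1) + 1 = N := by ring
      calc (z i : ℝ) * N ≤ 1 * N := by gcongr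
        _ = ((N - 1 : ℕ) : ℝ) + 1 := by
            rw [one_mul]
            have : (1 : ℕ) ≤ N := hN
            push_cast [Nat.cast_sub this]
            ring

lemma key_bound (c : Fin n → Fin N) : key c < MM n N * (n * N + 1) := by
  have hlvl : lvl c ≤ n * N := by
    calc lvl c ≤ ∑ _i : Fin n, N := Finset.sum_le_sum fun i _ => (c i).is_lt.le
      _ = n * N := by simp [Finset.sum_const, mul_comm]
  calc key c < MM n N * lvl c + MM n N := Nat.add_lt_add_left (enc_lt c) _
    _ = MM n N * (lvl c + 1) := by ring
    _ ≤ MM n N * (n * N + 1) := Nat.mul_le_mul_left _ (by omega)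

/-- lower face of a cell -/
def lface (c : Fin n → Fin N) (j : Fin n) : Set (Fin n → I) :=
  {z ∈ cell N c | (z j : ℝ) = (c j : ℝ) / N}

lemma overlap_eq {c : Fin n → Fin N} {m : ℕ} (hkey : key c = m) (hN : 0 < N) :
    Dom N m ∩ cell N c = ⋃ (j : Fin n) (_ : (c j : ℕ) ≠ 0), lface c j := by
  have hNR : (0 : ℝ) < N := by exact_mod_cast hN
  ext z
  simp only [Set.mem_inter_iff, Set.mem_iUnion]
  constructor
  · rintro ⟨hzD, hzc⟩
    obtain ⟨c'', hz''⟩ := Set.mem_iUnion.1 hzD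
    obtain ⟨hk'', hz''⟩ := Set.mem_iUnion.1 hz''
    obtain ⟨j, hjlt⟩ := exists_lt_of_key_lt (hkey ▸ hk'')
    refine ⟨j, by omega, hzc, ?_⟩
    have hup : (z j : ℝ) ≤ ((c'' j : ℝ) + 1) / N := (hz'' j).2
    have hlo : (c j : ℝ) / N ≤ (z j : ℝ) := (hzc j).1
    have hcast : ((c'' j : ℝ) + 1) ≤ (c j : ℝ) := by exact_mod_cast hjlt
    have : ((c'' j : ℝ) + 1) / N ≤ (c j : ℝ) / N := by gcongr
    linarith
  · rintro ⟨j, hj, hzc, hzf⟩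
    refine ⟨?_, hzc⟩
    set c' : Fin n → Fin N := Function.update c j ⟨(c j : ℕ) - 1, by omega⟩ with hc'
    have hkey' : key c' < m := by
      rw [← hkey]
      have hlvl : lvl c' + 1 = lvl c := by
        have e1 : ∑ i ∈ Finset.univ.erase j, (c' i : ℕ) + (c' j : ℕ) = ∑ i, (c' i : ℕ) :=
          Finset.sum_erase_add _ _ (Finset.mem_univ j)
        have e2 : ∑ i ∈ Finset.univ.erase j, (c i : ℕ) + (c j : ℕ) = ∑ i, (c i : ℕ) :=
          Finset.sum_erase_add _ _ (Finset.mem_univ j)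
        have e3 : ∑ i ∈ Finset.univ.erase j, (c' i : ℕ) = ∑ i ∈ Finset.univ.erase j, (c i : ℕ) :=
          Finset.sum_congr rfl (fun i hi => by
            rw [hc', Function.update_of_ne (Finset.ne_of_mem_erase hi)])
        have e4 : (c' j : ℕ) = (c j : ℕ) - 1 := by rw [hc']; simp
        show (∑ i, (c' i : ℕ)) + 1 = ∑ i, (c i : ℕ)
        omega
      calc key c' < MM n N * (lvl c' + 1) := by
            rw [Nat.mul_succ]; exact Nat.add_lt_add_left (enc_lt c') _
        _ = MM n N * lvl c := by rw [hlvl]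
        _ ≤ key c := Nat.le_add_right _ _
    apply mem_Dom_of_cell _ hkey'
    intro i
    by_cases hij : i = j
    · subst hij
      rw [hc', Function.update_self]
      constructor
      · show (((c i : ℕ) - 1 : ℕ) : ℝ) / N ≤ (z i : ℝ)
        rw [hzf]
        gcongr
        exact_mod_cast Nat.sub_le _ _
      · show (z i : ℝ) ≤ ((((c i : ℕ) - 1 : ℕ) : ℝ) + 1) / N
        rw [hzf]
        gcongr
        have : ((c i : ℕ) - 1 : ℕ) + 1 = (c i : ℕ) := by omega
        exact_mod_cast this.ge
    · rw [hc', Function.update_of_ne hij]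
      exact hzc i

/-- straight segment in the cube -/
def seg (z z' : Fin n → I) (t : I) : Fin n → I := fun i =>
  ⟨(1 - (t : ℝ)) * (z i : ℝ) + (t : ℝ) * (z' i : ℝ), by
    constructor
    · have := (z i).2.1; have := (z' i).2.1; have := t.2.1; have := t.2.2; nlinarith
    · have := (z i).2.2; have := (z' i).2.2; have := t.2.1; have := t.2.2; nlinarith⟩

lemma continuous_seg (z z' : Fin n → I) : Continuous (seg z z') := by
  apply continuous_pi
  intro i
  apply Continuous.subtype_mk
  fun_prop

lemma seg_zero (z z' : Fin n → I) : seg z z' 0 = z := by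
  funext i
  apply Subtype.ext
  show (1 - (0 : ℝ)) * (z i : ℝ) + (0 : ℝ) * (z' i : ℝ) = (z i : ℝ)
  ring

lemma seg_one (z z' : Fin n → I) : seg z z' 1 = z' := by
  funext i
  apply Subtype.ext
  show (1 - (1 : ℝ)) * (z i : ℝ) + (1 : ℝ) * (z' i : ℝ) = (z' i : ℝ)
  ring

lemma preconnected_of_seg {S : Set (Fin n → I)}
    (h : ∀ z ∈ S, ∀ z' ∈ S, ∀ t, seg z z' t ∈ S) : IsPreconnected S := by
  rcases S.eq_empty_or_nonempty with rfl | ⟨x, hx⟩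
  · exact isPreconnected_empty
  have hpc : IsPathConnected S :=
    ⟨x, hx, fun {y} hy =>
      ⟨⟨⟨seg x y, continuous_seg x y⟩, seg_zero x y, seg_one x y⟩, fun t => h x hx y hy t⟩⟩
  exact hpc.isConnected.isPreconnected

lemma preconnected_overlap {c : Fin n → Fin N} {m : ℕ} (hkey : key c = m) (hN : 0 < N) :
    IsPreconnected (Dom N m ∩ cell N c) := by
  rw [overlap_eq hkey hN]
  have : (⋃ (j : Fin n) (_ : (c j : ℕ) ≠ 0), lface c j) =
      ⋃₀ ((fun j => lface (N := N) c j) '' {j | (c j : ℕ) ≠ 0}) := by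
    rw [Set.sUnion_image]
    ext z
    simp
  rw [this]
  apply isPreconnected_sUnion (corner hN c)
  · rintro S ⟨j, hj, rfl⟩
    exact ⟨corner_mem_cell hN c, rfl⟩
  · rintro S ⟨j, hj, rfl⟩
    apply preconnected_of_seg
    rintro z ⟨hz, hzf⟩ z' ⟨hz', hzf'⟩ t
    have ht0 := t.2.1
    have ht1 := t.2.2
    constructor
    · intro i
      obtain ⟨hl, hu⟩ := hz i
      obtain ⟨hl', hu'⟩ := hz' i
      constructor
      · show (c i : ℝ) / N ≤ (1 - (t : ℝ)) * (z i : ℝ) + (t : ℝ) * (z' i : ℝ)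
        nlinarith
      · show (1 - (t : ℝ)) * (z i : ℝ) + (t : ℝ) * (z' i : ℝ) ≤ ((c i : ℝ) + 1) / N
        nlinarith
    · show (1 - (t : ℝ)) * (z j : ℝ) + (t : ℝ) * (z' j : ℝ) = (c j : ℝ) / N
      rw [hzf, hzf']
      ring

end Grid

/-! ### Lifting maps from the cube -/

section CubeLift
open scoped unitInterval

theorem cube_lift {n : ℕ} (f : (Fin n → I) → Quotient pruferSetoid) (hf : Continuous f) :
    ∃ (r : ℝ) (g : (Fin n → I) → Quotient (esetoid r)), Continuous g ∧
      (∀ z, rho r (g z) = f z) ∧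
      f (fun _ => 0) ∈ V (S := pruferSetoid) r ∧
      g (fun _ => 0) = chart (S := esetoid r) ⟨[], vword_nil⟩ (nu hP r (f (fun _ => 0))) := by
  classical
  obtain ⟨δ, hδpos, hδ⟩ := lebesgue_number_lemma_of_metric (s := Set.univ) isCompact_univ
    (c := fun a : ℝ => f ⁻¹' (V (S := pruferSetoid) a))
    (fun a => (isOpen_V hP a).preimage hf)
    (fun z _ => by
      obtain ⟨a, ha⟩ := V_cover (S := pruferSetoid) (f z)
      exact Set.mem_iUnion.2 ⟨a, ha⟩)
  obtain ⟨N, hNgt⟩ := exists_nat_gt (1 / δ)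
  have hN : 0 < N := by
    have h1 : (0 : ℝ) < 1 / δ := by positivity
    have : (0 : ℝ) < N := lt_trans h1 hNgt
    exact_mod_cast this
  have hNR : (0 : ℝ) < N := by exact_mod_cast hN
  have hinv : 1 / (N : ℝ) < δ := by
    rw [div_lt_iff₀ hNR]
    rw [div_lt_iff₀ hδpos] at hNgt
    linarith [hNgt]
  -- cells are small
  have hsmall : ∀ c : Fin n → Fin N, ∀ z ∈ cell N c, z ∈ Metric.ball (corner hN c) δ := by
    intro c z hz
    rw [Metric.mem_ball]
    have hle : dist z (corner hN c) ≤ 1 / N := by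
      rw [dist_pi_le_iff (by positivity)]
      intro i
      rw [Subtype.dist_eq, Real.dist_eq]
      obtain ⟨hl, hu⟩ := hz i
      have hcr : ((corner hN c i : ℝ)) = (c i : ℝ) / N := rfl
      rw [hcr, abs_le]
      have hpos : (0 : ℝ) ≤ 1 / N := by positivity
      have hu' : (z i : ℝ) ≤ (c i : ℝ) / N + 1 / N := by
        rw [← add_div]
        exact hu
      constructor
      · linarith
      · linarith
    linarith
  -- the letters
  have hAex : ∀ c : Fin n → Fin N, ∃ a : ℝ, ∀ z ∈ cell N c, f z ∈ V (S := pruferSetoid) a := by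
    intro c
    obtain ⟨a, ha⟩ := hδ (corner hN c) trivial
    exact ⟨a, fun z hz => ha (hsmall c z hz)⟩
  choose A hA using hAex
  set c₀ : Fin n → Fin N := fun _ => ⟨0, hN⟩ with hc₀def
  set r : ℝ := A c₀ with hrdef
  set wroot : Word r := ⟨[], vword_nil⟩ with hwroot
  have hlvl0 : lvl c₀ = 0 := by simp [lvl, hc₀def]
  have hkey0lt : ∀ c : Fin n → Fin N, c ≠ c₀ → key c₀ < key c := by
    intro c hc
    have hlvl1 : 1 ≤ lvl c := by
      by_contra h
      push_neg at h
      have : lvl c = 0 := by omega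
      have hall : ∀ i, (c i : ℕ) = 0 := by
        intro i
        have := Finset.sum_eq_zero_iff.1 this
        exact this i (Finset.mem_univ i)
      exact hc (funext fun i => Fin.ext (by rw [hall i]))
    calc key c₀ = MM n N * lvl c₀ + enc c₀ := rfl
      _ = enc c₀ := by rw [hlvl0]; ring
      _ < MM n N := enc_lt c₀
      _ = MM n N * 1 := by ring
      _ ≤ MM n N * lvl c := Nat.mul_le_mul_left _ hlvl1
      _ ≤ key c := Nat.le_add_right _ _
  -- main induction
  have main : ∀ m, ∃ G : (Fin n → I) → Quotient (esetoid r),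
      ContinuousOn G (Dom N m) ∧ (∀ z ∈ Dom N m, rho r (G z) = f z) ∧
      (∀ z ∈ Dom N m ∩ cell N c₀,
        G z = chart (S := esetoid r) wroot (nu hP r (f z))) := by
    intro m
    induction m with
    | zero =>
      refine ⟨fun _ => chart (S := esetoid r) wroot (0, 0), ?_, ?_, ?_⟩
      · rw [Dom_zero]; exact continuousOn_empty _
      · rw [Dom_zero]; simp
      · rw [Dom_zero]; simp
    | succ m ih =>
      obtain ⟨G, hGc, hGl, hGr⟩ := ih
      by_cases hex : ∃ c : Fin n → Fin N, key c = m
      · obtain ⟨c, hc⟩ := hex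
        by_cases hc0 : c = c₀
        · subst hc0
          -- the first cell: Dom m is empty
          have hDome : Dom (n := n) N m = ∅ := by
            ext z
            simp only [Dom, Set.mem_iUnion, Set.mem_empty_iff_false, iff_false]
            rintro ⟨c'', hk'', hz''⟩
            by_cases h : c'' = c₀
            · subst h; omega
            · have := hkey0lt c'' h; omega
          refine ⟨fun z => chart (S := esetoid r) wroot (nu hP r (f z)), ?_, ?_, ?_⟩
          · rw [Dom_succ_of_eq hc, hDome, Set.empty_union]
            exact (continuous_chart wroot).comp_continuousOn
              ((continuousOn_nu hP r).comp hf.continuousOn (fun z hz => hA c₀ z hz))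
          · intro z hz
            rw [Dom_succ_of_eq hc, hDome, Set.empty_union] at hz
            show rho r (chart (S := esetoid r) wroot _) = f z
            rw [rho_chart]
            exact chart_nu hP (hA c₀ z hz)
          · intro z hz
            rfl
        · -- general cell, with nonempty overlap
          have hJ : ∃ j, (c j : ℕ) ≠ 0 := by
            by_contra h
            push_neg at h
            exact hc0 (funext fun i => Fin.ext (by rw [h i]))
          obtain ⟨j₀, hj₀⟩ := hJ
          have hcornerD : corner hN c ∈ Dom N m ∩ cell N c := by
            rw [overlap_eq hc hN]
            exact Set.mem_iUnion.2 ⟨j₀, Set.mem_iUnion.2 ⟨hj₀, corner_mem_cell hN c, rfl⟩⟩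
          have hrG : rho r (G (corner hN c)) = f (corner hN c) := hGl _ hcornerD.1
          have hfV : f (corner hN c) ∈ V (S := pruferSetoid) (A c) := hA c _ (corner_mem_cell hN c)
          obtain ⟨w, hwa, hw⟩ := exists_sheet (r := r) (show rho r (G (corner hN c)) ∈ _ by
            rw [hrG]; exact hfV)
          set Λ : (Fin n → I) → Quotient (esetoid r) :=
            fun z => chart (S := esetoid r) w (nu hP (A c) (f z)) with hΛdef
          have hΛc : ContinuousOn Λ (cell N c) :=
            (continuous_chart w).comp_continuousOn
              ((continuousOn_nu hP (A c)).comp hf.continuousOn (fun z hz => hA c z hz))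
          have hΛl : ∀ z ∈ cell N c, rho r (Λ z) = f z := by
            intro z hz
            show rho r (chart (S := esetoid r) w _) = f z
            rw [rho_chart, hwa]
            exact chart_nu hP (hA c z hz)
          have hΛG : Λ (corner hN c) = G (corner hN c) := by
            apply rho_injOn_V (r := r) (mem_V_self w _) hw
            rw [hΛl _ (corner_mem_cell hN c), hrG]
          have hagree : Set.EqOn G Λ (Dom N m ∩ cell N c) :=
            eq_of_lifts_agree (preconnected_overlap hc hN)
              (hGc.mono Set.inter_subset_left) (hΛc.mono Set.inter_subset_right)
              (fun z hz => by rw [hGl z hz.1, hΛl z hz.2]) hcornerD hΛG.symm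
          refine ⟨fun z => if z ∈ Dom N m then G z else Λ z, ?_, ?_, ?_⟩
          · rw [Dom_succ_of_eq hc]
            exact glue_closed (isClosed_Dom m) (isClosed_cell c) hGc hΛc hagree
          · intro z hz
            rw [Dom_succ_of_eq hc] at hz
            by_cases hzD : z ∈ Dom N m
            · simpa [hzD] using hGl z hzD
            · have hzc : z ∈ cell N c := hz.resolve_left hzD
              simpa [hzD] using hΛl z hzc
          · intro z hz
            obtain ⟨hz1, hz0⟩ := hz
            rw [Dom_succ_of_eq hc] at hz1
            have hzD : z ∈ Dom N m := by
              rcases hz1 with h | h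
              · exact h
              · exact mem_Dom_of_cell hz0 (by rw [← hc]; exact hkey0lt c hc0)
            simpa [hzD] using hGr z ⟨hzD, hz0⟩
      · push_neg at hex
        rw [Dom_succ_of_ne hex]
        exact ⟨G, hGc, hGl, hGr⟩
  obtain ⟨G, hGc, hGl, hGr⟩ := main (MM n N * (n * N + 1))
  have huniv : ∀ z : Fin n → I, z ∈ Dom (n := n) N (MM n N * (n * N + 1)) := by
    intro z
    obtain ⟨c, hc⟩ := cells_cover hN z
    exact mem_Dom_of_cell hc (key_bound c)
  have hz₀cell : (fun _ => (0 : I)) ∈ cell N c₀ := by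
    intro i
    constructor
    · show ((c₀ i : ℝ)) / N ≤ ((0 : I) : ℝ)
      have : ((c₀ i : ℕ) : ℝ) = 0 := by simp [hc₀def]
      rw [this]
      norm_num
    · show ((0 : I) : ℝ) ≤ ((c₀ i : ℝ) + 1) / N
      have : ((c₀ i : ℕ) : ℝ) = 0 := by simp [hc₀def]
      rw [this]
      positivity
  refine ⟨r, G, ?_, fun z => hGl z (huniv z), hA c₀ _ hz₀cell, hGr _ ⟨huniv _, hz₀cell⟩⟩
  rw [← continuousOn_univ]
  exact hGc.mono (fun z _ => huniv z)

end CubeLift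

/-! ### The boundary of the cube is connected for `n ≥ 2` -/

section Boundary
open scoped unitInterval Topology

lemma joinedIn_seg {n : ℕ} {S : Set (Fin n → I)} {z z' : Fin n → I}
    (h : ∀ t, seg z z' t ∈ S) : JoinedIn S z z' :=
  ⟨⟨⟨seg z z', continuous_seg z z'⟩, seg_zero z z', seg_one z z'⟩, h⟩

lemma zero_mem_boundary {n : ℕ} (hn : 1 ≤ n) : (fun _ => (0 : I)) ∈ Cube.boundary (Fin n) :=
  ⟨⟨0, by omega⟩, Or.inl rfl⟩

lemma boundary_preconnected {n : ℕ} (hn : 2 ≤ n) : IsPreconnected (Cube.boundary (Fin n)) := by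
  have hjoin : ∀ z ∈ Cube.boundary (Fin n),
      JoinedIn (Cube.boundary (Fin n)) z (fun _ => (0 : I)) := by
    rintro z ⟨i, hi⟩
    rcases hi with hi0 | hi1
    · apply joinedIn_seg
      intro t
      refine ⟨i, Or.inl ?_⟩
      apply Subtype.ext
      show (1 - (t : ℝ)) * (z i : ℝ) + (t : ℝ) * ((0 : I) : ℝ) = 0
      rw [hi0]
      show (1 - (t : ℝ)) * ((0 : I) : ℝ) + (t : ℝ) * ((0 : I) : ℝ) = 0
      norm_num
    · -- z i = 1 : go through an adjacent face
      obtain ⟨j, hij⟩ : ∃ j : Fin n, j ≠ i := by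
        haveI : Nontrivial (Fin n) := Fin.nontrivial_iff_two_le.2 hn
        exact exists_ne i
      set m : Fin n → I := Function.update z j 0 with hm
      have h1 : JoinedIn (Cube.boundary (Fin n)) z m := by
        apply joinedIn_seg
        intro t
        refine ⟨i, Or.inr ?_⟩
        apply Subtype.ext
        show (1 - (t : ℝ)) * (z i : ℝ) + (t : ℝ) * (m i : ℝ) = 1
        have hmi : m i = z i := Function.update_of_ne (Ne.symm hij) _ _
        rw [hmi, hi1]
        show (1 - (t : ℝ)) * ((1 : I) : ℝ) + (t : ℝ) * ((1 : I) : ℝ) = 1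
        norm_num
      have h2 : JoinedIn (Cube.boundary (Fin n)) m (fun _ => (0 : I)) := by
        apply joinedIn_seg
        intro t
        refine ⟨j, Or.inl ?_⟩
        apply Subtype.ext
        show (1 - (t : ℝ)) * (m j : ℝ) + (t : ℝ) * ((0 : I) : ℝ) = 0
        have hmj : m j = 0 := Function.update_self _ _ _
        rw [hmj]
        show (1 - (t : ℝ)) * ((0 : I) : ℝ) + (t : ℝ) * ((0 : I) : ℝ) = 0
        norm_num
      exact h1.trans h2
  have : IsPathConnected (Cube.boundary (Fin n)) := by
    refine ⟨(fun _ => (0 : I)), zero_mem_boundary (by omega), fun {y} hy => ?_⟩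
    exact (hjoin y hy).symm
  exact this.isConnected.isPreconnected

end Boundary

/-! ### A compact set in the cover lies in finitely many sheets -/

section FinSheets
open scoped unitInterval
variable {r : ℝ}

/-- the root word -/
def wroot (r : ℝ) : Word r := ⟨[], vword_nil⟩

lemma exists_finite_sheets {n : ℕ} {g : (Fin n → I) → Quotient (esetoid r)}
    (hg : Continuous g) :
    ∃ S : Set (Word r), S.Finite ∧ wroot r ∈ S ∧
      (∀ w ∈ S, w.1 ≠ [] → ⟨w.1.tail, vword_tail w.2⟩ ∈ S) ∧
      (∀ z, ∃ w ∈ S, g z ∈ V (S := esetoid r) w) := by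
  classical
  have hcomp : IsCompact (Set.range g) := isCompact_range hg
  obtain ⟨T, hT⟩ := hcomp.elim_finite_subcover (fun w : Word r => V (S := esetoid r) w)
    (fun w => isOpen_V (hE r) w)
    (by
      rintro e ⟨z, rfl⟩
      obtain ⟨w, hw⟩ := V_cover (S := esetoid r) (g z)
      exact Set.mem_iUnion.2 ⟨w, hw⟩)
  -- close under ancestors and add the root
  refine ⟨{wroot r} ∪ ⋃ w ∈ (T : Set (Word r)), {v : Word r | v.1 <:+ w.1}, ?_, ?_, ?_, ?_⟩
  · apply Set.Finite.union (Set.finite_singleton _)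
    apply Set.Finite.biUnion T.finite_toSet
    intro w _
    have : {v : Word r | v.1 <:+ w.1} ⊆ Subtype.val ⁻¹' {l | l ∈ w.1.tails} := by
      intro v hv
      simp only [Set.mem_preimage, Set.mem_setOf_eq, List.mem_tails]
      exact hv
    exact Set.Finite.subset (Set.Finite.preimage (Set.injOn_of_injective Subtype.val_injective)
      (w.1.tails.finite_toSet.subset (by intro l hl; exact hl))) this
  · exact Or.inl rfl
  · rintro w (hw | hw) hne
    · exact absurd (congrArg Subtype.val hw) hne
    · right
      obtain ⟨w', hw', hsuf⟩ := Set.mem_iUnion₂.1 hw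
      exact Set.mem_iUnion₂.2 ⟨w', hw', (List.tail_suffix w.1).trans hsuf⟩
  · intro z
    have : g z ∈ ⋃ w ∈ T, V (S := esetoid r) w := hT ⟨z, rfl⟩
    obtain ⟨w, hwT, hw⟩ := Set.mem_iUnion₂.1 this
    exact ⟨w, Or.inr (Set.mem_iUnion₂.2 ⟨w, hwT, List.suffix_refl _⟩), hw⟩

end FinSheets

/-! ### Peeling a leaf of the tree of sheets -/

section Peel
open scoped unitInterval
variable {r : ℝ}

def sigma (s : Bool) : ℝ := if s then 1 else -1

lemma sigma_sq (s : Bool) : sigma s * sigma s = 1 := by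
  cases s <;> norm_num [sigma]

lemma sigma_abs (s : Bool) {y : ℝ} (h : sg y = s) (hy : y ≠ 0) : sigma s * y = |y| := by
  cases s
  · have : ¬ (0 < y) := by simpa [sg] using h
    have hneg : y < 0 := lt_of_le_of_ne (not_lt.1 this) hy
    rw [sigma, if_neg (by simp), abs_of_neg hneg]
    ring
  · have hpos : 0 < y := by simpa [sg] using h
    rw [sigma, if_pos rfl, abs_of_pos hpos]
    ring

lemma sg_of_sigma_pos {s : Bool} {y : ℝ} (h : 0 < sigma s * y) : sg y = s := by
  cases s
  · have : sigma false = -1 := by norm_num [sigma]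
    rw [this] at h
    have : y < 0 := by linarith [h]
    simp [sg, not_lt_of_gt this, asymm this]
  · have : sigma true = 1 := by norm_num [sigma]
    rw [this] at h
    simp [sg]
    linarith

lemma sigma_pos_of_sg {s : Bool} {y : ℝ} (h : sg y = s) (hy : y ≠ 0) : 0 < sigma s * y := by
  rw [sigma_abs s h hy]
  exact abs_pos.2 hy

/-- the bump function -/
def eta (ε : ℝ) (x : ℝ) : ℝ := ε * Real.exp (-(x ^ 2))

lemma eta_pos {ε : ℝ} (hε : 0 < ε) (x : ℝ) : 0 < eta ε x :=
  mul_pos hε (Real.exp_pos _)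

lemma eta_le {ε : ℝ} (hε : 0 < ε) (x : ℝ) : eta ε x ≤ ε := by
  have : Real.exp (-(x ^ 2)) ≤ 1 := Real.exp_le_one_iff.2 (by nlinarith [sq_nonneg x])
  calc eta ε x = ε * Real.exp (-(x ^ 2)) := rfl
    _ ≤ ε * 1 := by nlinarith [Real.exp_pos (-(x ^ 2))]
    _ = ε := by ring

lemma eta_lt_of_sq {ε : ℝ} (hε : 0 < ε) {x : ℝ} (hx : x ≠ 0) :
    eta ε x ≤ ε / x ^ 2 := by
  have h1 : (x ^ 2 : ℝ) ≤ Real.exp (x ^ 2) := by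
    have := Real.add_one_le_exp (x ^ 2)
    linarith
  have h2 : Real.exp (-(x ^ 2)) = 1 / Real.exp (x ^ 2) := by
    rw [Real.exp_neg]
    ring
  have hx2 : (0 : ℝ) < x ^ 2 := by positivity
  rw [eta, h2, mul_one_div, div_le_div_iff₀ (Real.exp_pos _) hx2]
  nlinarith [h1, hε.le]

/-- the vertical push -/
def push (s : Bool) (ε : ℝ) (τ : ℝ) (q : ℝ × ℝ) : ℝ × ℝ :=
  (q.1, sigma s * ((1 - τ) * (sigma s * q.2) + τ * max (sigma s * q.2) (eta ε q.1)))

lemma push_zero (s : Bool) (ε : ℝ) (q : ℝ × ℝ) : push s ε 0 q = q := by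
  unfold push
  rw [Prod.ext_iff]
  refine ⟨rfl, ?_⟩
  show sigma s * ((1 - 0) * (sigma s * q.2) + 0 * max (sigma s * q.2) (eta ε q.1)) = q.2
  calc sigma s * ((1 - 0) * (sigma s * q.2) + 0 * max (sigma s * q.2) (eta ε q.1))
      = (sigma s * sigma s) * q.2 := by ring
    _ = q.2 := by rw [sigma_sq s, one_mul]

lemma push_fix {s : Bool} {ε : ℝ} {q : ℝ × ℝ} (h : eta ε q.1 ≤ sigma s * q.2) (τ : ℝ) :
    push s ε τ q = q := by
  unfold push
  rw [Prod.ext_iff]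
  refine ⟨rfl, ?_⟩
  show sigma s * ((1 - τ) * (sigma s * q.2) + τ * max (sigma s * q.2) (eta ε q.1)) = q.2
  rw [max_eq_left h]
  calc sigma s * ((1 - τ) * (sigma s * q.2) + τ * (sigma s * q.2))
      = (sigma s * sigma s) * q.2 := by ring
    _ = q.2 := by rw [sigma_sq s, one_mul]

lemma push_one_pos {s : Bool} {ε : ℝ} (hε : 0 < ε) (q : ℝ × ℝ) :
    eta ε q.1 ≤ sigma s * (push s ε 1 q).2 := by
  unfold push
  show eta ε q.1 ≤ sigma s * (sigma s * ((1 - 1) * _ + 1 * max (sigma s * q.2) (eta ε q.1)))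
  have h1 : sigma s * (sigma s * ((1 - 1) * (sigma s * q.2) + 1 * max (sigma s * q.2) (eta ε q.1)))
      = max (sigma s * q.2) (eta ε q.1) := by
    calc sigma s * (sigma s * ((1 - 1) * (sigma s * q.2) + 1 * max (sigma s * q.2) (eta ε q.1)))
        = (sigma s * sigma s) * max (sigma s * q.2) (eta ε q.1) := by ring
      _ = max (sigma s * q.2) (eta ε q.1) := by rw [sigma_sq s, one_mul]
  rw [h1]
  exact le_max_right _ _

lemma continuous_push (s : Bool) (ε : ℝ) :
    Continuous (fun p : (ℝ × ℝ) × ℝ => push s ε p.2 p.1) := by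
  unfold push eta
  fun_prop

lemma sigma_ne (s : Bool) : sigma s ≠ 0 := by cases s <;> norm_num [sigma]

lemma bool_eq_or (b c : Bool) : b = c ∨ b = !c := by cases b <;> cases c <;> simp

lemma wbase_of_head_ne {l : List (Bool × ℝ)} {s : Bool} (h : ∀ p ∈ l.head?, p.1 ≠ s) :
    wbase l s = l := by
  cases l with
  | nil => rfl
  | cons q u =>
    obtain ⟨s', a⟩ := q
    rw [wbase_cons, if_neg (h (s', a) (by simp))]

/-- The key peeling lemma: the outermost sheet `w` can be pushed into its parent. -/
lemma peel_step {S : Set (Word r)} {w : Word r} (hw : w ∈ S)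
    {s : Bool} {b : ℝ} {t : List (Bool × ℝ)} (hwl : w.1 = (s, b) :: t)
    (hmax : ∀ v ∈ S, v.1.length ≤ w.1.length)
    {ε : ℝ} (hε : 0 < ε) :
    ∃ Φ : Quotient (esetoid r) × ℝ → Quotient (esetoid r),
      ContinuousOn Φ ((⋃ v ∈ S, V (S := esetoid r) v) ×ˢ (Set.univ : Set ℝ)) ∧
      (∀ e, Φ (e, 0) = e) ∧
      (∀ e, e ∉ V (S := esetoid r) w → ∀ τ, Φ (e, τ) = e) ∧
      (∀ e, e ∈ V (S := esetoid r) w →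
        Φ (e, 1) ∈ V (S := esetoid r) ⟨w.1.tail, vword_tail w.2⟩) ∧
      (∀ e, e ∈ V (S := esetoid r) (wroot r) →
        (yc (hE r) e = 0 ∨ ε ≤ |yc (hE r) e|) → w ≠ wroot r → ∀ τ, Φ (e, τ) = e) := by
  classical
  set ES := ⋃ v ∈ S, V (S := esetoid r) v with hES
  set M₀ : Set (ℝ × ℝ) := {q | sigma s * q.2 < eta ε q.1} with hM₀
  set Mset : Set (Quotient (esetoid r)) :=
    {e | e ∈ V (S := esetoid r) w ∧ nu (hE r) w e ∈ M₀} with hMset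
  set Φ : Quotient (esetoid r) × ℝ → Quotient (esetoid r) :=
    fun p => if p.1 ∈ V (S := esetoid r) w then
      chart (S := esetoid r) w (push s ε p.2 (nu (hE r) w p.1)) else p.1 with hΦ
  -- identity off the moved set
  have hid : ∀ e ∉ Mset, ∀ τ, Φ (e, τ) = e := by
    intro e he τ
    by_cases hVw : e ∈ V (S := esetoid r) w
    · have hM : nu (hE r) w e ∉ M₀ := fun h => he ⟨hVw, h⟩
      have : eta ε (nu (hE r) w e).1 ≤ sigma s * (nu (hE r) w e).2 := not_lt.1 hM
      show (if _ then _ else _) = e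
      rw [if_pos hVw, push_fix this, chart_nu (hE r) hVw]
    · show (if _ then _ else _) = e
      rw [if_neg hVw]
  -- the closure claim
  have hnb : ∀ v ∈ S, v ≠ w → ¬ cbase r v w (!s) := by
    intro v hv hne hcb
    have h1 : wbase w.1 (!s) = w.1 := by
      rw [hwl, wbase_cons, if_neg (by simp)]
    have h2 : wbase v.1 (!s) = w.1 := by rw [(hcb : wbase v.1 (!s) = wbase w.1 (!s)), h1]
    rcases wbase_cases h2 with h3 | ⟨d, h3⟩
    · exact hne (Subtype.ext h3)
    · have := hmax v hv
      rw [h3] at this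
      simp at this
  have hclos : ∀ e ∈ ES, e ∉ V (S := esetoid r) w → e ∉ closure Mset := by
    intro e heES heVw
    obtain ⟨v, hvS, heVv⟩ := Set.mem_iUnion₂.1 heES
    have hvw : v ≠ w := fun h => heVw (h ▸ heVv)
    set q : ℝ × ℝ := nu (hE r) v e with hq
    have heq : chart (S := esetoid r) v q = e := chart_nu (hE r) heVv
    -- find an open set around e missing Mset
    have key : ∃ O, IsOpen O ∧ e ∈ O ∧ ∀ e' ∈ O, e' ∉ Mset := by
      by_cases hcb : cbase r v w s
      · -- v is in the s-star of w
        have hlet : lett r v ≠ lett r w := by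
          have hbw : wbase w.1 s = t := by rw [hwl, wbase_cons, if_pos rfl]
          have hbv : wbase v.1 s = t := by
            rw [(hcb : wbase v.1 s = wbase w.1 s), hbw]
          rcases wbase_cases hbv with h3 | ⟨d, h3⟩
          · show letter r v.1 ≠ letter r w.1
            rw [h3, hwl, letter_cons]
            exact fun hh => letter_cons_ne (hwl ▸ w.2) hh.symm
          · show letter r v.1 ≠ letter r w.1
            rw [h3, hwl, letter_cons, letter_cons]
            intro hh
            simp only at hh
            apply hvw
            apply Subtype.ext
            rw [h3, hwl, hh]
        by_cases hq2 : q.2 = 0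
        · -- e is a line point of sheet v : quantitative estimate
          set dd := |lett r v - lett r w| with hdd
          have hddpos : 0 < dd := abs_pos.2 (sub_ne_zero.2 hlet)
          set X := |q.1| + 2 with hX
          have hXpos : (0 : ℝ) < X := by positivity
          set δv := min (dd / (2 * X)) (dd ^ 2 / (4 * ε)) with hδv
          have hδvpos : 0 < δv := lt_min (by positivity) (by positivity)
          refine ⟨chart (S := esetoid r) v '' {p : ℝ × ℝ | |p.1 - q.1| < 1 ∧ |p.2| < δv},
            ?_, ?_, ?_⟩
          · exact isOpenMap_chart (hE r) v _
              ((isOpen_lt (continuous_fst.sub continuous_const).abs continuous_const).inter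
                (isOpen_lt continuous_snd.abs continuous_const))
          · exact ⟨q, ⟨by simp, by simpa [hq2] using hδvpos⟩, heq⟩
          · rintro e' ⟨p, ⟨hp1, hp2⟩, rfl⟩ ⟨hVw, hM⟩
            obtain ⟨m', hm'⟩ := hVw
            rw [← hm', nu_chart (hE r)] at hM
            rcases (chart_eq_iff (hE r)).1 hm' with ⟨h1, -⟩ | ⟨h1, h2, h3, h4⟩
            · exact hvw (h1.symm ▸ rfl)
            · -- glue at sign sg m'.2 = sg p.2
              have hsgp : sg p.2 = s := by
                rcases bool_eq_or (sg p.2) s with h | h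
                · exact h
                · exact absurd ((h1 ▸ h3 : cbase r w v (sg p.2)).symm)
                    (h ▸ hnb v hvS hvw)
              have hy : p.2 ≠ 0 := h1 ▸ h2
              set Y := |p.2| with hY
              have hYpos : 0 < Y := abs_pos.2 hy
              have hYδ : Y < δv := hp2
              set A := |m'.1| with hA
              -- u-matching
              have hu : m'.1 * p.2 = (lett r v - lett r w) + p.1 * p.2 := by
                rw [← h1] at h4 ⊢
                linarith
              have habs1 : |p.1| ≤ X - 1 := by
                have := abs_sub_abs_le_abs_sub p.1 q.1
                rw [hX]
                linarith [le_of_lt hp1]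
              have hf2 : dd ≤ A * Y + (X - 1) * Y := by
                have e1 : lett r v - lett r w = m'.1 * p.2 - p.1 * p.2 := by linarith
                calc dd = |m'.1 * p.2 - p.1 * p.2| := by rw [hdd, e1]
                  _ ≤ |m'.1 * p.2| + |p.1 * p.2| := abs_sub _ _
                  _ = A * Y + |p.1| * Y := by rw [abs_mul, abs_mul]
                  _ ≤ A * Y + (X - 1) * Y := by nlinarith [habs1, hYpos]
              have hf1 : 2 * X * Y < dd := by
                have : Y < dd / (2 * X) := lt_of_lt_of_le hYδ (min_le_left _ _)
                rw [lt_div_iff₀ (by positivity)] at this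
                linarith
              have hf4 : 4 * ε * Y < dd ^ 2 := by
                have : Y < dd ^ 2 / (4 * ε) := lt_of_lt_of_le hYδ (min_le_right _ _)
                rw [lt_div_iff₀ (by positivity)] at this
                linarith
              have h5 : dd / 2 < A * Y := by nlinarith [hf2, hf1, hXpos, hYpos]
              have hApos : 0 < A := by nlinarith [h5, hddpos, hYpos]
              have hAne : m'.1 ≠ 0 := fun h => by rw [hA, h, abs_zero] at hApos; linarith
              -- the moved-set condition gives a contradiction
              have hMlt : sigma s * m'.2 < eta ε m'.1 := hM
              have hsign : sigma s * m'.2 = Y := by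
                rw [h1, sigma_abs s hsgp hy]
              have hf3 : A * A * Y < ε := by
                have he1 : eta ε m'.1 ≤ ε / m'.1 ^ 2 := eta_lt_of_sq hε hAne
                have he2 : Y < ε / m'.1 ^ 2 := by rw [← hsign]; linarith
                rw [lt_div_iff₀ (by positivity)] at he2
                have : m'.1 ^ 2 = A * A := by rw [hA, ← abs_mul, sq, abs_mul_self m'.1, ← sq]
                  
                nlinarith [he2, this]
              have h6 : dd ^ 2 / 4 < (A * Y) ^ 2 := by
                have := pow_lt_pow_left₀ h5 (by positivity : (0:ℝ) ≤ dd / 2) (by norm_num : 2 ≠ 0)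
                calc dd ^ 2 / 4 = (dd / 2) ^ 2 := by ring
                  _ < (A * Y) ^ 2 := this
              have h7 : (A * Y) ^ 2 = (A * A * Y) * Y := by ring
              have h8 : (A * A * Y) * Y < ε * Y := mul_lt_mul_of_pos_right hf3 hYpos
              have h9 : ε * Y < dd ^ 2 / 4 := by linarith
              linarith [h6, h7 ▸ h8]
        · -- q.2 ≠ 0
          by_cases hsg : sg q.2 = s
          · -- impossible: e would be in V w
            exfalso
            apply heVw
            rw [← heq]
            exact (mem_V_iff (hE r)).2 (Or.inr ⟨hq2, by rw [hsg]; exact hcb⟩)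
          · -- the other side of sheet v
            refine ⟨chart (S := esetoid r) v '' {p : ℝ × ℝ | sigma s * p.2 < 0}, ?_, ?_, ?_⟩
            · exact isOpenMap_chart (hE r) v _
                (isOpen_lt (continuous_const.mul continuous_snd) continuous_const)
            · refine ⟨q, ?_, heq⟩
              show sigma s * q.2 < 0
              have h1 : sigma s * q.2 ≠ 0 := mul_ne_zero (sigma_ne s) hq2
              have h2 : ¬ (0 < sigma s * q.2) := fun h => hsg (sg_of_sigma_pos h)
              rcases lt_or_gt_of_ne h1 with h | h
              · exact h
              · exact absurd h h2
            · rintro e' ⟨p, hpneg, rfl⟩ ⟨hVw, -⟩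
              obtain ⟨m', hm'⟩ := hVw
              rcases (chart_eq_iff (hE r)).1 hm' with ⟨h1, -⟩ | ⟨h1, h2, h3, h4⟩
              · exact hvw (h1.symm ▸ rfl)
              · have hy : p.2 ≠ 0 := h1 ▸ h2
                have hsgp : sg p.2 = !s := by
                  rcases bool_eq_or (sg p.2) s with h | h
                  · exfalso
                    have := sigma_pos_of_sg h hy
                    exact absurd hpneg (not_lt.2 this.le)
                  · exact h
                exact hnb v hvS hvw (hsgp ▸ (h1 ▸ h3 : cbase r w v (sg p.2)).symm)
      · -- v shares nothing with w
        refine ⟨V (S := esetoid r) v, isOpen_V (hE r) v, heVv, ?_⟩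
        rintro e' he'v ⟨hVw, -⟩
        obtain ⟨p', hp'⟩ := he'v
        obtain ⟨m', hm'⟩ := hVw
        rw [← hp'] at hm'
        rcases (chart_eq_iff (hE r)).1 hm' with ⟨h1, -⟩ | ⟨h1, h2, h3, h4⟩
        · exact hvw (h1.symm ▸ rfl)
        · rcases bool_eq_or (sg m'.2) s with h | h
          · exact hcb (h ▸ h3.symm)
          · exact hnb v hvS hvw (h ▸ h3.symm)
    obtain ⟨O, hO, heO, hOM⟩ := key
    intro hecl
    obtain ⟨e', he'O, he'M⟩ := mem_closure_iff.1 hecl O hO heO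
    exact hOM e' he'O he'M
  refine ⟨Φ, ?_, ?_, ?_, ?_, ?_⟩
  · -- continuity
    intro p hp
    have hp1 : p.1 ∈ ES := hp.1
    by_cases hpw : p.1 ∈ V (S := esetoid r) w
    · have hopen : IsOpen ((V (S := esetoid r) w) ×ˢ (Set.univ : Set ℝ)) :=
        (isOpen_V (hE r) w).prod isOpen_univ
      have hinner : ContinuousOn
          (fun p : Quotient (esetoid r) × ℝ => (nu (hE r) w p.1, p.2))
          ((V (S := esetoid r) w) ×ˢ (Set.univ : Set ℝ)) := by
        apply ContinuousOn.prodMk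
        · exact (continuousOn_nu (hE r) w).comp continuousOn_fst (fun p hp => hp.1)
        · exact continuousOn_snd
      have houter : Continuous (fun p : (ℝ × ℝ) × ℝ =>
          chart (S := esetoid r) w (push s ε p.2 p.1)) :=
        (continuous_chart w).comp (continuous_push s ε)
      have hcf := houter.comp_continuousOn hinner
      have heqon : Set.EqOn Φ (fun p : Quotient (esetoid r) × ℝ =>
          chart (S := esetoid r) w (push s ε p.2 (nu (hE r) w p.1)))
          ((V (S := esetoid r) w) ×ˢ (Set.univ : Set ℝ)) := by
        intro p hp
        show (if _ then _ else _) = _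
        rw [if_pos hp.1]
      exact ((hcf.congr heqon).continuousAt (hopen.mem_nhds ⟨hpw, trivial⟩)).continuousWithinAt
    · have hpc := hclos p.1 hp1 hpw
      have hopen : IsOpen ((closure Mset)ᶜ ×ˢ (Set.univ : Set ℝ)) :=
        isClosed_closure.isOpen_compl.prod isOpen_univ
      have heqon : Set.EqOn Φ Prod.fst ((closure Mset)ᶜ ×ˢ (Set.univ : Set ℝ)) := by
        intro p hp
        exact hid p.1 (fun h => hp.1 (subset_closure h)) p.2
      exact ((continuous_fst.continuousOn.congr heqon).continuousAt
        (hopen.mem_nhds ⟨hpc, trivial⟩)).continuousWithinAt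
  · -- Φ at time 0
    intro e
    by_cases hVw : e ∈ V (S := esetoid r) w
    · show (if _ then _ else _) = e
      rw [if_pos hVw, push_zero, chart_nu (hE r) hVw]
    · show (if _ then _ else _) = e
      rw [if_neg hVw]
  · -- identity off V w
    intro e he τ
    show (if _ then _ else _) = e
    rw [if_neg he]
  · -- the end of the homotopy lands in the parent sheet
    intro e hVw
    show (if _ then _ else _) ∈ _
    rw [if_pos hVw]
    set q := nu (hE r) w e with hq
    have hp1 : eta ε q.1 ≤ sigma s * (push s ε 1 q).2 := push_one_pos hε q
    have hpos : 0 < sigma s * (push s ε 1 q).2 := lt_of_lt_of_le (eta_pos hε q.1) hp1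
    have hy' : (push s ε 1 q).2 ≠ 0 := by
      intro h
      rw [h, mul_zero] at hpos
      exact lt_irrefl _ hpos
    have hsg' : sg (push s ε 1 q).2 = s := sg_of_sigma_pos hpos
    apply (mem_V_iff (hE r)).2
    right
    refine ⟨hy', ?_⟩
    show wbase w.1 (sg (push s ε 1 q).2) = wbase (w.1.tail) (sg (push s ε 1 q).2)
    rw [hsg']
    have hbw : wbase w.1 s = t := by rw [hwl, wbase_cons, if_pos rfl]
    have htail : w.1.tail = t := by rw [hwl, List.tail_cons]
    have hhead : ∀ p ∈ t.head?, p.1 ≠ s := by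
      have hch := w.2.1
      rw [hwl, List.map_cons, List.Chain', List.isChain_cons] at hch
      intro p hp
      have : p.1 ∈ (t.map Prod.fst).head? := by
        rw [List.head?_map]
        exact Option.mem_map.2 ⟨p, hp, rfl⟩
      exact fun hc => (hch.1 p.1 this) hc.symm
    rw [hbw, htail, wbase_of_head_ne hhead]
  · -- the base point is fixed
    intro e heroot hsafe hnwr τ
    by_cases hVw : e ∈ V (S := esetoid r) w
    · set q₀ := nu (hE r) (wroot r) e with hq₀
      have heq : chart (S := esetoid r) (wroot r) q₀ = e := chart_nu (hE r) heroot
      have hyc : q₀.2 = yc (hE r) e := nu_snd (hE r) (wroot r) e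
      have hmem : chart (S := esetoid r) (wroot r) q₀ ∈ V (S := esetoid r) w := heq ▸ hVw
      rcases (mem_V_iff (hE r)).1 hmem with h1 | ⟨h1, h2⟩
      · exact absurd h1.symm hnwr
      · have hyne : yc (hE r) e ≠ 0 := by rw [← hyc]; exact h1
        have hεy : ε ≤ |yc (hE r) e| := hsafe.resolve_left hyne
        -- the gluing sign must be s
        have hsgs : sg q₀.2 = s := by
          have hcb : wbase ([] : List (Bool × ℝ)) (sg q₀.2) = wbase w.1 (sg q₀.2) := h2
          rw [hwl, wbase_cons] at hcb
          by_cases hss : s = sg q₀.2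
          · exact hss.symm
          · rw [if_neg hss] at hcb
            exact absurd hcb.symm (by simp)
        set q := nu (hE r) w e with hqw
        have hq2 : q.2 = yc (hE r) e := nu_snd (hE r) w e
        have hfix : eta ε q.1 ≤ sigma s * q.2 := by
          have : sigma s * q.2 = |q.2| := by
            apply sigma_abs s
            · rw [hq2, ← hyc]
              exact hsgs
            · rw [hq2]
              exact hyne
          rw [this, hq2]
          exact le_trans (eta_le hε q.1) hεy
        show (if _ then _ else _) = e
        rw [if_pos hVw, push_fix hfix, chart_nu (hE r) hVw]
    · show (if _ then _ else _) = e
      rw [if_neg hVw]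

instance (r : ℝ) : DecidableEq (Word r) :=
  inferInstanceAs (DecidableEq {l : List (Bool × ℝ) // VWord r l})

/-- the bundled covering projection -/
def rhoCM (r : ℝ) : C(Quotient (esetoid r), Quotient pruferSetoid) :=
  ⟨rho r, continuous_rho r⟩

lemma peel_all {n : ℕ} {ε : ℝ} (hε : 0 < ε) (e₀ : Quotient (esetoid r))
    (he₀root : e₀ ∈ V (S := esetoid r) (wroot r))
    (hsafe : yc (hE r) e₀ = 0 ∨ ε ≤ |yc (hE r) e₀|) :
    ∀ (k : ℕ) (S : Finset (Word r)), S.card ≤ k →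
      wroot r ∈ S → (∀ w ∈ S, w.1 ≠ [] → (⟨w.1.tail, vword_tail w.2⟩ : Word r) ∈ S) →
      ∀ g : C((Fin n → I), Quotient (esetoid r)),
        (∀ z, ∃ w ∈ S, g z ∈ V (S := esetoid r) w) →
        (∀ z ∈ Cube.boundary (Fin n), g z = e₀) →
        ∃ g' : C((Fin n → I), Quotient (esetoid r)),
          (∀ z, g' z ∈ V (S := esetoid r) (wroot r)) ∧
          (∀ z ∈ Cube.boundary (Fin n), g' z = e₀) ∧
          ContinuousMap.HomotopicRel ((rhoCM r).comp g) ((rhoCM r).comp g')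
            (Cube.boundary (Fin n)) := by
  intro k
  induction k with
  | zero =>
    intro S hcard hroot _ g _ _
    rw [Nat.le_zero, Finset.card_eq_zero] at hcard
    subst hcard
    exact absurd hroot (Finset.notMem_empty _)
  | succ k ih =>
    intro S hcard hroot htail g him hb
    by_cases hall : ∀ w ∈ S, w.1 = []
    · refine ⟨g, fun z => ?_, hb, ContinuousMap.HomotopicRel.refl _⟩
      obtain ⟨w, hwS, hgz⟩ := him z
      have : w = wroot r := Subtype.ext (hall w hwS)
      exact this ▸ hgz
    · push_neg at hall
      obtain ⟨w₀, hw₀S, hw₀ne⟩ := hall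
      obtain ⟨w, hwS, hwmax⟩ := S.exists_max_image (fun v : Word r => v.1.length) ⟨w₀, hw₀S⟩
      have hwne : w.1 ≠ [] := by
        intro h
        apply hw₀ne
        have h1 := hwmax w₀ hw₀S
        rw [h] at h1
        simp only [List.length_nil, Nat.le_zero] at h1
        exact List.length_eq_zero_iff.1 h1
      obtain ⟨⟨s, b⟩, t, hwl⟩ := List.exists_cons_of_ne_nil hwne
      have hmax' : ∀ v ∈ (S : Set (Word r)), v.1.length ≤ w.1.length := fun v hv =>
        hwmax v (Finset.mem_coe.1 hv)
      obtain ⟨Φ, hΦc, hΦ0, hΦoff, hΦ1, hΦe₀⟩ :=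
        peel_step (S := (S : Set (Word r))) (Finset.mem_coe.2 hwS) hwl hmax' hε
      have hnw_root : w ≠ wroot r := fun h => hwne (congrArg Subtype.val h)
      have hES : ∀ z, g z ∈ ⋃ v ∈ (S : Set (Word r)), V (S := esetoid r) v := by
        intro z
        obtain ⟨v, hvS, hv⟩ := him z
        exact Set.mem_iUnion₂.2 ⟨v, Finset.mem_coe.2 hvS, hv⟩
      -- the peeled map
      have hg₁cont : Continuous (fun z => Φ (g z, (1 : ℝ))) := by
        apply hΦc.comp_continuous
        · exact g.continuous.prodMk continuous_const
        · exact fun z => ⟨hES z, trivial⟩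
      set g₁ : C((Fin n → I), Quotient (esetoid r)) := ⟨fun z => Φ (g z, 1), hg₁cont⟩ with hg₁
      set tw : Word r := ⟨w.1.tail, vword_tail w.2⟩ with htw
      have htwS : tw ∈ S := htail w hwS hwne
      have htwne : tw ≠ w := by
        intro h
        have h1 := congrArg (fun v : Word r => v.1.length) h
        simp only [htw, hwl] at h1
        simp at h1
      have him₁ : ∀ z, ∃ v ∈ S.erase w, g₁ z ∈ V (S := esetoid r) v := by
        intro z
        by_cases hzw : g z ∈ V (S := esetoid r) w
        · exact ⟨tw, Finset.mem_erase.2 ⟨htwne, htwS⟩, hΦ1 (g z) hzw⟩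
        · obtain ⟨v, hvS, hv⟩ := him z
          have hvw : v ≠ w := fun h => hzw (h ▸ hv)
          refine ⟨v, Finset.mem_erase.2 ⟨hvw, hvS⟩, ?_⟩
          show Φ (g z, (1 : ℝ)) ∈ _
          rw [hΦoff (g z) hzw 1]
          exact hv
      have hb₁ : ∀ z ∈ Cube.boundary (Fin n), g₁ z = e₀ := by
        intro z hz
        show Φ (g z, (1 : ℝ)) = e₀
        rw [hb z hz]
        exact hΦe₀ e₀ he₀root hsafe hnw_root 1
      -- the homotopy from g to g₁
      have hKc : Continuous (fun p : I × (Fin n → I) => rho r (Φ (g p.2, ((p.1 : I) : ℝ)))) := by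
        apply (continuous_rho r).comp
        apply hΦc.comp_continuous
        · exact (g.continuous.comp continuous_snd).prodMk
            (continuous_subtype_val.comp continuous_fst)
        · exact fun p => ⟨hES p.2, trivial⟩
      have hom1 : ContinuousMap.HomotopicRel ((rhoCM r).comp g) ((rhoCM r).comp g₁)
          (Cube.boundary (Fin n)) := by
        refine ⟨{ toFun := fun p => rho r (Φ (g p.2, ((p.1 : I) : ℝ))),
                  continuous_toFun := hKc,
                  map_zero_left := ?_, map_one_left := ?_, prop' := ?_ }⟩
        · intro z
          show rho r (Φ (g z, ((0 : I) : ℝ))) = rho r (g z)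
          rw [show ((0 : I) : ℝ) = 0 from rfl, hΦ0 (g z)]
        · intro z
          rfl
        · intro τ z hz
          show rho r (Φ (g z, _)) = rho r (g z)
          rw [hb z hz, hΦe₀ e₀ he₀root hsafe hnw_root _]
      -- induction on the smaller set
      have hcard' : (S.erase w).card ≤ k := by
        rw [Finset.card_erase_of_mem hwS]
        omega
      have hroot' : wroot r ∈ S.erase w :=
        Finset.mem_erase.2 ⟨fun h => hnw_root h.symm, hroot⟩
      have htail' : ∀ v ∈ S.erase w, v.1 ≠ [] →
          (⟨v.1.tail, vword_tail v.2⟩ : Word r) ∈ S.erase w := by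
        intro v hv hvne
        obtain ⟨hvw, hvS⟩ := Finset.mem_erase.1 hv
        refine Finset.mem_erase.2 ⟨?_, htail v hvS hvne⟩
        intro h
        have h1 := congrArg (fun u : Word r => u.1.length) h
        simp only [] at h1
        have h2 : v.1.tail.length = v.1.length - 1 := List.length_tail
        have h3 : 1 ≤ v.1.length := by
          cases hv1 : v.1 with
          | nil => exact absurd hv1 hvne
          | cons a l => simp [hv1]
        have h4 := hwmax v hvS
        omega
      obtain ⟨g', him', hb', hom2⟩ := ih (S.erase w) hcard' hroot' htail' g₁ him₁ hb₁
      exact ⟨g', him', hb', hom1.trans hom2⟩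

/-- contract inside the root sheet -/
lemma contract_root {n : ℕ} (g' : C((Fin n → I), Quotient (esetoid r)))
    (him : ∀ z, g' z ∈ V (S := esetoid r) (wroot r)) (e₀ : Quotient (esetoid r))
    (hb : ∀ z ∈ Cube.boundary (Fin n), g' z = e₀) (he₀ : e₀ ∈ V (S := esetoid r) (wroot r)) :
    ContinuousMap.HomotopicRel ((rhoCM r).comp g')
      (ContinuousMap.const _ (rho r e₀)) (Cube.boundary (Fin n)) := by
  set q₀ := nu (hE r) (wroot r) e₀ with hq₀
  set lin : I × (Fin n → I) → ℝ × ℝ := fun p =>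
    ((1 - (p.1 : ℝ)) * (nu (hE r) (wroot r) (g' p.2)).1 + (p.1 : ℝ) * q₀.1,
     (1 - (p.1 : ℝ)) * (nu (hE r) (wroot r) (g' p.2)).2 + (p.1 : ℝ) * q₀.2) with hlin
  have hnu : Continuous (fun p : I × (Fin n → I) => nu (hE r) (wroot r) (g' p.2)) :=
    (continuousOn_nu (hE r) (wroot r)).comp_continuous
      (g'.continuous.comp continuous_snd) (fun p => him p.2)
  have hlincont : Continuous lin := by
    rw [hlin]
    fun_prop
  have hcont : Continuous (fun p : I × (Fin n → I) =>
      rho r (chart (S := esetoid r) (wroot r) (lin p))) :=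
    (continuous_rho r).comp ((continuous_chart (S := esetoid r) (wroot r)).comp hlincont)
  refine ⟨{ toFun := fun p => rho r (chart (S := esetoid r) (wroot r) (lin p)),
            continuous_toFun := hcont, map_zero_left := ?_, map_one_left := ?_,
            prop' := ?_ }⟩
  · intro z
    show rho r (chart (S := esetoid r) (wroot r) (lin (0, z))) = rho r (g' z)
    have : lin (0, z) = nu (hE r) (wroot r) (g' z) := by
      rw [hlin]
      show ((1 - ((0 : I) : ℝ)) * _ + ((0 : I) : ℝ) * _,
        (1 - ((0 : I) : ℝ)) * _ + ((0 : I) : ℝ) * _) = _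
      rw [show ((0 : I) : ℝ) = 0 from rfl]
      apply Prod.ext <;> (show _ = _; ring)
    rw [this, chart_nu (hE r) (him z)]
  · intro z
    show rho r (chart (S := esetoid r) (wroot r) (lin (1, z))) = rho r e₀
    have : lin (1, z) = q₀ := by
      rw [hlin]
      show ((1 - ((1 : I) : ℝ)) * _ + ((1 : I) : ℝ) * _,
        (1 - ((1 : I) : ℝ)) * _ + ((1 : I) : ℝ) * _) = _
      rw [show ((1 : I) : ℝ) = 1 from rfl]
      apply Prod.ext <;> (show _ = _; ring)
    rw [this, hq₀, chart_nu (hE r) he₀]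
  · intro τ z hz
    show rho r (chart (S := esetoid r) (wroot r) (lin (τ, z))) = rho r (g' z)
    have : lin (τ, z) = q₀ := by
      rw [hlin]
      show ((1 - (τ : ℝ)) * (nu (hE r) (wroot r) (g' z)).1 + (τ : ℝ) * q₀.1,
        (1 - (τ : ℝ)) * (nu (hE r) (wroot r) (g' z)).2 + (τ : ℝ) * q₀.2) = q₀
      rw [hb z hz, ← hq₀]
      apply Prod.ext <;> (show _ = _; ring)
    rw [this, hb z hz, hq₀, chart_nu (hE r) he₀]

end Peel

/-! ### Main theorem -/

section Main
open scoped unitInterval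

lemma main_null {n : ℕ} (hn : 2 ≤ n) (fc : C((Fin n → I), Quotient pruferSetoid))
    {p : Quotient pruferSetoid} (hfb : ∀ z ∈ Cube.boundary (Fin n), fc z = p) :
    ContinuousMap.HomotopicRel fc (ContinuousMap.const _ p) (Cube.boundary (Fin n)) := by
  classical
  obtain ⟨r, g, hgc, hlift, hfV, hg0⟩ := cube_lift fc fc.continuous
  set z₀ : Fin n → I := fun _ => 0 with hz₀
  have hz₀b : z₀ ∈ Cube.boundary (Fin n) := zero_mem_boundary (by omega)
  have hfz₀ : fc z₀ = p := hfb z₀ hz₀b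
  set e₀ := g z₀ with he₀
  have he₀root : e₀ ∈ V (S := esetoid r) (wroot r) := hg0 ▸ mem_V_self _ _
  have hrho_e₀ : rho r e₀ = p := by
    show rho r (g z₀) = p
    rw [hlift z₀, hfz₀]
  -- g is constant on the boundary
  have hb : ∀ z ∈ Cube.boundary (Fin n), g z = e₀ := by
    have hagree := eq_of_lifts_agree (r := r) (boundary_preconnected hn)
      (hgc.continuousOn) (continuousOn_const (c := e₀))
      (fun z hz => by rw [hlift z, hfb z hz, hrho_e₀]) hz₀b rfl
    exact fun z hz => hagree hz
  -- safety data
  set y₀ := yc (hE r) e₀ with hy₀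
  set ε := if y₀ = 0 then 1 else |y₀| with hεdef
  have hε : 0 < ε := by
    rw [hεdef]
    split_ifs with h
    · norm_num
    · exact abs_pos.2 h
  have hsafe : y₀ = 0 ∨ ε ≤ |y₀| := by
    by_cases h : y₀ = 0
    · exact Or.inl h
    · right
      rw [hεdef, if_neg h]
  -- finitely many sheets
  obtain ⟨S, hSfin, hSroot, hStail, hSim⟩ := exists_finite_sheets (g := g) hgc
  set gc : C((Fin n → I), Quotient (esetoid r)) := ⟨g, hgc⟩ with hgcdef
  obtain ⟨g', him', hb', hom1⟩ := peel_all hε e₀ he₀root hsafe hSfin.toFinset.card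
    hSfin.toFinset le_rfl (hSfin.mem_toFinset.2 hSroot)
    (fun w hw hne => hSfin.mem_toFinset.2 (hStail w (hSfin.mem_toFinset.1 hw) hne))
    gc
    (fun z => by
      obtain ⟨w, hwS, hw⟩ := hSim z
      exact ⟨w, hSfin.mem_toFinset.2 hwS, hw⟩)
    hb
  have hom2 := contract_root g' him' e₀ hb' he₀root
  have hgc_eq : (rhoCM r).comp gc = fc := ContinuousMap.ext hlift
  have htrans := hom1.trans hom2
  rw [hgc_eq, hrho_e₀] at htrans
  exact htrans

end Main

end PruferAsph

open scoped unitInterval in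
/-- All higher homotopy groups of the Prüfer surface vanish. -/
theorem prufer_higher_homotopy_trivial (n : ℕ) (hn : 2 ≤ n) (p : Prufer) :
    Subsingleton (HomotopyGroup (Fin n) Prufer p) := by
  constructor
  have key : ∀ f : GenLoop (Fin n) Prufer p, GenLoop.Homotopic f GenLoop.const := by
    intro f
    exact PruferAsph.main_null hn f.1 f.2
  intro a b
  refine Quotient.inductionOn₂ a b fun f h => Quotient.sound ?_
  exact (key f).trans (key h).symm
end
end
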